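/- arXiv:1811.04197 — 11 statements merged into one kernel-verified Lean document; each statement's English description precedes it below -/
import Mathlib

section
/- Consider the system of M+N equations f_j(PPP_j) = Σ_{n=1}^N a_{nj} g_n(P_n) for j = 1,…,M and g_i(P_i) = Σ_{m=1}^M b_{im} f_m(PPP_m) for i = 1,…,N, where f_1,…,f_M and g_1,…,g_N are bijective functions from the positive reals to the positive reals, and where the nonnegative weights have the compatible form a_{ij} = d_{ij} / (Σ_{n=1}^N c_{nj}) and b_{ij} = c_{ij} / (Σ_{m=1}^M d_{im}) for nonnegative arrays c, d satisfying d_{ij} > 0 ⟺ q_{ij} > 0 and c_{ij} > 0 ⟺ q_{ij} > 0. Then there exist strictly positive vectors PPP ∈ ℝ^M and P ∈ ℝ^N solving the system, with the solution vectors (f_1(PPP_1),…,f_M(PPP_M), g_1(P_1),…,g_N(P_N)) unique up to multiplication by a common positive scalar, if and only if the quantity matrix q is connected. -/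
open Finset

/-- A nonnegative stationary vector of a "irreducible" matrix is everywhere positive. -/
lemma stationary_pos {M : ℕ} (T : Matrix (Fin M) (Fin M) ℝ)
    (hT0 : ∀ j m, 0 ≤ T j m)
    (hirr : ∀ J : Finset (Fin M), J.Nonempty → J ≠ Finset.univ →
      ∃ j ∈ J, ∃ l ∉ J, 0 < T l j)
    (w : Fin M → ℝ) (hw0 : ∀ j, 0 ≤ w j) (hwne : w ≠ 0)
    (hst : T.mulVec w = w) : ∀ j, 0 < w j := by
  classical
  set J : Finset (Fin M) := Finset.univ.filter (fun j => 0 < w j) with hJ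
  have hmem : ∀ j, j ∈ J ↔ 0 < w j := by intro j; simp [hJ]
  have hJne : J.Nonempty := by
    obtain ⟨j, hj⟩ := Function.ne_iff.mp hwne
    exact ⟨j, (hmem j).mpr (lt_of_le_of_ne (hw0 j) (by simpa using (Ne.symm hj)))⟩
  by_contra h
  push_neg at h
  obtain ⟨l0, hl0⟩ := h
  have hJu : J ≠ Finset.univ := by
    intro hu
    exact absurd ((hmem l0).mp (hu ▸ Finset.mem_univ l0)) (not_lt.mpr hl0)
  obtain ⟨j, hjJ, l, hlJ, hTlj⟩ := hirr J hJne hJu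
  have hwl : w l = Matrix.mulVec T w l := by rw [hst]
  have hlt : 0 < w l := by
    rw [hwl, Matrix.mulVec, dotProduct]
    have h1 : T l j * w j ≤ ∑ m, T l m * w m :=
      Finset.single_le_sum (f := fun m => T l m * w m)
        (fun m _ => mul_nonneg (hT0 l m) (hw0 m)) (Finset.mem_univ j)
    have h2 : 0 < T l j * w j := mul_pos hTlj ((hmem j).mp hjJ)
    linarith
  exact hlJ ((hmem l).mpr hlt)

/-- Existence and uniqueness of a positive stationary vector for an irreducible
column-stochastic matrix. -/
lemma stochastic_pf {M : ℕ} (hM : 0 < M) (T : Matrix (Fin M) (Fin M) ℝ)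
    (hT0 : ∀ j m, 0 ≤ T j m)
    (hcol : ∀ m, ∑ j, T j m = 1)
    (hirr : ∀ J : Finset (Fin M), J.Nonempty → J ≠ Finset.univ →
      ∃ j ∈ J, ∃ l ∉ J, 0 < T l j) :
    (∃ u : Fin M → ℝ, (∀ j, 0 < u j) ∧ T.mulVec u = u) ∧
      (∀ u u' : Fin M → ℝ, (∀ j, 0 < u j) → (∀ j, 0 < u' j) →
        T.mulVec u = u → T.mulVec u' = u' →
        ∃ γ : ℝ, 0 < γ ∧ ∀ j, u' j = γ * u j) := by
  classical
  haveI : NeZero M := ⟨hM.ne'⟩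
  constructor
  · -- existence
    -- step 1: det (T - 1) = 0 via transpose having the all-ones kernel vector
    have hdet : (T - 1).det = 0 := by
      rw [← Matrix.det_transpose]
      rw [← Matrix.exists_mulVec_eq_zero_iff]
      refine ⟨fun _ => 1, ?_, ?_⟩
      · intro h
        have := congrFun h ⟨0, hM⟩
        norm_num at this
      · funext m
        have : (T - 1).transpose = T.transpose - 1 := by
          rw [Matrix.transpose_sub, Matrix.transpose_one]
        rw [this, Matrix.sub_mulVec, Matrix.one_mulVec]
        simp [Matrix.mulVec, dotProduct, Matrix.transpose_apply, hcol m]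
    obtain ⟨v, hv0, hveq⟩ := Matrix.exists_mulVec_eq_zero_iff.mpr hdet
    have hvst : T.mulVec v = v := by
      have := hveq
      rw [Matrix.sub_mulVec, Matrix.one_mulVec, sub_eq_zero] at this
      exact this
    -- step 2: |v| is stationary
    set w : Fin M → ℝ := fun j => |v j| with hwdef
    have hle : ∀ j, w j ≤ T.mulVec w j := by
      intro j
      have : |T.mulVec v j| ≤ T.mulVec w j := by
        simp only [Matrix.mulVec, dotProduct]
        calc |∑ m, T j m * v m| ≤ ∑ m, |T j m * v m| :=
              Finset.abs_sum_le_sum_abs _ _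
          _ = ∑ m, T j m * w m := by
              refine Finset.sum_congr rfl fun m _ => ?_
              rw [abs_mul, abs_of_nonneg (hT0 j m)]
      rw [hvst] at this
      exact this
    have hsum : ∑ j, T.mulVec w j = ∑ j, w j := by
      simp only [Matrix.mulVec, dotProduct]
      rw [Finset.sum_comm]
      refine Finset.sum_congr rfl fun m _ => ?_
      rw [← Finset.sum_mul, hcol m, one_mul]
    have hwst : T.mulVec w = w := by
      funext j
      exact ((Finset.sum_eq_sum_iff_of_le (fun j _ => hle j)).mp hsum.symm j
        (Finset.mem_univ j)).symm
    have hwne : w ≠ 0 := by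
      intro h
      apply hv0
      funext j
      have := congrFun h j
      simpa [hwdef, abs_eq_zero] using this
    exact ⟨w, stationary_pos T hT0 hirr w (fun j => abs_nonneg _) hwne hwst, hwst⟩
  · -- uniqueness
    intro u u' hu hu' hst hst'
    obtain ⟨j0, _, hj0⟩ := Finset.exists_min_image Finset.univ
      (fun j => u' j / u j) (Finset.univ_nonempty)
    set t : ℝ := u' j0 / u j0 with htdef
    have ht : 0 < t := div_pos (hu' j0) (hu j0)
    set z : Fin M → ℝ := fun j => u' j - t * u j with hzdef
    have hz0 : ∀ j, 0 ≤ z j := by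
      intro j
      have := hj0 j (Finset.mem_univ j)
      have h2 : t * u j ≤ u' j := (le_div_iff₀ (hu j)).mp this
      simp [hzdef]; linarith
    have hzj0 : z j0 = 0 := by
      simp [hzdef, htdef, div_mul_cancel₀ _ (hu j0).ne']
    have hzst : T.mulVec z = z := by
      have : z = u' - t • u := by funext j; simp [hzdef, mul_comm]
      rw [this, Matrix.mulVec_sub, Matrix.mulVec_smul, hst, hst']
    by_cases hz : z = 0
    · refine ⟨t, ht, fun j => ?_⟩
      have := congrFun hz j
      simp [hzdef] at this
      linarith
    · exfalso
      have := stationary_pos T hT0 hirr z hz0 hz hzst j0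
      rw [hzj0] at this
      exact lt_irrefl 0 this

/-- Connectedness of the quantity matrix `q`: for every nonempty proper subset `J` of the
countries there are a country in `J`, a country outside `J` and a commodity consumed
(in positive quantity) in both. -/
def QConnected {N M : ℕ} (q : Fin N → Fin M → ℝ) : Prop :=
  ∀ J : Finset (Fin M), J.Nonempty → J ≠ Finset.univ →
    ∃ j ∈ J, ∃ l ∉ J, ∃ k, 0 < q k j ∧ 0 < q k l

theorem stmt0 {N M : ℕ} (hN : 0 < N) (hM : 0 < M)
    (q c d : Fin N → Fin M → ℝ)
    (hq0 : ∀ i j, 0 ≤ q i j)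
    (hqrow : ∀ i, ∃ j, 0 < q i j)
    (hqcol : ∀ j, ∃ i, 0 < q i j)
    (hc0 : ∀ i j, 0 ≤ c i j) (hd0 : ∀ i j, 0 ≤ d i j)
    (hdsupp : ∀ i j, 0 < d i j ↔ 0 < q i j)
    (hcsupp : ∀ i j, 0 < c i j ↔ 0 < q i j)
    (f : Fin M → ℝ → ℝ) (g : Fin N → ℝ → ℝ)
    (hf : ∀ j, Set.BijOn (f j) (Set.Ioi (0 : ℝ)) (Set.Ioi (0 : ℝ)))
    (hg : ∀ i, Set.BijOn (g i) (Set.Ioi (0 : ℝ)) (Set.Ioi (0 : ℝ)))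
    (a b : Fin N → Fin M → ℝ)
    (ha : ∀ i j, a i j = d i j / ∑ n, c n j)
    (hb : ∀ i j, b i j = c i j / ∑ m, d i m) :
    ((∃ (PPP : Fin M → ℝ) (P : Fin N → ℝ),
        (∀ j, 0 < PPP j) ∧ (∀ i, 0 < P i) ∧
        (∀ j, f j (PPP j) = ∑ n, a n j * g n (P n)) ∧
        (∀ i, g i (P i) = ∑ m, b i m * f m (PPP m))) ∧
      (∀ (PPP PPP' : Fin M → ℝ) (P P' : Fin N → ℝ),
        (∀ j, 0 < PPP j) → (∀ i, 0 < P i) →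
        (∀ j, f j (PPP j) = ∑ n, a n j * g n (P n)) →
        (∀ i, g i (P i) = ∑ m, b i m * f m (PPP m)) →
        (∀ j, 0 < PPP' j) → (∀ i, 0 < P' i) →
        (∀ j, f j (PPP' j) = ∑ n, a n j * g n (P' n)) →
        (∀ i, g i (P' i) = ∑ m, b i m * f m (PPP' m)) →
        ∃ γ : ℝ, 0 < γ ∧ (∀ j, f j (PPP' j) = γ * f j (PPP j)) ∧
          (∀ i, g i (P' i) = γ * g i (P i))))
    ↔ QConnected q := by
  classical
  -- common setup
  set colc : Fin M → ℝ := fun j => ∑ n, c n j with hcolc_def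
  set rowd : Fin N → ℝ := fun i => ∑ m, d i m with hrowd_def
  have hcolc : ∀ j, 0 < colc j := by
    intro j
    obtain ⟨i, hi⟩ := hqcol j
    exact Finset.sum_pos' (fun n _ => hc0 n j) ⟨i, Finset.mem_univ i, (hcsupp i j).mpr hi⟩
  have hrowd : ∀ i, 0 < rowd i := by
    intro i
    obtain ⟨j, hj⟩ := hqrow i
    exact Finset.sum_pos' (fun m _ => hd0 i m) ⟨j, Finset.mem_univ j, (hdsupp i j).mpr hj⟩
  have ha' : ∀ i j, a i j = d i j / colc j := ha
  have hb' : ∀ i j, b i j = c i j / rowd i := hb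
  have hdz : ∀ i j, q i j = 0 → d i j = 0 := fun i j h =>
    le_antisymm (not_lt.mp (mt (hdsupp i j).mp (by simp [h]))) (hd0 i j)
  have hcz : ∀ i j, q i j = 0 → c i j = 0 := fun i j h =>
    le_antisymm (not_lt.mp (mt (hcsupp i j).mp (by simp [h]))) (hc0 i j)
  constructor
  · -- (existence ∧ uniqueness) → QConnected
    rintro ⟨⟨PPP, P, hPp, hPpos, hE1, hE2⟩, huniq⟩ J hJne hJu
    by_contra hno
    push_neg at hno
    set x : Fin M → ℝ := fun j => f j (PPP j) with hxdef
    set y : Fin N → ℝ := fun i => g i (P i) with hydef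
    have hxpos : ∀ j, 0 < x j := fun j => (hf j).mapsTo (Set.mem_Ioi.mpr (hPp j))
    have hypos : ∀ i, 0 < y i := fun i => (hg i).mapsTo (Set.mem_Ioi.mpr (hPpos i))
    set K : Finset (Fin N) := Finset.univ.filter (fun i => ∃ j ∈ J, 0 < q i j) with hKdef
    have hKmem : ∀ i, i ∈ K ↔ ∃ j ∈ J, 0 < q i j := by intro i; simp [hKdef]
    have hE1x : ∀ j, x j = ∑ n, a n j * y n := hE1
    have hE2x : ∀ i, y i = ∑ m, b i m * x m := hE2
    have hK1 : ∀ i ∈ K, ∀ l ∉ J, q i l = 0 := by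
      intro i hi l hl
      obtain ⟨j, hj, hq⟩ := (hKmem i).mp hi
      exact le_antisymm (hno j hj l hl i hq) (hq0 i l)
    have hK2 : ∀ i ∉ K, ∀ j ∈ J, q i j = 0 := by
      intro i hi j hj
      by_contra h
      exact hi ((hKmem i).mpr ⟨j, hj, lt_of_le_of_ne (hq0 i j) (Ne.symm h)⟩)
    set x' : Fin M → ℝ := fun j => if j ∈ J then 2 * x j else x j with hx'def
    set y' : Fin N → ℝ := fun i => if i ∈ K then 2 * y i else y i with hy'def
    have hx'pos : ∀ j, 0 < x' j := by
      intro j; simp only [hx'def]; split <;> [linarith [hxpos j]; exact hxpos j]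
    have hy'pos : ∀ i, 0 < y' i := by
      intro i; simp only [hy'def]; split <;> [linarith [hypos i]; exact hypos i]
    have hPPP' : ∀ j, ∃ p ∈ Set.Ioi (0:ℝ), f j p = x' j :=
      fun j => (hf j).surjOn (Set.mem_Ioi.mpr (hx'pos j))
    choose PPP' hPPP'mem hPPP'eq using hPPP'
    have hP' : ∀ i, ∃ p ∈ Set.Ioi (0:ℝ), g i p = y' i :=
      fun i => (hg i).surjOn (Set.mem_Ioi.mpr (hy'pos i))
    choose P' hP'mem hP'eq using hP'
    -- the scaled pair is also a solution
    have hE1' : ∀ j, f j (PPP' j) = ∑ n, a n j * g n (P' n) := by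
      intro j
      rw [hPPP'eq j]
      by_cases hj : j ∈ J
      · have : x' j = 2 * x j := by simp [hx'def, hj]
        rw [this, hE1x j, Finset.mul_sum]
        refine Finset.sum_congr rfl fun n _ => ?_
        rw [hP'eq n]
        by_cases hn : n ∈ K
        · simp [hy'def, hn, hydef]; ring
        · have : a n j = 0 := by rw [ha' n j, hdz n j (hK2 n hn j hj), zero_div]
          simp [this]
      · rw [show x' j = x j by simp [hx'def, hj], hE1x j]
        refine Finset.sum_congr rfl fun n _ => ?_
        rw [hP'eq n]
        by_cases hn : n ∈ K
        · have : a n j = 0 := by rw [ha' n j, hdz n j (hK1 n hn j hj), zero_div]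
          simp [this]
        · simp [hy'def, hn, hydef]
    have hE2' : ∀ i, g i (P' i) = ∑ m, b i m * f m (PPP' m) := by
      intro i
      rw [hP'eq i]
      by_cases hi : i ∈ K
      · have : y' i = 2 * y i := by simp [hy'def, hi]
        rw [this, hE2x i, Finset.mul_sum]
        refine Finset.sum_congr rfl fun m _ => ?_
        rw [hPPP'eq m]
        by_cases hm : m ∈ J
        · simp [hx'def, hm, hxdef]; ring
        · have : b i m = 0 := by rw [hb' i m, hcz i m (hK1 i hi m hm), zero_div]
          simp [this]
      · rw [show y' i = y i by simp [hy'def, hi], hE2x i]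
        refine Finset.sum_congr rfl fun m _ => ?_
        rw [hPPP'eq m]
        by_cases hm : m ∈ J
        · have : b i m = 0 := by rw [hb' i m, hcz i m (hK2 i hi m hm), zero_div]
          simp [this]
        · simp [hx'def, hm, hxdef]
    obtain ⟨γ, hγpos, hγf, hγg⟩ := huniq PPP PPP' P P' hPp hPpos hE1 hE2
      (fun j => hPPP'mem j) (fun i => hP'mem i) hE1' hE2'
    obtain ⟨j0, hj0⟩ := hJne
    obtain ⟨l0, hl0⟩ : ∃ l0, l0 ∉ J := by
      by_contra hcontra
      push_neg at hcontra
      exact hJu (Finset.eq_univ_iff_forall.mpr hcontra)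
    have h2 : γ = 2 := by
      have := hγf j0
      rw [hPPP'eq j0] at this
      have hx2 : x' j0 = 2 * x j0 := by simp [hx'def, hj0]
      rw [hx2] at this
      have := mul_right_cancel₀ (hxpos j0).ne' this
      linarith
    have h1 : γ = 1 := by
      have := hγf l0
      rw [hPPP'eq l0] at this
      have hx1 : x' l0 = x l0 := by simp [hx'def, hl0]
      rw [hx1] at this
      nlinarith [hxpos l0]
    rw [h1] at h2; norm_num at h2
  · -- QConnected → (existence ∧ uniqueness)
    intro hcon
    haveI : NeZero M := ⟨hM.ne'⟩
    set T : Matrix (Fin M) (Fin M) ℝ :=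
      Matrix.of fun j m => ∑ n, d n j * c n m / (rowd n * colc m) with hTdef
    have hTapp : ∀ j m, T j m = ∑ n, d n j * c n m / (rowd n * colc m) := fun _ _ => rfl
    have hT0 : ∀ j m, 0 ≤ T j m := by
      intro j m
      rw [hTapp]
      exact Finset.sum_nonneg fun n _ => div_nonneg (mul_nonneg (hd0 n j) (hc0 n m))
        (mul_nonneg (hrowd n).le (hcolc m).le)
    have hcolsum : ∀ m, ∑ j, T j m = 1 := by
      intro m
      simp only [hTapp]
      rw [Finset.sum_comm]
      have h1 : ∀ n : Fin N, ∑ j, d n j * c n m / (rowd n * colc m) = c n m / colc m := by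
        intro n
        rw [← Finset.sum_div, ← Finset.sum_mul]
        rw [show (∑ j, d n j) = rowd n from rfl,
          mul_div_mul_left _ _ (hrowd n).ne']
      rw [Finset.sum_congr rfl fun n _ => h1 n, ← Finset.sum_div]
      rw [show (∑ n, c n m) = colc m from rfl]
      exact div_self (hcolc m).ne'
    have hirr : ∀ J : Finset (Fin M), J.Nonempty → J ≠ Finset.univ →
        ∃ j ∈ J, ∃ l ∉ J, 0 < T l j := by
      intro J hJne hJu
      obtain ⟨j, hj, l, hl, k, hkj, hkl⟩ := hcon J hJne hJu
      refine ⟨j, hj, l, hl, ?_⟩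
      rw [hTapp]
      refine Finset.sum_pos' (fun n _ => div_nonneg (mul_nonneg (hd0 n l) (hc0 n j))
        (mul_nonneg (hrowd n).le (hcolc j).le)) ⟨k, Finset.mem_univ k, ?_⟩
      exact div_pos (mul_pos ((hdsupp k l).mpr hkl) ((hcsupp k j).mpr hkj))
        (mul_pos (hrowd k) (hcolc j))
    obtain ⟨⟨u, hupos, hust⟩, huniqT⟩ := stochastic_pf hM T hT0 hcolsum hirr
    -- the key algebraic identity
    have key : ∀ (x : Fin M → ℝ) (y : Fin N → ℝ), (∀ i, y i = ∑ m, b i m * x m) →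
        ∀ j, ∑ n, a n j * y n = (∑ m, T j m * (colc m * x m)) / colc j := by
      intro x y hy j
      rw [Finset.sum_div]
      rw [show (∑ n, a n j * y n) = ∑ n, ∑ m, a n j * (b n m * x m) by
        refine Finset.sum_congr rfl fun n _ => ?_
        rw [hy n, Finset.mul_sum]]
      rw [Finset.sum_comm]
      refine Finset.sum_congr rfl fun m _ => ?_
      rw [hTapp, Finset.sum_mul, Finset.sum_div]
      refine Finset.sum_congr rfl fun n _ => ?_
      rw [ha' n j, hb' n m]
      field_simp [(hcolc j).ne', (hrowd n).ne', (hcolc m).ne']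
    constructor
    · -- existence
      set x : Fin M → ℝ := fun j => u j / colc j with hxdef
      have hxpos : ∀ j, 0 < x j := fun j => div_pos (hupos j) (hcolc j)
      set y : Fin N → ℝ := fun i => ∑ m, b i m * x m with hydef
      have hypos : ∀ i, 0 < y i := by
        intro i
        obtain ⟨m0, hm0⟩ := hqrow i
        refine Finset.sum_pos' (fun m _ => mul_nonneg ?_ (hxpos m).le)
          ⟨m0, Finset.mem_univ m0, mul_pos ?_ (hxpos m0)⟩
        · rw [hb' i m]; exact div_nonneg (hc0 i m) (hrowd i).le
        · rw [hb' i m0]; exact div_pos ((hcsupp i m0).mpr hm0) (hrowd i)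
      have hcxu : ∀ m, colc m * x m = u m := fun m =>
        mul_div_cancel₀ (u m) (hcolc m).ne'
      have heq1 : ∀ j, x j = ∑ n, a n j * y n := by
        intro j
        rw [key x y (fun i => rfl) j]
        rw [Finset.sum_congr rfl fun m _ => by rw [hcxu m]]
        have : ∑ m, T j m * u m = u j := congrFun hust j
        rw [this]
      have hPPP : ∀ j, ∃ p ∈ Set.Ioi (0:ℝ), f j p = x j :=
        fun j => (hf j).surjOn (Set.mem_Ioi.mpr (hxpos j))
      choose PPP hPPPmem hPPPeq using hPPP
      have hP : ∀ i, ∃ p ∈ Set.Ioi (0:ℝ), g i p = y i :=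
        fun i => (hg i).surjOn (Set.mem_Ioi.mpr (hypos i))
      choose P hPmem hPeq using hP
      refine ⟨PPP, P, fun j => hPPPmem j, fun i => hPmem i, fun j => ?_, fun i => ?_⟩
      · rw [hPPPeq j, heq1 j]
        exact Finset.sum_congr rfl fun n _ => by rw [hPeq n]
      · rw [hPeq i]
        exact Finset.sum_congr rfl fun m _ => by rw [hPPPeq m]
    · -- uniqueness
      intro PPP PPP' P P' hPp hPpos hE1 hE2 hPp' hPpos' hE1' hE2'
      set x : Fin M → ℝ := fun j => f j (PPP j) with hxdef
      set y : Fin N → ℝ := fun i => g i (P i) with hydef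
      set x' : Fin M → ℝ := fun j => f j (PPP' j) with hx'def
      set y' : Fin N → ℝ := fun i => g i (P' i) with hy'def
      have hxpos : ∀ j, 0 < x j := fun j => (hf j).mapsTo (Set.mem_Ioi.mpr (hPp j))
      have hx'pos : ∀ j, 0 < x' j := fun j => (hf j).mapsTo (Set.mem_Ioi.mpr (hPp' j))
      have hstat : ∀ (z : Fin M → ℝ) (w : Fin N → ℝ),
          (∀ j, z j = ∑ n, a n j * w n) → (∀ i, w i = ∑ m, b i m * z m) →
          T.mulVec (fun j => colc j * z j) = fun j => colc j * z j := by
        intro z w hz hw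
        funext j
        have h := key z w hw j
        rw [← hz j] at h
        simp only [Matrix.mulVec, dotProduct]
        rw [h, mul_comm, div_mul_cancel₀ _ (hcolc j).ne']
      have hu : T.mulVec (fun j => colc j * x j) = fun j => colc j * x j :=
        hstat x y hE1 hE2
      have hu' : T.mulVec (fun j => colc j * x' j) = fun j => colc j * x' j :=
        hstat x' y' hE1' hE2'
      obtain ⟨γ, hγpos, hγ⟩ := huniqT (fun j => colc j * x j) (fun j => colc j * x' j)
        (fun j => mul_pos (hcolc j) (hxpos j)) (fun j => mul_pos (hcolc j) (hx'pos j))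
        hu hu'
      refine ⟨γ, hγpos, fun j => ?_, fun i => ?_⟩
      · have := hγ j
        have h2 : colc j * x' j = colc j * (γ * x j) := by rw [this]; ring
        exact mul_left_cancel₀ (hcolc j).ne' h2
      · rw [hE2' i, hE2 i, Finset.mul_sum]
        refine Finset.sum_congr rfl fun m _ => ?_
        have := hγ m
        have h2 : x' m = γ * x m := by
          have h3 : colc m * x' m = colc m * (γ * x m) := by rw [this]; ring
          exact mul_left_cancel₀ (hcolc m).ne' h3
        rw [show f m (PPP' m) = x' m from rfl, show f m (PPP m) = x m from rfl, h2]
        ring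
end

section
/- Let c and d be nonnegative N×M arrays such that every column sum Σ_{n=1}^N c_{nj} and every row sum Σ_{m=1}^M d_{im} is strictly positive. Consider the system of equations in positive unknowns f ∈ ℝ^M and g ∈ ℝ^N: f_j = Σ_{n=1}^N (d_{nj} / Σ_{n'=1}^N c_{n'j}) g_n for j = 1,…,M and g_i = Σ_{m=1}^M (c_{im} / Σ_{m'=1}^M d_{im'}) f_m for i = 1,…,N. Then a strictly positive solution (f, g), unique up to multiplication by a common positive scalar, exists if and only if the (M+N)×(M+N) block matrix B = [[0, C],[D, 0]] is irreducible, where C is the N×M matrix with entries c_{ij}/Σ_{n=1}^N c_{nj} and D is the M×N matrix with (j,i) entry d_{ij}/Σ_{m=1}^M d_{im}. -/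
open Finset

/-- Irreducibility of a nonnegative square matrix: for every nonempty proper subset `J` of the
index set there are `j ∈ J` and `i ∉ J` with `A i j > 0`. -/
def MatIrreducible {K : Type*} [Fintype K] (A : Matrix K K ℝ) : Prop :=
  ∀ J : Finset K, J.Nonempty → J ≠ Finset.univ → ∃ j ∈ J, ∃ i ∉ J, 0 < A i j

section Perron

variable {K : Type*} [Fintype K] [DecidableEq K]

/-- A nonnegative nonzero fixed point of an irreducible nonnegative matrix is positive. -/
lemma fixed_pos (B : Matrix K K ℝ) (hB0 : ∀ i j, 0 ≤ B i j)
    (hirr : MatIrreducible B) (x : K → ℝ) (hx0 : ∀ k, 0 ≤ x k)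
    (hfix : ∀ i, x i = ∑ k, B i k * x k) (k0 : K) (hk0 : 0 < x k0) :
    ∀ k, 0 < x k := by
  classical
  set S : Finset K := Finset.univ.filter (fun k => 0 < x k) with hS
  have hmem : ∀ k, k ∈ S ↔ 0 < x k := by intro k; simp [hS]
  have hSuniv : S = Finset.univ := by
    by_contra hne
    obtain ⟨j, hj, i, hi, hBij⟩ := hirr S ⟨k0, (hmem k0).mpr hk0⟩ hne
    refine hi ((hmem i).mpr ?_)
    rw [hfix i]
    refine lt_of_lt_of_le (mul_pos hBij ((hmem j).mp hj)) ?_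
    exact Finset.single_le_sum (fun k _ => mul_nonneg (hB0 i k) (hx0 k)) (Finset.mem_univ j)
  intro k
  exact (hmem k).mp (hSuniv ▸ Finset.mem_univ k)

/-- Existence of a positive fixed point for an irreducible column-stochastic matrix. -/
lemma exists_fixed_pos [Nonempty K] (B : Matrix K K ℝ) (hB0 : ∀ i j, 0 ≤ B i j)
    (hcol : ∀ k, ∑ i, B i k = 1) (hirr : MatIrreducible B) :
    ∃ x : K → ℝ, (∀ k, 0 < x k) ∧ ∀ i, x i = ∑ k, B i k * x k := by
  classical
  have hdet : (B - 1).det = 0 := by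
    rw [← Matrix.det_transpose, ← Matrix.exists_mulVec_eq_zero_iff]
    refine ⟨fun _ => 1, ?_, ?_⟩
    · intro h
      have := congrFun h (Classical.arbitrary K)
      norm_num at this
    · funext k
      simp only [Matrix.mulVec, dotProduct, Matrix.transpose_apply, Matrix.sub_apply,
        Matrix.one_apply, mul_one, Pi.zero_apply]
      rw [Finset.sum_sub_distrib, hcol k]
      simp
  obtain ⟨v, hv, hv0⟩ := Matrix.exists_mulVec_eq_zero_iff.mpr hdet
  have hfixv : ∀ i, v i = ∑ k, B i k * v k := by
    intro i
    have := congrFun hv0 i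
    simp only [Matrix.mulVec, dotProduct, Matrix.sub_apply, Matrix.one_apply,
      Pi.zero_apply, sub_mul] at this
    rw [Finset.sum_sub_distrib] at this
    have h1 : ∑ k, (if i = k then (1:ℝ) else 0) * v k = v i := by simp
    rw [h1] at this
    linarith
  set x : K → ℝ := fun k => |v k| with hx
  have hle : ∀ i, x i ≤ ∑ k, B i k * x k := by
    intro i
    calc |v i| = |∑ k, B i k * v k| := by rw [← hfixv i]
    _ ≤ ∑ k, |B i k * v k| := Finset.abs_sum_le_sum_abs _ _
    _ = ∑ k, B i k * |v k| := by
        refine Finset.sum_congr rfl fun k _ => ?_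
        rw [abs_mul, abs_of_nonneg (hB0 i k)]
  have hsum0 : ∑ i, ((∑ k, B i k * x k) - x i) = 0 := by
    rw [Finset.sum_sub_distrib, Finset.sum_comm]
    have : ∑ k, ∑ i, B i k * x k = ∑ k, x k := by
      refine Finset.sum_congr rfl fun k _ => ?_
      rw [← Finset.sum_mul, hcol k, one_mul]
    rw [this, sub_self]
  have hfix : ∀ i, x i = ∑ k, B i k * x k := by
    intro i
    have := (Finset.sum_eq_zero_iff_of_nonneg (fun i _ => sub_nonneg.mpr (hle i))).mp hsum0 i
      (Finset.mem_univ i)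
    linarith
  obtain ⟨k0, hk0⟩ := Function.ne_iff.mp hv
  have hxk0 : 0 < x k0 := abs_pos.mpr hk0
  exact ⟨x, fixed_pos B hB0 hirr x (fun k => abs_nonneg _) hfix k0 hxk0, hfix⟩

/-- Uniqueness (up to scalar) of the positive fixed point of an irreducible nonneg matrix. -/
lemma fixed_unique [Nonempty K] (B : Matrix K K ℝ) (hB0 : ∀ i j, 0 ≤ B i j)
    (hirr : MatIrreducible B) (x y : K → ℝ) (hx : ∀ k, 0 < x k) (hy : ∀ k, 0 < y k)
    (hfx : ∀ i, x i = ∑ k, B i k * x k) (hfy : ∀ i, y i = ∑ k, B i k * y k) :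
    ∃ γ : ℝ, 0 < γ ∧ ∀ k, y k = γ * x k := by
  classical
  obtain ⟨k0, -, hk0min⟩ := Finset.exists_min_image Finset.univ (fun k => y k / x k)
    Finset.univ_nonempty
  set γ := y k0 / x k0 with hγ
  have hγpos : 0 < γ := div_pos (hy k0) (hx k0)
  set z : K → ℝ := fun k => y k - γ * x k with hz
  have hz0 : ∀ k, 0 ≤ z k := by
    intro k
    have h1 : γ ≤ y k / x k := hk0min k (Finset.mem_univ k)
    have := (le_div_iff₀ (hx k)).mp h1
    simp only [hz]; linarith [this]
  have hzfix : ∀ i, z i = ∑ k, B i k * z k := by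
    intro i
    simp only [hz, mul_sub]
    rw [Finset.sum_sub_distrib]
    have h2 : ∑ k, B i k * (γ * x k) = γ * ∑ k, B i k * x k := by
      rw [Finset.mul_sum]; exact Finset.sum_congr rfl fun k _ => by ring
    rw [h2, ← hfx i, ← hfy i]
  have hzk0 : z k0 = 0 := by
    simp only [hz, hγ]
    rw [div_mul_cancel₀ _ (hx k0).ne']
    ring
  have hzall : ∀ k, z k = 0 := by
    intro k
    by_contra hk
    have hkpos : 0 < z k := lt_of_le_of_ne (hz0 k) (Ne.symm hk)
    have := fixed_pos B hB0 hirr z hz0 hzfix k hkpos k0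
    exact absurd hzk0 (ne_of_gt this)
  exact ⟨γ, hγpos, fun k => by have := hzall k; simp only [hz] at this; linarith⟩

end Perron

section Red

open Finset

variable {K : Type*} [Fintype K] [DecidableEq K]

lemma reducible_second_fixed (B : Matrix K K ℝ) (hB0 : ∀ i j, 0 ≤ B i j)
    (hcol : ∀ k, ∑ i, B i k = 1)
    (J : Finset K)
    (hred : ∀ j ∈ J, ∀ i ∉ J, B i j = 0)
    (x : K → ℝ) (hx : ∀ k, 0 < x k) (hfix : ∀ i, x i = ∑ k, B i k * x k) :
    ∀ i, (if i ∈ J then x i else 2 * x i) =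
      ∑ k, B i k * (if k ∈ J then x k else 2 * x k) := by
  classical
  -- columns inside J vanish outside J; first show rows in J vanish on columns outside J
  have hswap : ∑ i ∈ J, x i = ∑ k, (∑ i ∈ J, B i k) * x k := by
    calc ∑ i ∈ J, x i = ∑ i ∈ J, ∑ k, B i k * x k := Finset.sum_congr rfl fun i _ => hfix i
    _ = ∑ k, ∑ i ∈ J, B i k * x k := Finset.sum_comm
    _ = ∑ k, (∑ i ∈ J, B i k) * x k := by
        exact Finset.sum_congr rfl fun k _ => (Finset.sum_mul _ _ _).symm
  have hJcol : ∀ k ∈ J, ∑ i ∈ J, B i k = 1 := by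
    intro k hk
    have h1 : ∑ i ∈ J, B i k + ∑ i ∈ Jᶜ, B i k = 1 := by
      rw [Finset.sum_add_sum_compl]; exact hcol k
    have h2 : ∑ i ∈ Jᶜ, B i k = 0 :=
      Finset.sum_eq_zero fun i hi => hred k hk i (Finset.mem_compl.mp hi)
    linarith
  have hsplit : ∑ k ∈ J, (∑ i ∈ J, B i k) * x k + ∑ k ∈ Jᶜ, (∑ i ∈ J, B i k) * x k
      = ∑ k, (∑ i ∈ J, B i k) * x k := Finset.sum_add_sum_compl J _
  have hJpart : ∑ k ∈ J, (∑ i ∈ J, B i k) * x k = ∑ k ∈ J, x k :=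
    Finset.sum_congr rfl fun k hk => by rw [hJcol k hk, one_mul]
  have hout0 : ∑ k ∈ Jᶜ, (∑ i ∈ J, B i k) * x k = 0 := by
    rw [hswap] at *
    linarith [hsplit, hJpart, hswap]
  have hzero : ∀ i ∈ J, ∀ k ∉ J, B i k = 0 := by
    intro i hi k hk
    have hterm : (∑ i ∈ J, B i k) * x k = 0 := by
      refine (Finset.sum_eq_zero_iff_of_nonneg ?_).mp hout0 k (Finset.mem_compl.mpr hk)
      exact fun k _ => mul_nonneg (Finset.sum_nonneg fun i _ => hB0 i k) (hx k).le
    have hsum0 : ∑ i ∈ J, B i k = 0 := by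
      rcases mul_eq_zero.mp hterm with h | h
      · exact h
      · exact absurd h (hx k).ne'
    exact (Finset.sum_eq_zero_iff_of_nonneg (fun i _ => hB0 i k)).mp hsum0 i hi
  intro i
  have hsplitf : ∀ y : K → ℝ, ∑ k, B i k * y k = ∑ k ∈ J, B i k * y k + ∑ k ∈ Jᶜ, B i k * y k :=
    fun y => (Finset.sum_add_sum_compl J _).symm
  by_cases hi : i ∈ J
  · simp only [hi, if_true]
    rw [hsplitf]
    have h1 : ∑ k ∈ Jᶜ, B i k * (if k ∈ J then x k else 2 * x k) = 0 :=
      Finset.sum_eq_zero fun k hk => by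
        rw [hzero i hi k (Finset.mem_compl.mp hk), zero_mul]
    have h2 : ∑ k ∈ J, B i k * (if k ∈ J then x k else 2 * x k) = ∑ k ∈ J, B i k * x k :=
      Finset.sum_congr rfl fun k hk => by rw [if_pos hk]
    have h3 : ∑ k ∈ Jᶜ, B i k * x k = 0 :=
      Finset.sum_eq_zero fun k hk => by
        rw [hzero i hi k (Finset.mem_compl.mp hk), zero_mul]
    have h4 := hsplitf x
    rw [h1, h2]
    rw [hfix i, h4, h3]

  · simp only [hi, if_false]
    rw [hsplitf]
    have h1 : ∑ k ∈ J, B i k * (if k ∈ J then x k else 2 * x k) = 0 :=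
      Finset.sum_eq_zero fun k hk => by rw [hred k hk i hi, zero_mul]
    have h2 : ∑ k ∈ Jᶜ, B i k * (if k ∈ J then x k else 2 * x k)
        = 2 * ∑ k ∈ Jᶜ, B i k * x k := by
      rw [Finset.mul_sum]
      refine Finset.sum_congr rfl fun k hk => ?_
      rw [if_neg (Finset.mem_compl.mp hk)]; ring
    have h3 : ∑ k ∈ J, B i k * x k = 0 :=
      Finset.sum_eq_zero fun k hk => by rw [hred k hk i hi, zero_mul]
    have h4 := hsplitf x
    rw [h1, h2, zero_add]
    rw [hfix i, h4, h3, zero_add]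

end Red

theorem stmt1 {N M : ℕ} (hN : 0 < N) (hM : 0 < M)
    (c d : Fin N → Fin M → ℝ)
    (hc0 : ∀ i j, 0 ≤ c i j) (hd0 : ∀ i j, 0 ≤ d i j)
    (hccol : ∀ j, 0 < ∑ n, c n j) (hdrow : ∀ i, 0 < ∑ m, d i m)
    (C : Matrix (Fin N) (Fin M) ℝ)
    (hC : ∀ i j, C i j = c i j / ∑ n, c n j)
    (D : Matrix (Fin M) (Fin N) ℝ)
    (hD : ∀ j i, D j i = d i j / ∑ m, d i m) :
    ((∃ (f : Fin M → ℝ) (g : Fin N → ℝ),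
        (∀ j, 0 < f j) ∧ (∀ i, 0 < g i) ∧
        (∀ j, f j = ∑ n, (d n j / ∑ n', c n' j) * g n) ∧
        (∀ i, g i = ∑ m, (c i m / ∑ m', d i m') * f m)) ∧
      (∀ (f f' : Fin M → ℝ) (g g' : Fin N → ℝ),
        (∀ j, 0 < f j) → (∀ i, 0 < g i) →
        (∀ j, f j = ∑ n, (d n j / ∑ n', c n' j) * g n) →
        (∀ i, g i = ∑ m, (c i m / ∑ m', d i m') * f m) →
        (∀ j, 0 < f' j) → (∀ i, 0 < g' i) →
        (∀ j, f' j = ∑ n, (d n j / ∑ n', c n' j) * g' n) →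
        (∀ i, g' i = ∑ m, (c i m / ∑ m', d i m') * f' m) →
        ∃ γ : ℝ, 0 < γ ∧ (∀ j, f' j = γ * f j) ∧ (∀ i, g' i = γ * g i)))
    ↔ MatIrreducible (Matrix.fromBlocks (0 : Matrix (Fin N) (Fin N) ℝ) C D
        (0 : Matrix (Fin M) (Fin M) ℝ)) := by
  
  classical
  haveI : Nonempty (Fin N) := ⟨⟨0, hN⟩⟩
  set B : Matrix (Fin N ⊕ Fin M) (Fin N ⊕ Fin M) ℝ :=
    Matrix.fromBlocks 0 C D 0 with hB
  have hs : ∀ j, (∑ n, c n j) ≠ 0 := fun j => (hccol j).ne'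
  have ht : ∀ i, (∑ m, d i m) ≠ 0 := fun i => (hdrow i).ne'
  have hB0 : ∀ k l, 0 ≤ B k l := by
    rintro (i | j) (i' | j') <;>
      simp only [hB, Matrix.fromBlocks_apply₁₁, Matrix.fromBlocks_apply₁₂,
        Matrix.fromBlocks_apply₂₁, Matrix.fromBlocks_apply₂₂, Matrix.zero_apply, le_refl]
    · rw [hC]; exact div_nonneg (hc0 i j') (hccol j').le
    · rw [hD]; exact div_nonneg (hd0 i' j) (hdrow i').le
  have hcol : ∀ l, ∑ k, B k l = 1 := by
    rintro (i | j)
    · rw [Fintype.sum_sum_type]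
      simp only [hB, Matrix.fromBlocks_apply₁₁, Matrix.fromBlocks_apply₂₁,
        Matrix.zero_apply, Finset.sum_const_zero, zero_add]
      have : ∀ j : Fin M, D j i = d i j / ∑ m, d i m := fun j => hD j i
      rw [Finset.sum_congr rfl fun j _ => this j, ← Finset.sum_div, div_self (ht i)]
    · rw [Fintype.sum_sum_type]
      simp only [hB, Matrix.fromBlocks_apply₁₂, Matrix.fromBlocks_apply₂₂,
        Matrix.zero_apply, Finset.sum_const_zero, add_zero]
      rw [Finset.sum_congr rfl fun i _ => hC i j, ← Finset.sum_div, div_self (hs j)]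
  have cancel1 : ∀ (a b v : ℝ), a ≠ 0 → a * (b / a * v) = b * v := by
    intro a b v ha; rw [← mul_assoc, mul_comm a (b / a), div_mul_cancel₀ _ ha]
  have cancel2 : ∀ (a b v : ℝ), a ≠ 0 → b / a * (a * v) = b * v := by
    intro a b v ha; rw [← mul_assoc, div_mul_cancel₀ _ ha]
  -- translation: a solution (f,g) gives a fixed point of B
  have key1 : ∀ (f : Fin M → ℝ) (g : Fin N → ℝ),
      (∀ j, f j = ∑ n, (d n j / ∑ n', c n' j) * g n) →
      (∀ i, g i = ∑ m, (c i m / ∑ m', d i m') * f m) →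
      ∀ k, (Sum.elim (fun i => (∑ m, d i m) * g i) (fun j => (∑ n, c n j) * f j)) k
        = ∑ l, B k l *
          (Sum.elim (fun i => (∑ m, d i m) * g i) (fun j => (∑ n, c n j) * f j)) l := by
    intro f g hf hg
    rintro (i | j)
    · rw [Fintype.sum_sum_type]
      simp only [hB, Matrix.fromBlocks_apply₁₁, Matrix.fromBlocks_apply₁₂,
        Matrix.zero_apply, Sum.elim_inl, Sum.elim_inr, zero_mul, Finset.sum_const_zero,
        zero_add]
      rw [hg i, Finset.mul_sum]
      refine Finset.sum_congr rfl fun m _ => ?_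
      rw [hC i m, cancel1 _ _ _ (ht i), cancel2 _ _ _ (hs m)]
    · rw [Fintype.sum_sum_type]
      simp only [hB, Matrix.fromBlocks_apply₂₁, Matrix.fromBlocks_apply₂₂,
        Matrix.zero_apply, Sum.elim_inl, Sum.elim_inr, zero_mul, Finset.sum_const_zero,
        add_zero]
      rw [hf j, Finset.mul_sum]
      refine Finset.sum_congr rfl fun n _ => ?_
      rw [hD j n, cancel1 _ _ _ (hs j), cancel2 _ _ _ (ht n)]
  -- translation: a fixed point of B gives a solution (f,g)
  have key2 : ∀ x : (Fin N ⊕ Fin M) → ℝ, (∀ k, x k = ∑ l, B k l * x l) →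
      (∀ j, x (Sum.inr j) / (∑ n, c n j)
          = ∑ n, (d n j / ∑ n', c n' j) * (x (Sum.inl n) / (∑ m, d n m))) ∧
      (∀ i, x (Sum.inl i) / (∑ m, d i m)
          = ∑ m, (c i m / ∑ m', d i m') * (x (Sum.inr m) / (∑ n, c n m))) := by
    intro x hx
    constructor
    · intro j
      rw [hx (Sum.inr j), Fintype.sum_sum_type]
      simp only [hB, Matrix.fromBlocks_apply₂₁, Matrix.fromBlocks_apply₂₂,
        Matrix.zero_apply, zero_mul, Finset.sum_const_zero, add_zero]
      rw [Finset.sum_div]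
      refine Finset.sum_congr rfl fun n _ => ?_
      rw [hD j n]; ring
    · intro i
      rw [hx (Sum.inl i), Fintype.sum_sum_type]
      simp only [hB, Matrix.fromBlocks_apply₁₁, Matrix.fromBlocks_apply₁₂,
        Matrix.zero_apply, zero_mul, Finset.sum_const_zero, zero_add]
      rw [Finset.sum_div]
      refine Finset.sum_congr rfl fun m _ => ?_
      rw [hC i m]; ring
  constructor
  · -- existence+uniqueness implies irreducibility
    rintro ⟨⟨f, g, hfpos, hgpos, hfeq, hgeq⟩, huniq⟩
    by_contra hirr
    simp only [MatIrreducible] at hirr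
    push_neg at hirr
    obtain ⟨J, hJne, hJuniv, hJ⟩ := hirr
    have hred : ∀ j ∈ J, ∀ i ∉ J, B i j = 0 :=
      fun j hj i hi => le_antisymm (hJ j hj i hi) (hB0 i j)
    set x : Fin N ⊕ Fin M → ℝ :=
      Sum.elim (fun i => (∑ m, d i m) * g i) (fun j => (∑ n, c n j) * f j) with hxdef
    have hxfix : ∀ k, x k = ∑ l, B k l * x l := key1 f g hfeq hgeq
    have hxpos : ∀ k, 0 < x k := by
      rintro (i | j)
      · exact mul_pos (hdrow i) (hgpos i)
      · exact mul_pos (hccol j) (hfpos j)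
    set x' : Fin N ⊕ Fin M → ℝ := fun k => if k ∈ J then x k else 2 * x k with hx'def
    have hx'fix : ∀ k, x' k = ∑ l, B k l * x' l :=
      reducible_second_fixed B hB0 hcol J hred x hxpos hxfix
    have hx'pos : ∀ k, 0 < x' k := by
      intro k; simp only [hx'def]
      split <;> first | exact hxpos k | exact mul_pos two_pos (hxpos k)
    obtain ⟨hf'eq, hg'eq⟩ := key2 x' hx'fix
    set f' : Fin M → ℝ := fun j => x' (Sum.inr j) / (∑ n, c n j) with hf'def
    set g' : Fin N → ℝ := fun i => x' (Sum.inl i) / (∑ m, d i m) with hg'def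
    have hf'pos : ∀ j, 0 < f' j := fun j => div_pos (hx'pos _) (hccol j)
    have hg'pos : ∀ i, 0 < g' i := fun i => div_pos (hx'pos _) (hdrow i)
    obtain ⟨γ, hγpos, hγf, hγg⟩ :=
      huniq f f' g g' hfpos hgpos hfeq hgeq hf'pos hg'pos hf'eq hg'eq
    have hxγ : ∀ k, x' k = γ * x k := by
      rintro (i | j)
      · have h1 : x' (Sum.inl i) = (∑ m, d i m) * g' i := by
          simp only [hg'def]
          rw [mul_comm, div_mul_cancel₀ _ (ht i)]
        rw [h1, hγg i]
        simp only [hxdef, Sum.elim_inl]; ring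
      · have h1 : x' (Sum.inr j) = (∑ n, c n j) * f' j := by
          simp only [hf'def]
          rw [mul_comm, div_mul_cancel₀ _ (hs j)]
        rw [h1, hγf j]
        simp only [hxdef, Sum.elim_inr]; ring
    obtain ⟨k0, hk0⟩ := hJne
    obtain ⟨k1, hk1⟩ : ∃ k1, k1 ∉ J := by
      by_contra h
      push_neg at h
      exact hJuniv (Finset.eq_univ_iff_forall.mpr h)
    have hγ1 : γ = 1 := by
      have h1 := hxγ k0
      simp only [hx'def, if_pos hk0] at h1
      have h2 : (1 - γ) * x k0 = 0 := by linarith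
      rcases mul_eq_zero.mp h2 with h | h
      · linarith
      · exact absurd h (hxpos k0).ne'
    have hγ2 : γ = 2 := by
      have h1 := hxγ k1
      simp only [hx'def, if_neg hk1] at h1
      have h2 : (2 - γ) * x k1 = 0 := by linarith
      rcases mul_eq_zero.mp h2 with h | h
      · linarith
      · exact absurd h (hxpos k1).ne'
    rw [hγ1] at hγ2
    norm_num at hγ2
  · -- irreducibility implies existence and uniqueness
    intro hirr
    haveI : Nonempty (Fin N ⊕ Fin M) := ⟨Sum.inl ⟨0, hN⟩⟩
    constructor
    · obtain ⟨x, hxpos, hxfix⟩ := exists_fixed_pos B hB0 hcol hirr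
      obtain ⟨hfeq, hgeq⟩ := key2 x hxfix
      exact ⟨fun j => x (Sum.inr j) / (∑ n, c n j),
        fun i => x (Sum.inl i) / (∑ m, d i m),
        fun j => div_pos (hxpos _) (hccol j),
        fun i => div_pos (hxpos _) (hdrow i), hfeq, hgeq⟩
    · intro f f' g g' hfpos hgpos hfeq hgeq hf'pos hg'pos hf'eq hg'eq
      set x : Fin N ⊕ Fin M → ℝ :=
        Sum.elim (fun i => (∑ m, d i m) * g i) (fun j => (∑ n, c n j) * f j) with hxdef
      set x' : Fin N ⊕ Fin M → ℝ :=
        Sum.elim (fun i => (∑ m, d i m) * g' i) (fun j => (∑ n, c n j) * f' j) with hx'def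
      have hxpos : ∀ k, 0 < x k := by
        rintro (i | j)
        · exact mul_pos (hdrow i) (hgpos i)
        · exact mul_pos (hccol j) (hfpos j)
      have hx'pos : ∀ k, 0 < x' k := by
        rintro (i | j)
        · exact mul_pos (hdrow i) (hg'pos i)
        · exact mul_pos (hccol j) (hf'pos j)
      obtain ⟨γ, hγpos, hγ⟩ := fixed_unique B hB0 hirr x x' hxpos hx'pos
        (key1 f g hfeq hgeq) (key1 f' g' hf'eq hg'eq)
      refine ⟨γ, hγpos, fun j => ?_, fun i => ?_⟩
      · have h1 := hγ (Sum.inr j)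
        simp only [hxdef, hx'def, Sum.elim_inr] at h1
        have h2 : (∑ n, c n j) * f' j = (∑ n, c n j) * (γ * f j) := by rw [h1]; ring
        exact mul_left_cancel₀ (hs j) h2
      · have h1 := hγ (Sum.inl i)
        simp only [hxdef, hx'def, Sum.elim_inl] at h1
        have h2 : (∑ m, d i m) * g' i = (∑ m, d i m) * (γ * g i) := by rw [h1]; ring
        exact mul_left_cancel₀ (ht i) h2
end

section
/- Let q be a quantity matrix and let c, d be nonnegative N×M arrays with d_{ij} > 0 ⟺ q_{ij} > 0 and c_{ij} > 0 ⟺ q_{ij} > 0. Define the M×M matrix F with entries F_{kj} = (Σ_{n=1}^N d_{nk} c_{nj} / Σ_{m=1}^M d_{nm}) / (Σ_{n=1}^N c_{nj}). Then F is irreducible if and only if the quantity matrix q is connected. -/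
open Finset

theorem stmt2 {N M : ℕ} (hN : 0 < N) (hM : 0 < M)
    (q c d : Fin N → Fin M → ℝ)
    (hq0 : ∀ i j, 0 ≤ q i j)
    (hqrow : ∀ i, ∃ j, 0 < q i j)
    (hqcol : ∀ j, ∃ i, 0 < q i j)
    (hc0 : ∀ i j, 0 ≤ c i j) (hd0 : ∀ i j, 0 ≤ d i j)
    (hdsupp : ∀ i j, 0 < d i j ↔ 0 < q i j)
    (hcsupp : ∀ i j, 0 < c i j ↔ 0 < q i j)
    (F : Matrix (Fin M) (Fin M) ℝ)
    (hF : ∀ k j, F k j = (∑ n, d n k * c n j / (∑ m, d n m)) / ∑ n, c n j) :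
    MatIrreducible F ↔ QConnected q := by
  have hD : ∀ n : Fin N, 0 < ∑ m, d n m := by
    intro n
    obtain ⟨j, hj⟩ := hqrow n
    exact Finset.sum_pos' (fun m _ => hd0 n m) ⟨j, Finset.mem_univ j, (hdsupp n j).mpr hj⟩
  have hC : ∀ j : Fin M, 0 < ∑ n, c n j := by
    intro j
    obtain ⟨i, hi⟩ := hqcol j
    exact Finset.sum_pos' (fun n _ => hc0 n j) ⟨i, Finset.mem_univ i, (hcsupp i j).mpr hi⟩
  have key : ∀ k j, 0 < F k j ↔ ∃ n, 0 < q n k ∧ 0 < q n j := by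
    intro k j
    rw [hF]
    constructor
    · intro h
      have hT : 0 < ∑ n, d n k * c n j / (∑ m, d n m) := by
        by_contra hle
        push_neg at hle
        exact absurd h (not_lt.mpr (div_nonpos_of_nonpos_of_nonneg hle (hC j).le))
      obtain ⟨n, _, hn⟩ := Finset.exists_lt_of_sum_lt (by
        simpa using hT : (∑ _n : Fin N, (0:ℝ)) < ∑ n, d n k * c n j / (∑ m, d n m))
      have hmul : 0 < d n k * c n j := by
        by_contra hle
        push_neg at hle
        exact absurd hn (not_lt.mpr (div_nonpos_of_nonpos_of_nonneg hle (hD n).le))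
      rcases mul_pos_iff.mp hmul with ⟨h1, h2⟩ | ⟨h1, h2⟩
      · exact ⟨n, (hdsupp n k).mp h1, (hcsupp n j).mp h2⟩
      · exact absurd h1 (not_lt.mpr (hd0 n k))
    · rintro ⟨n, h1, h2⟩
      apply div_pos _ (hC j)
      apply Finset.sum_pos' (fun m _ => div_nonneg (mul_nonneg (hd0 m k) (hc0 m j)) (hD m).le)
      exact ⟨n, Finset.mem_univ n,
        div_pos (mul_pos ((hdsupp n k).mpr h1) ((hcsupp n j).mpr h2)) (hD n)⟩
  constructor
  · intro hIrr J hJne hJuniv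
    obtain ⟨j, hj, i, hi, hFij⟩ := hIrr J hJne hJuniv
    obtain ⟨n, hni, hnj⟩ := (key i j).mp hFij
    exact ⟨j, hj, i, hi, n, hnj, hni⟩
  · intro hCon J hJne hJuniv
    obtain ⟨j, hj, l, hl, k, hkj, hkl⟩ := hCon J hJne hJuniv
    exact ⟨j, hj, l, hl, (key l j).mpr ⟨k, hkl, hkj⟩⟩
end

section
/- Let A be a nonnegative M×M real matrix each of whose columns sums to one (i.e. the transpose of A is row-stochastic). Then there exists a strictly positive vector X ∈ ℝ^M with AX = X that is unique up to multiplication by a positive scalar if and only if A is irreducible. -/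
open Finset

/-- A column-stochastic matrix has a nonzero real fixed vector. -/
lemma aux_eig {K : Type*} [Fintype K] [DecidableEq K] [Nonempty K] (A : Matrix K K ℝ)
    (hcol : ∀ j, ∑ i, A i j = 1) : ∃ v : K → ℝ, v ≠ 0 ∧ A.mulVec v = v := by
  have hdetT : (A - 1 : Matrix K K ℝ).transpose.det = 0 := by
    rw [← Matrix.exists_mulVec_eq_zero_iff]
    refine ⟨fun _ => 1, ?_, ?_⟩
    · intro h
      have := congrFun h (Classical.arbitrary K)
      simp at this
    · funext i
      simp only [Matrix.mulVec, dotProduct, Matrix.transpose_apply, mul_one,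
        Matrix.sub_apply, Finset.sum_sub_distrib, hcol i, Pi.zero_apply]
      simp [Matrix.one_apply]
  have hdet : (A - 1).det = 0 := by rwa [Matrix.det_transpose] at hdetT
  rw [← Matrix.exists_mulVec_eq_zero_iff] at hdet
  obtain ⟨v, hv0, hv⟩ := hdet
  rw [Matrix.sub_mulVec, Matrix.one_mulVec, sub_eq_zero] at hv
  exact ⟨v, hv0, hv⟩

/-- For a nonnegative column-stochastic matrix, the absolute value of a fixed vector is fixed. -/
lemma aux_abs {K : Type*} [Fintype K] (A : Matrix K K ℝ)
    (hA0 : ∀ i j, 0 ≤ A i j) (hcol : ∀ j, ∑ i, A i j = 1)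
    (v : K → ℝ) (hv : A.mulVec v = v) :
    A.mulVec (fun i => |v i|) = fun i => |v i| := by
  have hle : ∀ i, |v i| ≤ ∑ j, A i j * |v j| := by
    intro i
    calc |v i| = |∑ j, A i j * v j| := by rw [← congrFun hv i]; rfl
    _ ≤ ∑ j, |A i j * v j| := Finset.abs_sum_le_sum_abs _ _
    _ = ∑ j, A i j * |v j| := by
        refine Finset.sum_congr rfl fun j _ => ?_
        rw [abs_mul, abs_of_nonneg (hA0 i j)]
  have hsum : ∑ i, ∑ j, A i j * |v j| = ∑ i, |v i| := by
    rw [Finset.sum_comm]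
    refine Finset.sum_congr rfl fun j _ => ?_
    rw [← Finset.sum_mul, hcol, one_mul]
  have heq := (Finset.sum_eq_sum_iff_of_le (fun i _ => hle i)).mp hsum.symm
  funext i
  exact ((heq i (Finset.mem_univ i)).symm : (∑ j, A i j * |v j|) = |v i|)

/-- For an irreducible nonnegative matrix, a nonzero nonnegative fixed vector is positive. -/
lemma aux_pos {K : Type*} [Fintype K] [DecidableEq K] (A : Matrix K K ℝ)
    (hA0 : ∀ i j, 0 ≤ A i j) (hirr : MatIrreducible A)
    (v : K → ℝ) (h0 : ∀ i, 0 ≤ v i) (hne : v ≠ 0) (hv : A.mulVec v = v) :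
    ∀ i, 0 < v i := by
  classical
  set J : Finset K := Finset.univ.filter (fun j => 0 < v j) with hJ
  have hJne : J.Nonempty := by
    obtain ⟨j, hj⟩ : ∃ j, v j ≠ 0 := by
      by_contra h
      push_neg at h
      exact hne (funext h)
    exact ⟨j, by simp [hJ, lt_of_le_of_ne (h0 j) (Ne.symm hj)]⟩
  have hJuniv : J = Finset.univ := by
    by_contra hne'
    obtain ⟨j, hjJ, i, hiJ, hAij⟩ := hirr J hJne hne'
    have hvj : 0 < v j := by simpa [hJ] using hjJ
    have hvi : 0 < v i := by
      have h1 : A i j * v j ≤ ∑ k, A i k * v k :=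
        Finset.single_le_sum (fun k _ => mul_nonneg (hA0 i k) (h0 k)) (Finset.mem_univ j)
      have h2 : (A.mulVec v) i = ∑ k, A i k * v k := rfl
      calc (0:ℝ) < A i j * v j := mul_pos hAij hvj
      _ ≤ ∑ k, A i k * v k := h1
      _ = v i := by rw [← h2, hv]
    exact hiJ (by simp [hJ, hvi])
  intro i
  have : i ∈ J := hJuniv ▸ Finset.mem_univ i
  simpa [hJ] using this

theorem stmt3 {M : ℕ} (hM : 0 < M)
    (A : Matrix (Fin M) (Fin M) ℝ)
    (hA0 : ∀ i j, 0 ≤ A i j)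
    (hcol : ∀ j, ∑ i, A i j = 1) :
    ((∃ X : Fin M → ℝ, (∀ j, 0 < X j) ∧ A.mulVec X = X) ∧
      (∀ X Y : Fin M → ℝ,
        (∀ j, 0 < X j) → A.mulVec X = X →
        (∀ j, 0 < Y j) → A.mulVec Y = Y →
        ∃ γ : ℝ, 0 < γ ∧ ∀ j, Y j = γ * X j))
    ↔ MatIrreducible A := by
  have : NeZero M := ⟨hM.ne'⟩
  constructor
  · -- existence + uniqueness → irreducible
    rintro ⟨⟨X, hXpos, hXfix⟩, huniq⟩
    intro J hJne hJuniv
    by_contra hcon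
    push_neg at hcon
    have hzero : ∀ j ∈ J, ∀ i ∉ J, A i j = 0 := fun j hj i hi =>
      le_antisymm (hcon j hj i hi) (hA0 i j)
    -- submatrix on J
    have hJnonempty : Nonempty {x // x ∈ J} := ⟨⟨hJne.choose, hJne.choose_spec⟩⟩
    set A' : Matrix {x // x ∈ J} {x // x ∈ J} ℝ := fun i j => A i j with hA'
    have hcol' : ∀ j : {x // x ∈ J}, ∑ i, A' i j = 1 := by
      intro j
      have h1 : ∑ i : {x // x ∈ J}, A' i j = ∑ i ∈ J, A i j :=
        Finset.sum_coe_sort J (fun i => A i j)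
      rw [h1]
      rw [Finset.sum_subset (Finset.subset_univ J)]
      · exact hcol j
      · intro i _ hiJ
        exact hzero j j.2 i hiJ
    obtain ⟨v, hv0, hvfix⟩ := aux_eig A' hcol'
    set w : {x // x ∈ J} → ℝ := fun i => |v i| with hw
    have hwfix : A'.mulVec w = w := aux_abs A' (fun i j => hA0 i j) hcol' v hvfix
    have hwne : ∃ j, w j ≠ 0 := by
      obtain ⟨j, hj⟩ : ∃ j, v j ≠ 0 := by
        by_contra h; push_neg at h; exact hv0 (funext h)
      exact ⟨j, abs_ne_zero.mpr hj⟩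
    set Z : Fin M → ℝ := fun i => if h : i ∈ J then w ⟨i, h⟩ else 0 with hZ
    have hZfix : A.mulVec Z = Z := by
      funext i
      have hsum : (A.mulVec Z) i = ∑ j ∈ J, A i j * Z j := by
        have : (A.mulVec Z) i = ∑ j, A i j * Z j := rfl
        rw [this, ← Finset.sum_subset (Finset.subset_univ J)]
        intro j _ hjJ
        simp [hZ, dif_neg hjJ]
      have hsum2 : ∑ j ∈ J, A i j * Z j = ∑ j : {x // x ∈ J}, A i j * w j := by
        rw [← Finset.sum_coe_sort J (fun j => A i j * Z j)]
        refine Finset.sum_congr rfl fun j _ => ?_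
        simp [hZ, dif_pos j.2]
      by_cases hi : i ∈ J
      · have : ∑ j : {x // x ∈ J}, A i j * w j = (A'.mulVec w) ⟨i, hi⟩ := rfl
        rw [hsum, hsum2, this, hwfix]
        simp [hZ, dif_pos hi]
      · rw [hsum, hsum2]
        have : ∀ j : {x // x ∈ J}, A i j * w j = 0 := fun j => by
          rw [hzero j j.2 i hi, zero_mul]
        simp only [this, Finset.sum_const_zero]
        simp [hZ, dif_neg hi]
    -- X + Z is a positive fixed vector
    have hZ0 : ∀ i, 0 ≤ Z i := by
      intro i
      by_cases hi : i ∈ J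
      · simp [hZ, dif_pos hi, hw, abs_nonneg]
      · simp [hZ, dif_neg hi]
    have hXZpos : ∀ j, 0 < X j + Z j := fun j => lt_of_lt_of_le (hXpos j) (by linarith [hZ0 j])
    have hXZfix : A.mulVec (fun j => X j + Z j) = fun j => X j + Z j := by
      have : (fun j => X j + Z j) = X + Z := rfl
      rw [this, Matrix.mulVec_add, hXfix, hZfix]
    obtain ⟨γ, hγpos, hγ⟩ := huniq X (fun j => X j + Z j) hXpos hXfix hXZpos hXZfix
    -- pick i ∉ J : Z i = 0 forces γ = 1, then Z = 0, contradiction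
    obtain ⟨i0, hi0⟩ : ∃ i0, i0 ∉ J := by
      by_contra h; push_neg at h
      exact hJuniv (Finset.eq_univ_iff_forall.mpr h)
    have hγ1 : γ = 1 := by
      have h := hγ i0
      have hZi0 : Z i0 = 0 := by simp [hZ, dif_neg hi0]
      rw [hZi0, add_zero] at h
      have := hXpos i0
      nlinarith
    obtain ⟨j, hj⟩ := hwne
    have := hγ j
    rw [hγ1, one_mul] at this
    have hZj : Z (j : Fin M) = 0 := by linarith
    have : w j = 0 := by
      have : Z (j : Fin M) = w j := by simp [hZ, dif_pos j.2]
      linarith [this ▸ hZj]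
    exact hj this
  · -- irreducible → existence + uniqueness
    intro hirr
    have : Nonempty (Fin M) := ⟨⟨0, hM⟩⟩
    constructor
    · obtain ⟨v, hv0, hvfix⟩ := aux_eig A hcol
      set w : Fin M → ℝ := fun i => |v i| with hw
      have hwfix : A.mulVec w = w := aux_abs A hA0 hcol v hvfix
      have hwne : w ≠ 0 := by
        intro h
        apply hv0
        funext i
        have := congrFun h i
        simpa [hw] using this
      exact ⟨w, aux_pos A hA0 hirr w (fun i => abs_nonneg _) hwne hwfix, hwfix⟩
    · intro X Y hX hXfix hY hYfix
      have hne : (Finset.univ : Finset (Fin M)).Nonempty := Finset.univ_nonempty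
      set γ : ℝ := Finset.univ.inf' hne (fun j => Y j / X j) with hγdef
      obtain ⟨j0, _, hj0⟩ := Finset.exists_mem_eq_inf' hne (fun j => Y j / X j)
      have hγpos : 0 < γ := by
        rw [hγdef, hj0]
        exact div_pos (hY j0) (hX j0)
      have hγle : ∀ j, γ * X j ≤ Y j := by
        intro j
        have : γ ≤ Y j / X j := Finset.inf'_le _ (Finset.mem_univ j)
        calc γ * X j ≤ (Y j / X j) * X j := by
              exact mul_le_mul_of_nonneg_right this (le_of_lt (hX j))
        _ = Y j := div_mul_cancel₀ _ (hX j).ne'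
      set Z : Fin M → ℝ := fun j => Y j - γ * X j with hZ
      have hZfix : A.mulVec Z = Z := by
        have : Z = Y - γ • X := by funext j; simp [hZ, smul_eq_mul]
        rw [this, Matrix.mulVec_sub, Matrix.mulVec_smul, hXfix, hYfix]
      have hZ0 : ∀ j, 0 ≤ Z j := fun j => by simp [hZ]; linarith [hγle j]
      have hZzero : Z = 0 := by
        by_contra hne'
        have := aux_pos A hA0 hirr Z hZ0 hne' hZfix j0
        have hz : Z j0 = 0 := by
          simp [hZ, hγdef, hj0, div_mul_cancel₀ _ (hX j0).ne']
        linarith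
      refine ⟨γ, hγpos, fun j => ?_⟩
      have := congrFun hZzero j
      simp [hZ] at this
      linarith
end

section
/- Let f_1,…,f_M and g_1,…,g_N be continuous functions from the positive reals to the positive reals. Then the following two conditions are equivalent: (a) for every γ > 0 there exists δ > 0 such that f_j(γ x) = δ f_j(x) for all x > 0 and all j = 1,…,M, and g_i(x/γ) = δ g_i(x) for all x > 0 and all i = 1,…,N; (b) there exist a real number ρ and positive constants α_1,…,α_M, β_1,…,β_N such that f_j(x) = α_j x^ρ for all x > 0 and all j, and g_i(x) = β_i x^{-ρ} for all x > 0 and all i. -/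
/-!
Taking `x = 1` in (a), every `f_j` and every `g_i ∘ inv` is `δ` times a constant, where `δ(γ)` is
the common factor of (a). Through any one of these functions `δ` is therefore continuous, and it is
multiplicative on `(0, ∞)`, so `t ↦ log δ(eᵗ)` is a continuous additive map `ℝ → ℝ`, hence linear:
`δ(γ) = γ^ρ`.
-/

open Real Set

theorem exists_eq_rpow_of_map_mul {D : ℝ → ℝ} (hcont : ContinuousOn D (Ioi 0))
    (hpos : ∀ x, 0 < x → 0 < D x)
    (hmul : ∀ x y, 0 < x → 0 < y → D (x * y) = D x * D y) :
    ∃ ρ : ℝ, ∀ x, 0 < x → D x = x ^ ρ := by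
  have hpos_exp (t : ℝ) : D (exp t) ≠ 0 := (hpos _ (exp_pos t)).ne'
  let L : ℝ →+ ℝ := AddMonoidHom.mk' (fun t => log (D (exp t))) fun s t => by
    simp only [exp_add, hmul _ _ (exp_pos s) (exp_pos t), log_mul (hpos_exp s) (hpos_exp t)]
  have hL : Continuous L := (hcont.comp_continuous continuous_exp exp_pos).log hpos_exp
  refine ⟨L 1, fun x hx => ?_⟩
  have hlin : L (log x) = log x * L 1 := by simpa using map_real_smul L hL (log x) 1
  calc D x = exp (L (log x)) := by simp [L, exp_log hx, exp_log (hpos x hx)]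
    _ = x ^ L 1 := by rw [hlin, rpow_def_of_pos hx]

theorem exists_eq_rpow_of_map_mul_eq_mul {φ D : ℝ → ℝ} (hφ : ContinuousOn φ (Ioi 0))
    (hφ1 : φ 1 ≠ 0) (hD : ∀ γ, 0 < γ → 0 < D γ)
    (hscale : ∀ γ x, 0 < γ → 0 < x → φ (γ * x) = D γ * φ x) :
    ∃ ρ : ℝ, ∀ γ, 0 < γ → D γ = γ ^ ρ := by
  have hDφ : ∀ γ, 0 < γ → D γ = φ γ / φ 1 := fun γ hγ => by
    rw [eq_div_iff hφ1, ← hscale γ 1 hγ one_pos, mul_one]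
  refine exists_eq_rpow_of_map_mul ((hφ.div_const _).congr hDφ) hD fun x y hx hy => ?_
  apply mul_right_cancel₀ hφ1
  rw [← hscale _ _ (mul_pos hx hy) one_pos, mul_one, mul_assoc, ← hscale y 1 hy one_pos, mul_one,
    hscale x y hx hy]

theorem exists_eq_rpow_of_map_div_eq_mul {ψ D : ℝ → ℝ} (hψ : ContinuousOn ψ (Ioi 0))
    (hψ1 : ψ 1 ≠ 0) (hD : ∀ γ, 0 < γ → 0 < D γ)
    (hscale : ∀ γ x, 0 < γ → 0 < x → ψ (x / γ) = D γ * ψ x) :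
    ∃ ρ : ℝ, ∀ γ, 0 < γ → D γ = γ ^ ρ :=
  exists_eq_rpow_of_map_mul_eq_mul (φ := fun x => ψ x⁻¹)
    (hψ.comp (continuousOn_inv₀.mono fun _ hx => ne_of_gt hx) fun _ hx => mem_Ioi.2 (inv_pos.2 hx))
    (by simpa using hψ1) hD fun γ x hγ hx => by
      simpa only [mul_inv_rev, div_eq_mul_inv] using hscale γ x⁻¹ hγ (inv_pos.2 hx)

theorem stmt4 {N M : ℕ}
    (f : Fin M → ℝ → ℝ) (g : Fin N → ℝ → ℝ)
    (hfcont : ∀ j, ContinuousOn (f j) (Set.Ioi (0 : ℝ)))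
    (hgcont : ∀ i, ContinuousOn (g i) (Set.Ioi (0 : ℝ)))
    (hfpos : ∀ j x, 0 < x → 0 < f j x)
    (hgpos : ∀ i x, 0 < x → 0 < g i x) :
    (∀ γ : ℝ, 0 < γ → ∃ δ : ℝ, 0 < δ ∧
        (∀ j, ∀ x : ℝ, 0 < x → f j (γ * x) = δ * f j x) ∧
        (∀ i, ∀ x : ℝ, 0 < x → g i (x / γ) = δ * g i x))
    ↔ (∃ (ρ : ℝ) (α : Fin M → ℝ) (β : Fin N → ℝ),
        (∀ j, 0 < α j) ∧ (∀ i, 0 < β i) ∧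
        (∀ j, ∀ x : ℝ, 0 < x → f j x = α j * x ^ ρ) ∧
        (∀ i, ∀ x : ℝ, 0 < x → g i x = β i * x ^ (-ρ))) := by
  constructor
  · intro hyp
    choose! δ hδpos hδf hδg using hyp
    suffices ∃ ρ : ℝ, (Nonempty (Fin M) ∨ Nonempty (Fin N)) → ∀ γ, 0 < γ → δ γ = γ ^ ρ by
      obtain ⟨ρ, hρ⟩ := this
      refine ⟨ρ, fun j => f j 1, fun i => g i 1, fun j => hfpos j 1 one_pos,
        fun i => hgpos i 1 one_pos, fun j x hx => ?_, fun i x hx => ?_⟩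
      · have hfx := hδf x hx j 1 one_pos
        rw [mul_one] at hfx
        rw [hfx, hρ (.inl ⟨j⟩) x hx, mul_comm]
      · have hx' := inv_pos.2 hx
        have hgx := hδg x⁻¹ hx' i 1 one_pos
        rw [one_div, inv_inv] at hgx
        rw [hgx, hρ (.inr ⟨i⟩) _ hx', inv_rpow hx.le, ← rpow_neg hx.le, mul_comm]
    rcases isEmpty_or_nonempty (Fin M) with hM | ⟨⟨j⟩⟩
    · rcases isEmpty_or_nonempty (Fin N) with hN | ⟨⟨i⟩⟩
      · exact ⟨0, fun h => by simp [not_nonempty_iff.2 hM, not_nonempty_iff.2 hN] at h⟩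
      · obtain ⟨ρ, hρ⟩ := exists_eq_rpow_of_map_div_eq_mul (hgcont i) (hgpos i 1 one_pos).ne'
          hδpos fun γ x hγ hx => hδg γ hγ i x hx
        exact ⟨ρ, fun _ => hρ⟩
    · obtain ⟨ρ, hρ⟩ := exists_eq_rpow_of_map_mul_eq_mul (hfcont j) (hfpos j 1 one_pos).ne' hδpos
        fun γ x hγ hx => hδf γ hγ j x hx
      exact ⟨ρ, fun _ => hρ⟩
  · rintro ⟨ρ, α, β, -, -, hf, hg⟩ γ hγ
    refine ⟨γ ^ ρ, rpow_pos_of_pos hγ ρ, fun j x hx => ?_, fun i x hx => ?_⟩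
    · rw [hf j _ (mul_pos hγ hx), hf j x hx, mul_rpow hγ.le hx.le]
      ring
    · rw [hg i _ (div_pos hx hγ), hg i x hx, div_rpow hx.le hγ.le, rpow_neg hγ.le,
        div_inv_eq_mul]
      ring
end

section
/- Let p be a strictly positive N×M matrix of prices and q a quantity matrix. Consider the Geary–Khamis system: 1/PPP_j = Σ_{n=1}^N (p_{nj} q_{nj} / Σ_{n'=1}^N p_{n'j} q_{n'j}) · (P_n / p_{nj}) for j = 1,…,M and P_i = Σ_{m=1}^M (q_{im} / Σ_{m'=1}^M q_{im'}) · (p_{im} / PPP_m) for i = 1,…,N. Then a strictly positive solution (PPP, P), unique up to the rescaling (PPP, P) ↦ (γ·PPP, (1/γ)·P) for γ > 0, exists if and only if the quantity matrix q is connected. -/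
open Finset

/-- `(PPP, P)` solves the Geary–Khamis system for price matrix `p` and quantity matrix `q`. -/
def GKSol {N M : ℕ} (p q : Fin N → Fin M → ℝ) (PPP : Fin M → ℝ) (P : Fin N → ℝ) : Prop :=
  (∀ j, (PPP j)⁻¹ = ∑ n, (p n j * q n j / ∑ n', p n' j * q n' j) * (P n / p n j)) ∧
  (∀ i, P i = ∑ m, (q i m / ∑ m', q i m') * (p i m / PPP m))

namespace GKaux

variable {N M : ℕ}

noncomputable def Qr (q : Fin N → Fin M → ℝ) (i : Fin N) : ℝ := ∑ m, q i m
noncomputable def Vc (p q : Fin N → Fin M → ℝ) (m : Fin M) : ℝ := ∑ n, p n m * q n m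
noncomputable def Bm (p q : Fin N → Fin M → ℝ) : Matrix (Fin N) (Fin N) ℝ :=
  fun n i => (∑ m, p i m * q i m * q n m / Vc p q m) / Qr q n

variable {p q : Fin N → Fin M → ℝ}

lemma Qr_pos (hq0 : ∀ i j, 0 ≤ q i j) (hqrow : ∀ i, ∃ j, 0 < q i j) (i : Fin N) :
    0 < Qr q i := by
  obtain ⟨j, hj⟩ := hqrow i
  exact Finset.sum_pos' (fun m _ => hq0 i m) ⟨j, mem_univ j, hj⟩

lemma Vc_pos (hp : ∀ i j, 0 < p i j) (hq0 : ∀ i j, 0 ≤ q i j)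
    (hqcol : ∀ j, ∃ i, 0 < q i j) (m : Fin M) : 0 < Vc p q m := by
  obtain ⟨i, hi⟩ := hqcol m
  exact Finset.sum_pos' (fun n _ => mul_nonneg (hp n m).le (hq0 n m))
    ⟨i, mem_univ i, mul_pos (hp i m) hi⟩

lemma Bm_nonneg (hp : ∀ i j, 0 < p i j) (hq0 : ∀ i j, 0 ≤ q i j)
    (hqrow : ∀ i, ∃ j, 0 < q i j) (hqcol : ∀ j, ∃ i, 0 < q i j) (n i : Fin N) :
    0 ≤ Bm p q n i := by
  apply div_nonneg _ (Qr_pos hq0 hqrow n).le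
  exact Finset.sum_nonneg fun m _ => div_nonneg
    (mul_nonneg (mul_nonneg (hp i m).le (hq0 i m)) (hq0 n m)) (Vc_pos hp hq0 hqcol m).le

lemma Bm_pos (hp : ∀ i j, 0 < p i j) (hq0 : ∀ i j, 0 ≤ q i j)
    (hqrow : ∀ i, ∃ j, 0 < q i j) (hqcol : ∀ j, ∃ i, 0 < q i j) {n i : Fin N}
    (h : ∃ m, 0 < q i m ∧ 0 < q n m) : 0 < Bm p q n i := by
  obtain ⟨m, h1, h2⟩ := h
  apply div_pos _ (Qr_pos hq0 hqrow n)
  refine Finset.sum_pos' (fun m _ => div_nonneg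
    (mul_nonneg (mul_nonneg (hp i m).le (hq0 i m)) (hq0 n m)) (Vc_pos hp hq0 hqcol m).le)
    ⟨m, mem_univ m, ?_⟩
  exact div_pos (mul_pos (mul_pos (hp i m) h1) h2) (Vc_pos hp hq0 hqcol m)

lemma Bm_rowsum (hp : ∀ i j, 0 < p i j) (hq0 : ∀ i j, 0 ≤ q i j)
    (hqrow : ∀ i, ∃ j, 0 < q i j) (hqcol : ∀ j, ∃ i, 0 < q i j) (n : Fin N) :
    ∑ i, Bm p q n i = 1 := by
  have hVne : ∀ m, Vc p q m ≠ 0 := fun m => (Vc_pos hp hq0 hqcol m).ne'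
  have key : ∑ i, ∑ m, p i m * q i m * q n m / Vc p q m = Qr q n := by
    rw [Finset.sum_comm]
    have : ∀ m, ∑ i, p i m * q i m * q n m / Vc p q m = q n m := by
      intro m
      have : ∀ i, p i m * q i m * q n m / Vc p q m = (p i m * q i m) * (q n m / Vc p q m) := by
        intro i; ring
      rw [Finset.sum_congr rfl (fun i _ => this i), ← Finset.sum_mul]
      rw [mul_div_assoc'] at *
      exact mul_div_cancel_left₀ _ (hVne m)
    exact Finset.sum_congr rfl (fun m _ => this m)
  unfold Bm
  rw [← Finset.sum_div, key, div_self (Qr_pos hq0 hqrow n).ne']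



/-- A nonempty set of commodities closed under "sharing a country" is everything. -/
lemma closed_univ (hqrow : ∀ i, ∃ j, 0 < q i j) (hconn : QConnected q)
    (S : Finset (Fin N)) (hS : S.Nonempty)
    (hclosed : ∀ i ∈ S, ∀ n, (∃ m, 0 < q i m ∧ 0 < q n m) → n ∈ S) :
    S = Finset.univ := by
  set J : Finset (Fin M) := Finset.univ.filter (fun m => ∃ i ∈ S, 0 < q i m) with hJ
  have hJmem : ∀ m, m ∈ J ↔ ∃ i ∈ S, 0 < q i m := by
    intro m; simp [hJ]
  have hJne : J.Nonempty := by
    obtain ⟨i, hi⟩ := hS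
    obtain ⟨m, hm⟩ := hqrow i
    exact ⟨m, (hJmem m).2 ⟨i, hi, hm⟩⟩
  by_cases hJu : J = Finset.univ
  · -- every country is touched by S, hence every commodity is in S
    apply Finset.eq_univ_of_forall
    intro n
    obtain ⟨m, hm⟩ := hqrow n
    have : m ∈ J := hJu ▸ mem_univ m
    obtain ⟨i, hiS, hip⟩ := (hJmem m).1 this
    exact hclosed i hiS n ⟨m, hip, hm⟩
  · exfalso
    obtain ⟨j, hjJ, l, hlJ, k, hkj, hkl⟩ := hconn J hJne hJu
    obtain ⟨i, hiS, hij⟩ := (hJmem j).1 hjJ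
    have hkS : k ∈ S := hclosed i hiS k ⟨j, hij, hkj⟩
    exact hlJ ((hJmem l).2 ⟨k, hkS, hkl⟩)

/-- zero propagation: a nonnegative fixed vector of Bᵀ with a zero entry is zero. -/
lemma fixed_zero (hp : ∀ i j, 0 < p i j) (hq0 : ∀ i j, 0 ≤ q i j)
    (hqrow : ∀ i, ∃ j, 0 < q i j) (hqcol : ∀ j, ∃ i, 0 < q i j)
    (hconn : QConnected q) {y : Fin N → ℝ}
    (hfix : ∀ i, y i = ∑ n, Bm p q n i * y n) (hy0 : ∀ i, 0 ≤ y i)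
    {i0 : Fin N} (hz : y i0 = 0) : ∀ i, y i = 0 := by
  set S : Finset (Fin N) := Finset.univ.filter (fun i => y i = 0) with hS
  have hSmem : ∀ i, i ∈ S ↔ y i = 0 := by intro i; simp [hS]
  have : S = Finset.univ := by
    apply closed_univ hqrow hconn S ⟨i0, (hSmem i0).2 hz⟩
    intro i hiS n hR
    have hyi : y i = 0 := (hSmem i).1 hiS
    -- from y i = ∑ B n i * y n = 0 with nonneg terms, each term is 0
    have hterms : ∀ n, Bm p q n i * y n = 0 := by
      have hsum : ∑ n, Bm p q n i * y n = 0 := by rw [← hfix i, hyi]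
      have hnn : ∀ n ∈ Finset.univ, 0 ≤ Bm p q n i * y n := fun n _ =>
        mul_nonneg (Bm_nonneg hp hq0 hqrow hqcol n i) (hy0 n)
      intro n
      exact (Finset.sum_eq_zero_iff_of_nonneg hnn).1 hsum n (mem_univ n)
    have hB : 0 < Bm p q n i := by
      obtain ⟨m, h1, h2⟩ := hR
      exact Bm_pos hp hq0 hqrow hqcol ⟨m, h1, h2⟩
    have := hterms n
    rcases mul_eq_zero.1 this with h | h
    · exact absurd h hB.ne'
    · exact (hSmem n).2 h
  intro i
  exact (hSmem i).1 (this ▸ mem_univ i)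

/-- Existence of a strictly positive fixed vector of Bᵀ. -/
lemma exists_pos_fixed (hN : 0 < N) (hp : ∀ i j, 0 < p i j) (hq0 : ∀ i j, 0 ≤ q i j)
    (hqrow : ∀ i, ∃ j, 0 < q i j) (hqcol : ∀ j, ∃ i, 0 < q i j)
    (hconn : QConnected q) :
    ∃ y : Fin N → ℝ, (∀ i, 0 < y i) ∧ (∀ i, y i = ∑ n, Bm p q n i * y n) := by
  haveI : Nonempty (Fin N) := ⟨⟨0, hN⟩⟩
  -- (B - 1) kills the all-ones vector, hence has det 0, hence so does its transpose
  set A : Matrix (Fin N) (Fin N) ℝ := Bm p q - 1 with hA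
  have hones : A.mulVec (fun _ => (1 : ℝ)) = 0 := by
    funext n
    simp only [hA, Matrix.sub_mulVec, Matrix.mulVec, dotProduct, Pi.sub_apply]
    simp only [Matrix.sub_apply, Matrix.one_apply, sub_mul, mul_one, Pi.zero_apply]
    rw [Finset.sum_sub_distrib, Bm_rowsum hp hq0 hqrow hqcol n]
    simp
  have hdet : A.det = 0 := by
    rw [← Matrix.exists_mulVec_eq_zero_iff]
    exact ⟨(fun _ => (1:ℝ)), fun h => one_ne_zero (congrFun h (Classical.arbitrary _)), hones⟩
  have hdetT : A.transpose.det = 0 := by rw [Matrix.det_transpose]; exact hdet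
  obtain ⟨v, hv0, hv⟩ := (Matrix.exists_mulVec_eq_zero_iff).2 hdetT
  -- v is a fixed vector of Bᵀ
  have hfixv : ∀ i, v i = ∑ n, Bm p q n i * v n := by
    intro i
    have := congrFun hv i
    simp only [hA, Matrix.transpose_sub, Matrix.sub_mulVec, Matrix.transpose_one,
      Matrix.one_mulVec, Pi.sub_apply, Pi.zero_apply, sub_eq_zero] at this
    rw [← this]
    simp [Matrix.mulVec, dotProduct, Matrix.transpose_apply]
  -- |v| is also fixed
  set z : Fin N → ℝ := fun i => |v i| with hzdef
  have hle : ∀ i, z i ≤ ∑ n, Bm p q n i * z n := by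
    intro i
    calc z i = |∑ n, Bm p q n i * v n| := by rw [hzdef]; simp only [← hfixv i]
    _ ≤ ∑ n, |Bm p q n i * v n| := Finset.abs_sum_le_sum_abs _ _
    _ = ∑ n, Bm p q n i * z n := by
        refine Finset.sum_congr rfl fun n _ => ?_
        rw [abs_mul, abs_of_nonneg (Bm_nonneg hp hq0 hqrow hqcol n i)]
  have hsums : ∑ i, (∑ n, Bm p q n i * z n) = ∑ i, z i := by
    rw [Finset.sum_comm]
    refine Finset.sum_congr rfl fun n _ => ?_
    rw [← Finset.sum_mul, Bm_rowsum hp hq0 hqrow hqcol n, one_mul]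
  have hfixz : ∀ i, z i = ∑ n, Bm p q n i * z n := by
    by_contra hcon
    push_neg at hcon
    obtain ⟨i1, hi1⟩ := hcon
    have hlt : z i1 < ∑ n, Bm p q n i1 * z n := lt_of_le_of_ne (hle i1) hi1
    have : ∑ i, z i < ∑ i, (∑ n, Bm p q n i * z n) :=
      Finset.sum_lt_sum (fun i _ => hle i) ⟨i1, mem_univ i1, hlt⟩
    rw [hsums] at this
    exact lt_irrefl _ this
  have hz0 : ∀ i, 0 ≤ z i := fun i => abs_nonneg _
  -- z is strictly positive
  have hzpos : ∀ i, 0 < z i := by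
    intro i
    rcases lt_or_eq_of_le (hz0 i) with h | h
    · exact h
    · exfalso
      have hall := fixed_zero hp hq0 hqrow hqcol hconn hfixz hz0 h.symm
      apply hv0
      funext n
      have := hall n
      rw [hzdef] at this
      exact abs_eq_zero.1 this
  exact ⟨z, hzpos, hfixz⟩

/-- Uniqueness up to scaling of positive fixed vectors. -/
lemma fixed_unique (hN : 0 < N) (hp : ∀ i j, 0 < p i j) (hq0 : ∀ i j, 0 ≤ q i j)
    (hqrow : ∀ i, ∃ j, 0 < q i j) (hqcol : ∀ j, ∃ i, 0 < q i j)
    (hconn : QConnected q) {y y' : Fin N → ℝ}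
    (hy : ∀ i, 0 < y i) (hy' : ∀ i, 0 < y' i)
    (hfix : ∀ i, y i = ∑ n, Bm p q n i * y n)
    (hfix' : ∀ i, y' i = ∑ n, Bm p q n i * y' n) :
    ∃ c : ℝ, 0 < c ∧ ∀ i, y' i = c * y i := by
  haveI : Nonempty (Fin N) := ⟨⟨0, hN⟩⟩
  obtain ⟨i0, -, hi0⟩ := Finset.exists_min_image Finset.univ (fun i => y' i / y i)
    Finset.univ_nonempty
  set c : ℝ := y' i0 / y i0 with hc
  have hcpos : 0 < c := div_pos (hy' i0) (hy i0)
  set z : Fin N → ℝ := fun i => y' i - c * y i with hzdef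
  have hz0 : ∀ i, 0 ≤ z i := by
    intro i
    have h1 : c ≤ y' i / y i := hi0 i (mem_univ i)
    have := (div_le_div_iff₀ (hy i0) (hy i)).1 h1
    simp only [hzdef]
    rw [sub_nonneg, hc]
    rw [div_mul_eq_mul_div, div_le_iff₀ (hy i0)]
    linarith [this]
  have hfixz : ∀ i, z i = ∑ n, Bm p q n i * z n := by
    intro i
    simp only [hzdef, mul_sub]
    rw [Finset.sum_sub_distrib, ← hfix' i]
    congr 1
    rw [hfix i, Finset.mul_sum]
    refine Finset.sum_congr rfl fun n _ => by ring
  have hzi0 : z i0 = 0 := by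
    simp only [hzdef, hc]
    rw [div_mul_cancel₀ _ (hy i0).ne', sub_self]
  have hall := fixed_zero hp hq0 hqrow hqcol hconn hfixz hz0 hzi0
  refine ⟨c, hcpos, fun i => ?_⟩
  have := hall i
  simp only [hzdef, sub_eq_zero] at this
  exact this

/-- key double-sum exchange identity. -/
lemma sum_swap_id (hq0 : ∀ i j, 0 ≤ q i j) (hqrow : ∀ i, ∃ j, 0 < q i j)
    (i : Fin N) (P : Fin N → ℝ) :
    ∑ m, (p i m * q i m / Vc p q m) * (∑ n, q n m * P n)
      = ∑ n, Bm p q n i * (Qr q n * P n) := by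
  have h1 : ∀ m, (p i m * q i m / Vc p q m) * (∑ n, q n m * P n)
      = ∑ n, (p i m * q i m * q n m / Vc p q m) * P n := by
    intro m
    rw [Finset.mul_sum]
    refine Finset.sum_congr rfl fun n _ => by ring
  rw [Finset.sum_congr rfl (fun m _ => h1 m), Finset.sum_comm]
  refine Finset.sum_congr rfl fun n _ => ?_
  rw [← Finset.sum_mul]
  show (∑ m, p i m * q i m * q n m / Vc p q m) * P n = Bm p q n i * (Qr q n * P n)
  unfold Bm
  rw [div_mul_eq_mul_div, mul_comm (Qr q n) (P n), ← mul_assoc, mul_comm _ (P n),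
    mul_assoc, mul_div_assoc, mul_div_cancel_right₀ _ (Qr_pos hq0 hqrow n).ne', mul_comm]

/-- A positive GK solution gives a positive fixed vector `y i = Qr i * P i`. -/
lemma gk_to_fixed (hp : ∀ i j, 0 < p i j) (hq0 : ∀ i j, 0 ≤ q i j)
    (hqrow : ∀ i, ∃ j, 0 < q i j) (hqcol : ∀ j, ∃ i, 0 < q i j)
    {PPP : Fin M → ℝ} {P : Fin N → ℝ}
    (hPPP : ∀ j, 0 < PPP j) (hsol : GKSol p q PPP P) :
    (∀ m, (PPP m)⁻¹ = (∑ n, q n m * P n) / Vc p q m) ∧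
    (∀ i, Qr q i * P i = ∑ n, Bm p q n i * (Qr q n * P n)) := by
  have hVne : ∀ m, (Vc p q m) ≠ 0 := fun m => (Vc_pos hp hq0 hqcol m).ne'
  have step1 : ∀ m, (PPP m)⁻¹ = (∑ n, q n m * P n) / Vc p q m := by
    intro m
    rw [hsol.1 m]
    rw [Finset.sum_div]
    refine Finset.sum_congr rfl fun n _ => ?_
    show p n m * q n m / Vc p q m * (P n / p n m) = q n m * P n / Vc p q m
    have hpne := (hp n m).ne'
    have hVm := hVne m
    field_simp
  refine ⟨step1, fun i => ?_⟩
  have lhs : Qr q i * P i = ∑ m, (p i m * q i m / Vc p q m) * (∑ n, q n m * P n) := by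
    rw [hsol.2 i, Finset.mul_sum]
    refine Finset.sum_congr rfl fun m _ => ?_
    show Qr q i * (q i m / Qr q i * (p i m / PPP m)) = _
    rw [div_eq_mul_inv (p i m) (PPP m), step1 m]
    have hQne := (Qr_pos hq0 hqrow i).ne'
    have hVm := hVne m
    field_simp
  rw [lhs, sum_swap_id hq0 hqrow i P]

/-- Conversely, a positive fixed vector yields a positive GK solution. -/
lemma fixed_to_gk (hp : ∀ i j, 0 < p i j) (hq0 : ∀ i j, 0 ≤ q i j)
    (hqrow : ∀ i, ∃ j, 0 < q i j) (hqcol : ∀ j, ∃ i, 0 < q i j)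
    {y : Fin N → ℝ} (hy : ∀ i, 0 < y i) (hfix : ∀ i, y i = ∑ n, Bm p q n i * y n) :
    ∃ (PPP : Fin M → ℝ) (P : Fin N → ℝ),
      (∀ j, 0 < PPP j) ∧ (∀ i, 0 < P i) ∧ GKSol p q PPP P ∧
      (∀ i, P i = y i / Qr q i) := by
  set P : Fin N → ℝ := fun i => y i / Qr q i with hPdef
  have hPpos : ∀ i, 0 < P i := fun i => div_pos (hy i) (Qr_pos hq0 hqrow i)
  set D : Fin M → ℝ := fun m => ∑ n, q n m * P n with hDdef
  have hDpos : ∀ m, 0 < D m := by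
    intro m
    obtain ⟨i, hi⟩ := hqcol m
    exact Finset.sum_pos' (fun n _ => mul_nonneg (hq0 n m) (hPpos n).le)
      ⟨i, mem_univ i, mul_pos hi (hPpos i)⟩
  set PPP : Fin M → ℝ := fun m => Vc p q m / D m with hPPPdef
  have hPPPpos : ∀ m, 0 < PPP m := fun m => div_pos (Vc_pos hp hq0 hqcol m) (hDpos m)
  have hPPPinv : ∀ m, (PPP m)⁻¹ = D m / Vc p q m := by
    intro m; rw [hPPPdef]; exact inv_div _ _
  refine ⟨PPP, P, hPPPpos, hPpos, ⟨?_, ?_⟩, fun i => rfl⟩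
  · intro j
    rw [hPPPinv j]
    show D j / Vc p q j = ∑ n, (p n j * q n j / Vc p q j) * (P n / p n j)
    rw [hDdef]
    show (∑ n, q n j * P n) / Vc p q j = _
    rw [Finset.sum_div]
    refine Finset.sum_congr rfl fun n _ => ?_
    have hpne := (hp n j).ne'
    have hVj := (Vc_pos hp hq0 hqcol j).ne'
    field_simp
  · intro i
    have hQne := (Qr_pos hq0 hqrow i).ne'
    have key : ∑ m, (q i m / Qr q i) * (p i m / PPP m)
        = (∑ m, (p i m * q i m / Vc p q m) * D m) / Qr q i := by
      rw [Finset.sum_div]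
      refine Finset.sum_congr rfl fun m _ => ?_
      rw [div_eq_mul_inv (p i m) (PPP m), hPPPinv m]
      have hVm := (Vc_pos hp hq0 hqcol m).ne'
      field_simp
    show P i = ∑ m, (q i m / Qr q i) * (p i m / PPP m)
    rw [key, hDdef]
    show P i = (∑ m, (p i m * q i m / Vc p q m) * (∑ n, q n m * P n)) / Qr q i
    rw [sum_swap_id hq0 hqrow i P]
    have : ∀ n, Bm p q n i * (Qr q n * P n) = Bm p q n i * y n := by
      intro n
      rw [hPdef]
      show Bm p q n i * (Qr q n * (y n / Qr q n)) = _
      rw [mul_div_cancel₀ _ (Qr_pos hq0 hqrow n).ne']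
    rw [Finset.sum_congr rfl (fun n _ => this n), ← hfix i]

end GKaux

theorem stmt6 {N M : ℕ} (hN : 0 < N) (hM : 0 < M)
    (p q : Fin N → Fin M → ℝ)
    (hp : ∀ i j, 0 < p i j)
    (hq0 : ∀ i j, 0 ≤ q i j)
    (hqrow : ∀ i, ∃ j, 0 < q i j)
    (hqcol : ∀ j, ∃ i, 0 < q i j) :
    ((∃ (PPP : Fin M → ℝ) (P : Fin N → ℝ),
        (∀ j, 0 < PPP j) ∧ (∀ i, 0 < P i) ∧ GKSol p q PPP P) ∧
      (∀ (PPP PPP' : Fin M → ℝ) (P P' : Fin N → ℝ),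
        (∀ j, 0 < PPP j) → (∀ i, 0 < P i) → GKSol p q PPP P →
        (∀ j, 0 < PPP' j) → (∀ i, 0 < P' i) → GKSol p q PPP' P' →
        ∃ γ : ℝ, 0 < γ ∧ (∀ j, PPP' j = γ * PPP j) ∧ (∀ i, P' i = γ⁻¹ * P i)))
    ↔ QConnected q := by
  constructor
  · -- solvable+unique → connected
    rintro ⟨⟨PPP, P, hPPPpos, hPpos, hsol⟩, huniq⟩
    intro J hJne hJneq
    by_contra hno
    push_neg at hno
    -- the set of commodities present in J
    set K : Finset (Fin N) := Finset.univ.filter (fun k => ∃ j ∈ J, 0 < q k j) with hK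
    have hKmem : ∀ k, k ∈ K ↔ ∃ j ∈ J, 0 < q k j := by intro k; simp [hK]
    have fA : ∀ k j, j ∈ J → 0 < q k j → k ∈ K := fun k j hj hq => (hKmem k).2 ⟨j, hj, hq⟩
    have fB : ∀ k j, j ∉ J → 0 < q k j → k ∉ K := by
      intro k j hj hq hk
      obtain ⟨j', hj', hq'⟩ := (hKmem k).1 hk
      exact absurd hq (not_lt.2 (hno j' hj' j hj k hq'))
    have fC : ∀ k m, k ∈ K → 0 < q k m → m ∈ J := by
      intro k m hk hq
      by_contra hm
      obtain ⟨j', hj', hq'⟩ := (hKmem k).1 hk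
      exact absurd hq (not_lt.2 (hno j' hj' m hm k hq'))
    have fD : ∀ k m, k ∉ K → 0 < q k m → m ∉ J := by
      intro k m hk hq hm
      exact hk (fA k m hm hq)
    -- the rescaled second solution
    set PPP' : Fin M → ℝ := fun j => if j ∈ J then 2 * PPP j else PPP j with hPPP'
    set P' : Fin N → ℝ := fun i => if i ∈ K then P i / 2 else P i with hP'
    have hPPP'pos : ∀ j, 0 < PPP' j := by
      intro j; rw [hPPP']
      by_cases h : j ∈ J <;> simp [h, hPPPpos j] <;> positivity
    have hP'pos : ∀ i, 0 < P' i := by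
      intro i; rw [hP']
      by_cases h : i ∈ K <;> simp [h, hPpos i] <;> positivity
    have hsol' : GKSol p q PPP' P' := by
      constructor
      · intro j
        by_cases hj : j ∈ J
        · have hterm : ∀ n, (p n j * q n j / ∑ n', p n' j * q n' j) * (P' n / p n j)
              = (p n j * q n j / ∑ n', p n' j * q n' j) * (P n / p n j) / 2 := by
            intro n
            rcases (hq0 n j).lt_or_eq with hq | hq
            · have : n ∈ K := fA n j hj hq
              simp only [hP', if_pos this]
              ring
            · rw [← hq]
              simp
          have h1 : PPP' j = 2 * PPP j := by simp only [hPPP']; rw [if_pos hj]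
          rw [h1, Finset.sum_congr rfl (fun n _ => hterm n), ← Finset.sum_div,
            ← hsol.1 j, mul_inv]
          ring
        · have hterm : ∀ n, (p n j * q n j / ∑ n', p n' j * q n' j) * (P' n / p n j)
              = (p n j * q n j / ∑ n', p n' j * q n' j) * (P n / p n j) := by
            intro n
            rcases (hq0 n j).lt_or_eq with hq | hq
            · have : n ∉ K := fB n j hj hq
              simp only [hP', if_neg this]
            · rw [← hq]; simp
          have h1 : PPP' j = PPP j := by simp only [hPPP']; rw [if_neg hj]
          rw [h1, Finset.sum_congr rfl (fun n _ => hterm n), ← hsol.1 j]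
      · intro i
        by_cases hi : i ∈ K
        · have hterm : ∀ m, (q i m / ∑ m', q i m') * (p i m / PPP' m)
              = (q i m / ∑ m', q i m') * (p i m / PPP m) / 2 := by
            intro m
            rcases (hq0 i m).lt_or_eq with hq | hq
            · have hm : m ∈ J := fC i m hi hq
              simp only [hPPP', if_pos hm]
              have := (hPPPpos m).ne'
              field_simp
            · rw [← hq]; simp
          have h1 : P' i = P i / 2 := by simp only [hP']; rw [if_pos hi]
          rw [h1, Finset.sum_congr rfl (fun m _ => hterm m), ← Finset.sum_div, ← hsol.2 i]
        · have hterm : ∀ m, (q i m / ∑ m', q i m') * (p i m / PPP' m)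
              = (q i m / ∑ m', q i m') * (p i m / PPP m) := by
            intro m
            rcases (hq0 i m).lt_or_eq with hq | hq
            · have hm : m ∉ J := fD i m hi hq
              simp only [hPPP', if_neg hm]
            · rw [← hq]; simp
          have h1 : P' i = P i := by simp only [hP']; rw [if_neg hi]
          rw [h1, Finset.sum_congr rfl (fun m _ => hterm m), ← hsol.2 i]
    obtain ⟨γ, hγpos, hγPPP, hγP⟩ :=
      huniq PPP PPP' P P' hPPPpos hPpos hsol hPPP'pos hP'pos hsol'
    obtain ⟨j1, hj1⟩ := hJne
    obtain ⟨l1, hl1⟩ : ∃ l, l ∉ J := by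
      by_contra hall
      push_neg at hall
      exact hJneq (Finset.eq_univ_iff_forall.2 hall)
    have e1 : 2 * PPP j1 = γ * PPP j1 := by
      have h := hγPPP j1
      simp only [hPPP'] at h
      rwa [if_pos hj1] at h
    have e2 : PPP l1 = γ * PPP l1 := by
      have h := hγPPP l1
      simp only [hPPP'] at h
      rwa [if_neg hl1] at h
    have hγ2 : γ = 2 := by
      have := mul_right_cancel₀ (hPPPpos j1).ne' e1
      linarith
    have hγ1 : γ = 1 := by
      have : 1 * PPP l1 = γ * PPP l1 := by rw [one_mul]; exact e2
      have := mul_right_cancel₀ (hPPPpos l1).ne' this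
      linarith
    rw [hγ2] at hγ1
    norm_num at hγ1
  · -- connected → solvable + unique
    intro hconn
    constructor
    · obtain ⟨y, hy, hfix⟩ := GKaux.exists_pos_fixed hN hp hq0 hqrow hqcol hconn
      obtain ⟨PPP, P, h1, h2, h3, _⟩ := GKaux.fixed_to_gk hp hq0 hqrow hqcol hy hfix
      exact ⟨PPP, P, h1, h2, h3⟩
    · intro PPP PPP' P P' hPPP hP hsol hPPP' hP' hsol'
      obtain ⟨hstep1, hfixy⟩ := GKaux.gk_to_fixed hp hq0 hqrow hqcol hPPP hsol
      obtain ⟨hstep1', hfixy'⟩ := GKaux.gk_to_fixed hp hq0 hqrow hqcol hPPP' hsol'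
      have hypos : ∀ i, 0 < GKaux.Qr q i * P i :=
        fun i => mul_pos (GKaux.Qr_pos hq0 hqrow i) (hP i)
      have hypos' : ∀ i, 0 < GKaux.Qr q i * P' i :=
        fun i => mul_pos (GKaux.Qr_pos hq0 hqrow i) (hP' i)
      obtain ⟨c, hc, hcy⟩ := GKaux.fixed_unique hN hp hq0 hqrow hqcol hconn
        hypos hypos' hfixy hfixy'
      have hPc : ∀ i, P' i = c * P i := by
        intro i
        have h := hcy i
        have hQ := (GKaux.Qr_pos hq0 hqrow i).ne'
        have h2 : GKaux.Qr q i * P' i = GKaux.Qr q i * (c * P i) := by rw [h]; ring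
        exact mul_left_cancel₀ hQ h2
      refine ⟨c⁻¹, inv_pos.2 hc, fun j => ?_, fun i => by rw [inv_inv]; exact hPc i⟩
      have hinv : (PPP' j)⁻¹ = c * (PPP j)⁻¹ := by
        rw [hstep1 j, hstep1' j]
        have : ∀ n, q n j * P' n = c * (q n j * P n) := by
          intro n; rw [hPc n]; ring
        rw [Finset.sum_congr rfl (fun n _ => this n), ← Finset.mul_sum, mul_div_assoc]
      have := congrArg (fun x => x⁻¹) hinv
      simp only [mul_inv, inv_inv] at this
      rw [this]
end

section
/- Let p be a strictly positive N×M matrix of prices, q a quantity matrix, and β_1,…,β_M strictly positive constants. Consider the generalized Geary–Khamis system: 1/PPP_j = Σ_{n=1}^N (p_{nj} q_{nj} / Σ_{n'=1}^N p_{n'j} q_{n'j}) · (P_n / p_{nj}) for j = 1,…,M and P_i = Σ_{m=1}^M (β_m q_{im} / Σ_{m'=1}^M β_{m'} q_{im'}) · (p_{im} / PPP_m) for i = 1,…,N. Then a strictly positive solution (PPP, P), unique up to the rescaling (PPP, P) ↦ (γ·PPP, (1/γ)·P) for γ > 0, exists if and only if the quantity matrix q is connected. -/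
/-!
Put `z_j = β_j V_j / PPP_j`, where `V_j = ∑ₙ p_{nj} q_{nj}`. Eliminating `P` with the second
equation, the first one says exactly that `z` is a fixed vector of a nonnegative matrix `T`
whose columns sum to one and with `T_{jm} > 0` iff the countries `j` and `m` share a commodity.
So the theorem is a Perron–Frobenius statement: such a `T` has a positive fixed vector, unique up
to scaling, iff no nonempty proper set of countries is closed under the positive entries of `T`.

Since `1ᵀ T = 1ᵀ`, `T - 1` is singular; the absolute value of a kernel vector is subinvariant, and
`T` preserves sums, so it is a fixed vector. A nonnegative fixed vector that vanishes somewhere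
vanishes on a closed set, which gives positivity and, applied to `z' - c z` with `c = min z'/z`,
uniqueness. Conversely, the support of `T` is symmetric, so a closed set `J` has a closed complement
and the restriction of a fixed vector to `J` is again fixed.
-/

open Finset

/-- `(PPP, P)` solves the generalized Geary–Khamis system with country weights `β`. -/
def GGKSol {N M : ℕ} (p q : Fin N → Fin M → ℝ) (β : Fin M → ℝ)
    (PPP : Fin M → ℝ) (P : Fin N → ℝ) : Prop :=
  (∀ j, (PPP j)⁻¹ = ∑ n, (p n j * q n j / ∑ n', p n' j * q n' j) * (P n / p n j)) ∧
  (∀ i, P i = ∑ m, (β m * q i m / ∑ m', β m' * q i m') * (p i m / PPP m))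

open Matrix

namespace Matrix

variable {ι : Type*} [Fintype ι] {T : Matrix ι ι ℝ}

def IsCutIrreducible (T : Matrix ι ι ℝ) : Prop :=
  ∀ J : Finset ι, J.Nonempty → J ≠ univ → ∃ j ∈ J, ∃ l ∉ J, 0 < T j l

theorem pos_of_mulVec_eq_self (hT : ∀ i j, 0 ≤ T i j) (hirr : T.IsCutIrreducible)
    {z : ι → ℝ} (hz0 : 0 ≤ z) (hTz : T *ᵥ z = z) (hz : z ≠ 0) (i : ι) : 0 < z i := by
  classical
  by_contra hi
  set Z := univ.filter fun m => z m = 0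
  have hZne : Z.Nonempty := ⟨i, by simpa [Z] using le_antisymm (not_lt.mp hi) (hz0 i)⟩
  have hZ : Z ≠ univ := fun h => hz <| funext fun m => by
    have hm : m ∈ Z := h ▸ mem_univ m
    simpa [Z] using hm
  obtain ⟨j, hj, l, hl, hjl⟩ := hirr Z hZne hZ
  have hzl : 0 < z l := (hz0 l).lt_of_ne (by simpa [Z, eq_comm] using hl)
  have hTzj : 0 < (T *ᵥ z) j :=
    sum_pos' (fun m _ => mul_nonneg (hT j m) (hz0 m)) ⟨l, mem_univ l, mul_pos hjl hzl⟩
  simp only [hTz, Z, mem_filter] at hTzj hj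
  exact hTzj.ne' hj.2

theorem exists_pos_smul_of_mulVec_eq_self (hT : ∀ i j, 0 ≤ T i j) (hirr : T.IsCutIrreducible)
    {z z' : ι → ℝ} (hz : ∀ i, 0 < z i) (hTz : T *ᵥ z = z)
    (hz' : ∀ i, 0 < z' i) (hTz' : T *ᵥ z' = z') : ∃ c : ℝ, 0 < c ∧ z' = c • z := by
  rcases isEmpty_or_nonempty ι with hι | hι
  · exact ⟨1, one_pos, Subsingleton.elim _ _⟩
  obtain ⟨i₀, -, hmin⟩ := univ.exists_min_image (fun i => z' i / z i) univ_nonempty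
  set c := z' i₀ / z i₀
  refine ⟨c, div_pos (hz' i₀) (hz i₀), ?_⟩
  have hw0 : 0 ≤ z' - c • z := fun i => by
    have := (le_div_iff₀ (hz i)).mp (hmin i (mem_univ i))
    simp only [Pi.zero_apply, Pi.sub_apply, Pi.smul_apply, smul_eq_mul]
    linarith
  have hTw : T *ᵥ (z' - c • z) = z' - c • z := by rw [mulVec_sub, mulVec_smul, hTz, hTz']
  by_contra hne
  have := pos_of_mulVec_eq_self hT hirr hw0 hTw (sub_ne_zero.mpr hne) i₀
  simp [c, div_mul_cancel₀ _ (hz i₀).ne'] at this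

theorem exists_pos_mulVec_eq_self [DecidableEq ι] (hT : T ∈ colStochastic ℝ ι)
    (hirr : T.IsCutIrreducible) : ∃ z, (∀ i, 0 < z i) ∧ T *ᵥ z = z := by
  rcases isEmpty_or_nonempty ι with hι | hι
  · exact ⟨0, isEmptyElim, Subsingleton.elim _ _⟩
  have hdet : (T - 1).det = 0 := exists_vecMul_eq_zero_iff.mp
    ⟨1, one_ne_zero, by rw [vecMul_sub, one_vecMul_of_mem_colStochastic hT, vecMul_one, sub_self]⟩
  obtain ⟨v, hv0, hv⟩ := exists_mulVec_eq_zero_iff.mpr hdet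
  rw [sub_mulVec, one_mulVec, sub_eq_zero] at hv
  have hle : ∀ i ∈ univ, |v| i ≤ (T *ᵥ |v|) i := fun i _ => calc
    |v| i = |∑ m, T i m * v m| := by rw [Pi.abs_apply, ← congrFun hv i]; rfl
    _ ≤ ∑ m, |T i m * v m| := abs_sum_le_sum_abs _ _
    _ = (T *ᵥ |v|) i := by simp [mulVec, dotProduct, abs_mul, abs_of_nonneg (hT.1 _ _)]
  have hfix : T *ᵥ |v| = |v| := funext fun i =>
    ((sum_eq_sum_iff_of_le hle).mp (sum_mulVec_of_mem_colStochastic hT).symm i (mem_univ i)).symm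
  exact ⟨|v|, pos_of_mulVec_eq_self hT.1 hirr (abs_nonneg v) hfix (by simpa using hv0), hfix⟩

theorem exists_pos_mulVec_eq_self_ne_smul (hT : ∀ i j, 0 ≤ T i j)
    (hsymm : ∀ i j, 0 < T i j → 0 < T j i) (hred : ¬ T.IsCutIrreducible)
    {z : ι → ℝ} (hz : ∀ i, 0 < z i) (hTz : T *ᵥ z = z) :
    ∃ z', (∀ i, 0 < z' i) ∧ T *ᵥ z' = z' ∧ ∀ c : ℝ, z' ≠ c • z := by
  classical
  simp only [IsCutIrreducible, not_forall, not_exists, not_and, not_lt] at hred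
  obtain ⟨J, ⟨j, hj⟩, hJ, hclosed⟩ := hred
  obtain ⟨l, hl⟩ : ∃ l, l ∉ J := by simpa [eq_univ_iff_forall] using hJ
  have hzero : ∀ i m, (i ∈ J ↔ m ∉ J) → T i m = 0 := fun i m him => by
    by_cases hi : i ∈ J
    · exact le_antisymm (hclosed i hi m (him.mp hi)) (hT i m)
    · have hm : m ∈ J := by by_contra hm; exact hi (him.mpr hm)
      refine le_antisymm (not_lt.mp fun h => ?_) (hT i m)
      linarith [hclosed m hm i hi, hsymm i m h]
  set y : ι → ℝ := fun i => if i ∈ J then z i else 0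
  have hTy : T *ᵥ y = y := funext fun i => by
    simp only [mulVec, dotProduct]
    by_cases hi : i ∈ J
    · calc ∑ m, T i m * y m = ∑ m, T i m * z m := sum_congr rfl fun m _ => by
            by_cases hm : m ∈ J
            · simp [y, hm]
            · simp [y, hm, hzero i m (by tauto)]
        _ = y i := by simpa [y, hi, mulVec, dotProduct] using congrFun hTz i
    · refine (sum_eq_zero fun m _ => ?_).trans (by simp [y, hi])
      by_cases hm : m ∈ J
      · simp [hzero i m (by tauto)]
      · simp [y, hm]
  refine ⟨z + y, fun i => ?_, by rw [mulVec_add, hTz, hTy], fun c hc => ?_⟩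
  · have := hz i
    by_cases hi : i ∈ J <;> simp [y, hi] <;> linarith
  · have h₁ := congrFun hc j
    have h₂ := congrFun hc l
    simp only [y, Pi.add_apply, Pi.smul_apply, smul_eq_mul, if_pos hj, if_neg hl] at h₁ h₂
    have hc₂ : (2 : ℝ) = c := mul_right_cancel₀ (hz j).ne' (by linarith)
    have hc₁ : (1 : ℝ) = c := mul_right_cancel₀ (hz l).ne' (by linarith)
    linarith

theorem exists_unique_pos_fixed_iff_isCutIrreducible [DecidableEq ι]
    (hT : T ∈ colStochastic ℝ ι) (hsymm : ∀ i j, 0 < T i j → 0 < T j i) :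
    ((∃ z, (∀ i, 0 < z i) ∧ T *ᵥ z = z) ∧
      ∀ z z' : ι → ℝ, (∀ i, 0 < z i) → T *ᵥ z = z → (∀ i, 0 < z' i) → T *ᵥ z' = z' →
        ∃ c : ℝ, 0 < c ∧ z' = c • z) ↔ T.IsCutIrreducible := by
  refine ⟨fun ⟨⟨z, hz, hTz⟩, hunique⟩ => ?_, fun hirr => ⟨exists_pos_mulVec_eq_self hT hirr,
    fun z z' hz hTz hz' hTz' => exists_pos_smul_of_mulVec_eq_self hT.1 hirr hz hTz hz' hTz'⟩⟩
  by_contra hred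
  obtain ⟨z', hz', hTz', hne⟩ := exists_pos_mulVec_eq_self_ne_smul hT.1 hsymm hred hz hTz
  obtain ⟨c, -, hc⟩ := hunique z z' hz hTz hz' hTz'
  exact hne c hc

end Matrix

namespace GearyKhamis

variable {N M : ℕ} (p q : Fin N → Fin M → ℝ) (β : Fin M → ℝ)

def value (j : Fin M) : ℝ := ∑ n, p n j * q n j

def weight (i : Fin N) : ℝ := ∑ m, β m * q i m

noncomputable def price (PPP : Fin M → ℝ) (i : Fin N) : ℝ :=
  ∑ m, (β m * q i m / weight q β i) * (p i m / PPP m)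

noncomputable def realValue (PPP : Fin M → ℝ) (j : Fin M) : ℝ := β j * value p q j / PPP j

noncomputable def matrix : Matrix (Fin M) (Fin M) ℝ :=
  of fun j m => ∑ n, q n j * q n m * (β j * p n m / (weight q β n * value p q m))

variable {p q β}

theorem value_pos (hp : ∀ i j, 0 < p i j) (hq0 : ∀ i j, 0 ≤ q i j)
    (hqcol : ∀ j, ∃ i, 0 < q i j) (j : Fin M) : 0 < value p q j := by
  obtain ⟨i, hi⟩ := hqcol j
  exact sum_pos' (fun n _ => mul_nonneg (hp n j).le (hq0 n j)) ⟨i, mem_univ i, mul_pos (hp i j) hi⟩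

theorem weight_pos (hβ : ∀ m, 0 < β m) (hq0 : ∀ i j, 0 ≤ q i j)
    (hqrow : ∀ i, ∃ j, 0 < q i j) (i : Fin N) : 0 < weight q β i := by
  obtain ⟨m, hm⟩ := hqrow i
  exact sum_pos' (fun m _ => mul_nonneg (hβ m).le (hq0 i m)) ⟨m, mem_univ m, mul_pos (hβ m) hm⟩

theorem price_pos (hp : ∀ i j, 0 < p i j) (hq0 : ∀ i j, 0 ≤ q i j) (hβ : ∀ m, 0 < β m)
    (hqrow : ∀ i, ∃ j, 0 < q i j) {PPP : Fin M → ℝ} (hPPP : ∀ j, 0 < PPP j) (i : Fin N) :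
    0 < price p q β PPP i := by
  obtain ⟨m, hm⟩ := hqrow i
  have hW := weight_pos hβ hq0 hqrow i
  refine sum_pos' (fun m _ => ?_) ⟨m, mem_univ m, ?_⟩
  · exact mul_nonneg (div_nonneg (mul_nonneg (hβ m).le (hq0 i m)) hW.le)
      (div_pos (hp i m) (hPPP m)).le
  · exact mul_pos (div_pos (mul_pos (hβ m) hm) hW) (div_pos (hp i m) (hPPP m))

theorem price_smul (c : ℝ) (PPP : Fin M → ℝ) :
    price p q β (c • PPP) = c⁻¹ • price p q β PPP := by
  ext i
  simp only [price, Pi.smul_apply, smul_eq_mul, mul_sum]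
  exact sum_congr rfl fun m _ => by rw [mul_comm c, ← div_div]; ring

theorem realValue_smul (c : ℝ) (PPP : Fin M → ℝ) :
    realValue p q β (c • PPP) = c⁻¹ • realValue p q β PPP := by
  ext j
  simp only [realValue, Pi.smul_apply, smul_eq_mul, mul_comm c, ← div_div]
  ring

theorem realValue_pos (hβ : ∀ m, 0 < β m) (hV : ∀ j, 0 < value p q j)
    {PPP : Fin M → ℝ} (hPPP : ∀ j, 0 < PPP j) (j : Fin M) : 0 < realValue p q β PPP j :=
  div_pos (mul_pos (hβ j) (hV j)) (hPPP j)

theorem realValue_involutive (hβ : ∀ m, 0 < β m) (hV : ∀ j, 0 < value p q j) :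
    Function.Involutive (realValue p q β) := fun z => by
  ext j
  simp only [realValue]
  rw [div_div_cancel₀ (mul_pos (hβ j) (hV j)).ne']

theorem matrix_pos_iff (hp : ∀ i j, 0 < p i j) (hq0 : ∀ i j, 0 ≤ q i j) (hβ : ∀ m, 0 < β m)
    (hV : ∀ j, 0 < value p q j) (hW : ∀ i, 0 < weight q β i) (j m : Fin M) :
    0 < matrix p q β j m ↔ ∃ k, 0 < q k j ∧ 0 < q k m := by
  have hfactor : ∀ n, 0 < β j * p n m / (weight q β n * value p q m) := fun n =>
    div_pos (mul_pos (hβ j) (hp n m)) (mul_pos (hW n) (hV m))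
  simp only [matrix, of_apply]
  rw [sum_pos_iff_of_nonneg fun n _ => mul_nonneg (mul_nonneg (hq0 n j) (hq0 n m)) (hfactor n).le]
  simp only [mem_univ, true_and, mul_pos_iff_of_pos_right (hfactor _)]
  exact exists_congr fun n => ⟨fun h => ⟨(hq0 n j).lt_of_ne fun h0 => by simp [← h0] at h,
    (hq0 n m).lt_of_ne fun h0 => by simp [← h0] at h⟩, fun h => mul_pos h.1 h.2⟩

theorem matrix_mem_colStochastic (hp : ∀ i j, 0 < p i j) (hq0 : ∀ i j, 0 ≤ q i j)
    (hβ : ∀ m, 0 < β m) (hV : ∀ j, 0 < value p q j) (hW : ∀ i, 0 < weight q β i) :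
    matrix p q β ∈ colStochastic ℝ (Fin M) := by
  simp only [mem_colStochastic_iff_sum, matrix, of_apply]
  refine ⟨fun j m => sum_nonneg fun n _ => ?_, fun m => ?_⟩
  · exact mul_nonneg (mul_nonneg (hq0 n j) (hq0 n m))
      (div_nonneg (mul_pos (hβ j) (hp n m)).le (mul_pos (hW n) (hV m)).le)
  · rw [sum_comm]
    calc ∑ n, ∑ j, q n j * q n m * (β j * p n m / (weight q β n * value p q m))
        = ∑ n, p n m * q n m / value p q m * (weight q β n / weight q β n) := by
          refine sum_congr rfl fun n _ => ?_
          simp only [weight, sum_div, mul_sum]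
          refine sum_congr rfl fun j _ => ?_
          field_simp
      _ = 1 := by
          simp only [div_self (hW _).ne', mul_one, ← sum_div, value]
          exact div_self (hV m).ne'

theorem matrix_pos_comm (hp : ∀ i j, 0 < p i j) (hq0 : ∀ i j, 0 ≤ q i j) (hβ : ∀ m, 0 < β m)
    (hV : ∀ j, 0 < value p q j) (hW : ∀ i, 0 < weight q β i) {j m : Fin M}
    (h : 0 < matrix p q β j m) : 0 < matrix p q β m j := by
  rw [matrix_pos_iff hp hq0 hβ hV hW] at h ⊢
  exact h.imp fun _ => And.symm

theorem isCutIrreducible_matrix_iff (hp : ∀ i j, 0 < p i j) (hq0 : ∀ i j, 0 ≤ q i j)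
    (hβ : ∀ m, 0 < β m) (hV : ∀ j, 0 < value p q j) (hW : ∀ i, 0 < weight q β i) :
    (matrix p q β).IsCutIrreducible ↔ QConnected q := by
  simp only [IsCutIrreducible, QConnected, matrix_pos_iff hp hq0 hβ hV hW]

theorem matrix_mulVec_realValue (hV : ∀ j, 0 < value p q j) (PPP : Fin M → ℝ) :
    matrix p q β *ᵥ realValue p q β PPP = fun j => β j * ∑ n, q n j * price p q β PPP n := by
  ext j
  simp only [mulVec, dotProduct, matrix, of_apply, realValue, price, sum_mul, mul_sum]
  rw [sum_comm]
  refine sum_congr rfl fun n _ => sum_congr rfl fun m _ => ?_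
  have hVm : value p q m * (value p q m)⁻¹ = 1 := mul_inv_cancel₀ (hV m).ne'
  simp only [div_eq_mul_inv, mul_inv]
  linear_combination (β j * q n j * q n m * p n m * β m * (weight q β n)⁻¹ * (PPP m)⁻¹) * hVm

theorem ggkSol_iff (hp : ∀ i j, 0 < p i j) (hβ : ∀ m, 0 < β m) (hV : ∀ j, 0 < value p q j)
    {PPP : Fin M → ℝ} {P : Fin N → ℝ} :
    GGKSol p q β PPP P ↔
      matrix p q β *ᵥ realValue p q β PPP = realValue p q β PPP ∧ P = price p q β PPP := by
  have hfirst : ∀ j, ∑ n, (p n j * q n j / ∑ n', p n' j * q n' j) * (P n / p n j)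
      = (∑ n, q n j * P n) / value p q j := fun j => by
    rw [sum_div]
    refine sum_congr rfl fun n _ => ?_
    have := (hp n j).ne'
    have := (hV j).ne'
    unfold value at *
    field_simp
  have hPPP : ∀ j X, (PPP j)⁻¹ = X / value p q j ↔ realValue p q β PPP j = β j * X := by
    intro j X
    rw [eq_div_iff (hV j).ne', ← mul_right_inj' (hβ j).ne', realValue]
    ring_nf
  simp only [GGKSol, hfirst, hPPP]
  constructor
  · rintro ⟨h1, h2⟩
    obtain rfl : P = price p q β PPP := funext h2
    exact ⟨by rw [matrix_mulVec_realValue hV]; exact (funext h1).symm, rfl⟩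
  · rintro ⟨h1, rfl⟩
    rw [matrix_mulVec_realValue hV] at h1
    exact ⟨fun j => (congrFun h1 j).symm, fun i => rfl⟩

theorem ggkSol_realValue (hp : ∀ i j, 0 < p i j) (hβ : ∀ m, 0 < β m)
    (hV : ∀ j, 0 < value p q j) {z : Fin M → ℝ} (hz : matrix p q β *ᵥ z = z) :
    GGKSol p q β (realValue p q β z) (price p q β (realValue p q β z)) :=
  (ggkSol_iff hp hβ hV).mpr ⟨by rwa [realValue_involutive hβ hV], rfl⟩

theorem exists_ggkSol_iff (hp : ∀ i j, 0 < p i j) (hq0 : ∀ i j, 0 ≤ q i j)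
    (hβ : ∀ m, 0 < β m) (hqrow : ∀ i, ∃ j, 0 < q i j) (hV : ∀ j, 0 < value p q j) :
    (∃ (PPP : Fin M → ℝ) (P : Fin N → ℝ),
        (∀ j, 0 < PPP j) ∧ (∀ i, 0 < P i) ∧ GGKSol p q β PPP P) ↔
      ∃ z, (∀ j, 0 < z j) ∧ matrix p q β *ᵥ z = z := by
  constructor
  · rintro ⟨PPP, P, hPPP, -, hsol⟩
    exact ⟨realValue p q β PPP, realValue_pos hβ hV hPPP, ((ggkSol_iff hp hβ hV).mp hsol).1⟩
  · rintro ⟨z, hz, hTz⟩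
    have hPPP := realValue_pos hβ hV hz
    exact ⟨_, _, hPPP, price_pos hp hq0 hβ hqrow hPPP, ggkSol_realValue hp hβ hV hTz⟩

theorem ggkSol_unique_iff (hp : ∀ i j, 0 < p i j) (hq0 : ∀ i j, 0 ≤ q i j)
    (hβ : ∀ m, 0 < β m) (hqrow : ∀ i, ∃ j, 0 < q i j) (hV : ∀ j, 0 < value p q j) :
    (∀ (PPP PPP' : Fin M → ℝ) (P P' : Fin N → ℝ),
        (∀ j, 0 < PPP j) → (∀ i, 0 < P i) → GGKSol p q β PPP P →
        (∀ j, 0 < PPP' j) → (∀ i, 0 < P' i) → GGKSol p q β PPP' P' →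
        ∃ γ : ℝ, 0 < γ ∧ (∀ j, PPP' j = γ * PPP j) ∧ (∀ i, P' i = γ⁻¹ * P i)) ↔
      ∀ z z' : Fin M → ℝ, (∀ j, 0 < z j) → matrix p q β *ᵥ z = z →
        (∀ j, 0 < z' j) → matrix p q β *ᵥ z' = z' → ∃ c : ℝ, 0 < c ∧ z' = c • z := by
  have hinv := realValue_involutive hβ hV
  constructor
  · intro h z z' hz hTz hz' hTz'
    have hPPP := realValue_pos hβ hV hz
    have hPPP' := realValue_pos hβ hV hz'
    obtain ⟨γ, hγ, hPPPγ, -⟩ := h _ _ _ _ hPPP (price_pos hp hq0 hβ hqrow hPPP)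
      (ggkSol_realValue hp hβ hV hTz) hPPP' (price_pos hp hq0 hβ hqrow hPPP')
      (ggkSol_realValue hp hβ hV hTz')
    refine ⟨γ⁻¹, inv_pos.mpr hγ, ?_⟩
    rw [← hinv z', show realValue p q β z' = γ • realValue p q β z from funext hPPPγ,
      realValue_smul, hinv]
  · intro h PPP PPP' P P' hPPP _ hsol hPPP' _ hsol'
    obtain ⟨hTz, rfl⟩ := (ggkSol_iff hp hβ hV).mp hsol
    obtain ⟨hTz', rfl⟩ := (ggkSol_iff hp hβ hV).mp hsol'
    obtain ⟨c, hc, hzc⟩ := h _ _ (realValue_pos hβ hV hPPP) hTz (realValue_pos hβ hV hPPP') hTz'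
    have hPPPc : PPP' = c⁻¹ • PPP := hinv.injective (by rw [hzc, realValue_smul, inv_inv])
    refine ⟨c⁻¹, inv_pos.mpr hc, fun j => congrFun hPPPc j, fun i => ?_⟩
    rw [hPPPc, price_smul, inv_inv]
    rfl

end GearyKhamis

open GearyKhamis

theorem stmt7_general {N M : ℕ}
    (p q : Fin N → Fin M → ℝ) (β : Fin M → ℝ)
    (hp : ∀ i j, 0 < p i j)
    (hq0 : ∀ i j, 0 ≤ q i j)
    (hqrow : ∀ i, ∃ j, 0 < q i j)
    (hqcol : ∀ j, ∃ i, 0 < q i j)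
    (hβ : ∀ m, 0 < β m) :
    ((∃ (PPP : Fin M → ℝ) (P : Fin N → ℝ),
        (∀ j, 0 < PPP j) ∧ (∀ i, 0 < P i) ∧ GGKSol p q β PPP P) ∧
      (∀ (PPP PPP' : Fin M → ℝ) (P P' : Fin N → ℝ),
        (∀ j, 0 < PPP j) → (∀ i, 0 < P i) → GGKSol p q β PPP P →
        (∀ j, 0 < PPP' j) → (∀ i, 0 < P' i) → GGKSol p q β PPP' P' →
        ∃ γ : ℝ, 0 < γ ∧ (∀ j, PPP' j = γ * PPP j) ∧ (∀ i, P' i = γ⁻¹ * P i)))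
    ↔ QConnected q := by
  have hV := value_pos hp hq0 hqcol
  have hW := weight_pos hβ hq0 hqrow
  rw [exists_ggkSol_iff hp hq0 hβ hqrow hV, ggkSol_unique_iff hp hq0 hβ hqrow hV,
    exists_unique_pos_fixed_iff_isCutIrreducible (matrix_mem_colStochastic hp hq0 hβ hV hW)
      fun _ _ => matrix_pos_comm hp hq0 hβ hV hW]
  exact isCutIrreducible_matrix_iff hp hq0 hβ hV hW

theorem stmt7 {N M : ℕ} (hN : 0 < N) (hM : 0 < M)
    (p q : Fin N → Fin M → ℝ) (β : Fin M → ℝ)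
    (hp : ∀ i j, 0 < p i j)
    (hq0 : ∀ i j, 0 ≤ q i j)
    (hqrow : ∀ i, ∃ j, 0 < q i j)
    (hqcol : ∀ j, ∃ i, 0 < q i j)
    (hβ : ∀ m, 0 < β m) :
    ((∃ (PPP : Fin M → ℝ) (P : Fin N → ℝ),
        (∀ j, 0 < PPP j) ∧ (∀ i, 0 < P i) ∧ GGKSol p q β PPP P) ∧
      (∀ (PPP PPP' : Fin M → ℝ) (P P' : Fin N → ℝ),
        (∀ j, 0 < PPP j) → (∀ i, 0 < P i) → GGKSol p q β PPP P →
        (∀ j, 0 < PPP' j) → (∀ i, 0 < P' i) → GGKSol p q β PPP' P' →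
        ∃ γ : ℝ, 0 < γ ∧ (∀ j, PPP' j = γ * PPP j) ∧ (∀ i, P' i = γ⁻¹ * P i)))
    ↔ QConnected q :=
  stmt7_general p q β hp hq0 hqrow hqcol hβ
end

section
/- Let d_{ij}(P) ≥ 0 and c_{ij}(P) ≥ 0 (i = 1,…,N; j = 1,…,M) be such that at a given strictly positive vector P* ∈ ℝ^N every column sum Σ_{n=1}^N c_{nj}(P*) and every row sum Σ_{m=1}^M d_{im}(P*) is strictly positive, and define G_i(P*) = Σ_{m=1}^M [ c_{im}(P*) · Σ_{n=1}^N (d_{nm}(P*) / Σ_{n'=1}^N c_{n'm}(P*)) P*_n ] / Σ_{m'=1}^M d_{im'}(P*). If λ* is a real number with G_i(P*) = λ* P*_i for all i = 1,…,N, then λ* = 1. -/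
open Finset

theorem stmt12 {N M : ℕ} (hN : 0 < N) (hM : 0 < M)
    (c d : Fin N → Fin M → ℝ)
    (hc0 : ∀ i j, 0 ≤ c i j) (hd0 : ∀ i j, 0 ≤ d i j)
    (Pstar : Fin N → ℝ) (hP : ∀ i, 0 < Pstar i)
    (hccol : ∀ j, 0 < ∑ n, c n j)
    (hdrow : ∀ i, 0 < ∑ m, d i m)
    (G : Fin N → ℝ)
    (hG : ∀ i, G i =
      (∑ m, c i m * ∑ n, (d n m / ∑ n', c n' m) * Pstar n) / ∑ m', d i m')
    (lam : ℝ)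
    (hlam : ∀ i, G i = lam * Pstar i) :
    lam = 1 := by
  set S : Fin M → ℝ := fun m => ∑ n, (d n m / ∑ n', c n' m) * Pstar n with hS
  have key : ∀ i, ∑ m, c i m * S m = lam * (Pstar i * ∑ m, d i m) := by
    intro i
    have h : (∑ m, c i m * S m) / (∑ m', d i m') = lam * Pstar i :=
      (hG i).symm.trans (hlam i)
    rw [div_eq_iff (hdrow i).ne'] at h
    rw [h]; ring
  have hT : (0:ℝ) < ∑ i, Pstar i * ∑ m, d i m := by
    apply Finset.sum_pos
    · intro i _; exact mul_pos (hP i) (hdrow i)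
    · exact ⟨⟨0, hN⟩, mem_univ _⟩
  have hsum : ∑ i, ∑ m, c i m * S m = ∑ i, Pstar i * ∑ m, d i m := by
    have hcol : ∀ m, ∑ i, c i m * S m = ∑ n, d n m * Pstar n := by
      intro m
      rw [← Finset.sum_mul, hS, Finset.mul_sum]
      refine Finset.sum_congr rfl fun n _ => ?_
      have hC := (hccol m).ne'
      field_simp
    rw [Finset.sum_comm]
    rw [Finset.sum_congr rfl fun m _ => hcol m, Finset.sum_comm]
    exact Finset.sum_congr rfl fun n _ => by rw [Finset.mul_sum]; exact Finset.sum_congr rfl fun m _ => mul_comm _ _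
  have : lam * (∑ i, Pstar i * ∑ m, d i m) = ∑ i, Pstar i * ∑ m, d i m := by
    calc lam * (∑ i, Pstar i * ∑ m, d i m)
        = ∑ i, lam * (Pstar i * ∑ m, d i m) := Finset.mul_sum _ _ _
      _ = ∑ i, ∑ m, c i m * S m := Finset.sum_congr rfl fun i _ => (key i).symm
      _ = _ := hsum
  exact mul_right_cancel₀ hT.ne' (by rw [one_mul]; exact this)
end

section
/- Let q be a quantity matrix and let d, e be nonnegative N×M arrays with d_{ij} > 0 ⟺ e_{ij} > 0 ⟺ q_{ij} > 0. Consider the system in strictly positive unknowns f ∈ ℝ^M and g ∈ ℝ^N: f_j = Σ_{n=1}^N (d_{nj} / Σ_{n'=1}^N d_{n'j}) · (e_{nj} / g_n) for j = 1,…,M and g_i = Σ_{m=1}^M (d_{im} / Σ_{m'=1}^M d_{im'}) · (e_{im} / f_m) for i = 1,…,N. Then a strictly positive solution (f, g), unique up to the rescaling (f, g) ↦ (γ f, (1/γ) g) for γ > 0, exists if and only if the quantity matrix q is connected. -/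
open Finset

/-- `(f, g)` solves the system of Theorem 5 with weight arrays `d` and `e`. -/
def Th5Sol {N M : ℕ} (d e : Fin N → Fin M → ℝ) (f : Fin M → ℝ) (g : Fin N → ℝ) : Prop :=
  (∀ j, f j = ∑ n, (d n j / ∑ n', d n' j) * (e n j / g n)) ∧
  (∀ i, g i = ∑ m, (d i m / ∑ m', d i m') * (e i m / f m))

/-!
Write `c = d e`, `t_i = ∑_m d_im` and `s_j = ∑_n d_nj`. With `f = exp x` and
`g_i = (∑_m c_im exp (-x_m)) / t_i` the second equation holds identically, and the first one says
that `x` is a critical point of the potential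
`Φ x = ∑_i (t_i log ∑_m c_im exp (-x_m) + ∑_m d_im x_m)`.
`Φ` is invariant under adding a constant to `x` and, up to a constant, bounds from above the spread
`∑_i (2 t_i)⁻¹ ∑_{m,m'} d_im d_im' |x_m - x_m'|`. By connectedness the spread vanishes only on
constant vectors, so `Φ x + |∑ x|` grows at least linearly in `‖x‖` and `Φ` has a global minimum.

Uniqueness is a maximum principle: if `f' ≤ f` for two solutions, the set where `f' = f` is
carried along every row of the support of `d`, so by connectedness it is empty or everything;
apply this to `f'` and `γ f` with `γ = max f'/f`. Conversely, if `J` disconnects `d`, doubling `f`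
on `J` and halving `g` on the rows meeting `J` gives a solution that is not proportional.
-/

namespace QConnected

variable {N M : ℕ} {d : Fin N → Fin M → ℝ}

theorem iff_of_pos_iff {q : Fin N → Fin M → ℝ} (h : ∀ i j, 0 < d i j ↔ 0 < q i j) :
    QConnected d ↔ QConnected q := by
  simp only [QConnected, h]

theorem forall_of_propagate (hd : QConnected d) {P : Fin M → Prop} {j₀ : Fin M} (h₀ : P j₀)
    (hP : ∀ k j l, 0 < d k j → 0 < d k l → P j → P l) (l : Fin M) : P l := by
  classical
  by_contra hl
  obtain ⟨j, hj, l', hl', k, hkj, hkl'⟩ :=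
    hd (univ.filter P) ⟨j₀, by simpa using h₀⟩ fun h => hl (by simpa using h.ge (mem_univ l))
  simp only [mem_filter, mem_univ, true_and] at hj hl'
  exact hl' (hP k j l' hkj hkl' hj)

theorem eq_of_forall_row_eq (hd : QConnected d) {x : Fin M → ℝ}
    (hx : ∀ k j l, 0 < d k j → 0 < d k l → x j = x l) (j l : Fin M) : x j = x l :=
  hd.forall_of_propagate (P := fun m => x j = x m) rfl
    (fun k m m' hkm hkm' h => h.trans (hx k m m' hkm hkm')) l

end QConnected

section RowMeanRatio

variable {ι κ : Type*} [Fintype κ] {d e : ι → κ → ℝ} {i : ι}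

noncomputable def rowMeanRatio (d e : ι → κ → ℝ) (f : κ → ℝ) (i : ι) : ℝ :=
  ∑ m, (d i m / ∑ m', d i m') * (e i m / f m)

theorem rowMeanRatio_mul {α : κ → ℝ} {b : ℝ} (h : ∀ m, d i m ≠ 0 → α m * b = 1) (f : κ → ℝ) :
    rowMeanRatio d e (α * f) i = b * rowMeanRatio d e f i := by
  rw [rowMeanRatio, rowMeanRatio, mul_sum]
  refine sum_congr rfl fun m _ => ?_
  rcases eq_or_ne (d i m) 0 with hm | hm
  · simp [hm]
  · rw [Pi.mul_apply, eq_inv_of_mul_eq_one_right (h m hm), mul_comm (α m)]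
    ring

variable {f f' : κ → ℝ} (hd : ∀ m, 0 ≤ d i m) (he : ∀ m, 0 ≤ e i m) (hf' : ∀ m, 0 < f' m)
  (hle : ∀ m, f' m ≤ f m)
include hd he hf' hle

theorem rowMeanRatio_le_rowMeanRatio : rowMeanRatio d e f i ≤ rowMeanRatio d e f' i :=
  sum_le_sum fun m _ => mul_le_mul_of_nonneg_left (div_le_div_of_nonneg_left (he m) (hf' m) (hle m))
    (div_nonneg (hd m) (sum_nonneg fun m _ => hd m))

theorem rowMeanRatio_lt_rowMeanRatio {l : κ} (hdl : 0 < d i l) (hel : 0 < e i l)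
    (hlt : f' l < f l) : rowMeanRatio d e f i < rowMeanRatio d e f' i := by
  refine sum_lt_sum (fun m _ => mul_le_mul_of_nonneg_left
    (div_le_div_of_nonneg_left (he m) (hf' m) (hle m))
      (div_nonneg (hd m) (sum_nonneg fun m _ => hd m))) ⟨l, mem_univ l, ?_⟩
  exact mul_lt_mul_of_pos_left (div_lt_div_of_pos_left hel (hf' l) hlt)
    (div_pos hdl (sum_pos' (fun m _ => hd m) ⟨l, mem_univ l, hdl⟩))

end RowMeanRatio

namespace Th5Sol

variable {N M : ℕ} {d e : Fin N → Fin M → ℝ} {f f' : Fin M → ℝ} {g g' : Fin N → ℝ}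

theorem iff_rowMeanRatio : Th5Sol d e f g ↔
    (∀ j, f j = rowMeanRatio (Function.swap d) (Function.swap e) g j) ∧
      ∀ i, g i = rowMeanRatio d e f i :=
  Iff.rfl

theorem mul (h : Th5Sol d e f g) {α : Fin M → ℝ} {β : Fin N → ℝ}
    (hαβ : ∀ i j, d i j ≠ 0 → α j * β i = 1) : Th5Sol d e (α * f) (β * g) := by
  rw [iff_rowMeanRatio] at h ⊢
  refine ⟨fun j => ?_, fun i => ?_⟩
  · rw [rowMeanRatio_mul (fun n hn => by rw [mul_comm]; exact hαβ n j hn), Pi.mul_apply, h.1]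
  · rw [rowMeanRatio_mul (hαβ i), Pi.mul_apply, h.2]

variable (hd0 : ∀ i j, 0 ≤ d i j) (he0 : ∀ i j, 0 ≤ e i j) (hde : ∀ i j, 0 < d i j → 0 < e i j)
include hd0 he0 hde

theorem eq_of_le (hconn : QConnected d) (h : Th5Sol d e f g) (h' : Th5Sol d e f' g')
    (hg : ∀ i, 0 < g i) (hf' : ∀ j, 0 < f' j) (hle : ∀ j, f' j ≤ f j) {j₀ : Fin M}
    (h₀ : f' j₀ = f j₀) : f' = f := by
  have hgg' : ∀ i, g i ≤ g' i := fun i => by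
    rw [h.2, h'.2]
    exact rowMeanRatio_le_rowMeanRatio (hd0 i) (he0 i) hf' hle
  funext l
  refine hconn.forall_of_propagate (P := fun m => f' m = f m) h₀ (fun k j l hkj hkl hj => ?_) l
  by_contra hl
  have hgk : g k < g' k := by
    rw [h.2, h'.2]
    exact rowMeanRatio_lt_rowMeanRatio (hd0 k) (he0 k) hf' hle hkl (hde k l hkl)
      ((hle l).lt_of_ne hl)
  have hfj : f' j < f j := by
    rw [h.1, h'.1]
    exact rowMeanRatio_lt_rowMeanRatio (d := Function.swap d) (e := Function.swap e)
      (fun n => hd0 n j) (fun n => he0 n j) hg hgg' hkj (hde k j hkj) hgk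
  exact hfj.ne hj

theorem exists_eq_mul (hconn : QConnected d) (h : Th5Sol d e f g) (h' : Th5Sol d e f' g')
    (hf : ∀ j, 0 < f j) (hg : ∀ i, 0 < g i) (hf' : ∀ j, 0 < f' j) :
    ∃ γ : ℝ, 0 < γ ∧ (∀ j, f' j = γ * f j) ∧ ∀ i, g' i = γ⁻¹ * g i := by
  obtain ⟨γ, hγ, hf'γ⟩ : ∃ γ : ℝ, 0 < γ ∧ f' = (fun _ => γ) * f := by
    cases isEmpty_or_nonempty (Fin M)
    · exact ⟨1, one_pos, funext isEmptyElim⟩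
    obtain ⟨j₀, hj₀⟩ := Finite.exists_max fun j => f' j / f j
    have hγ : 0 < f' j₀ / f j₀ := div_pos (hf' j₀) (hf j₀)
    refine ⟨_, hγ, eq_of_le hd0 he0 hde hconn
      (h.mul (β := fun _ => (f' j₀ / f j₀)⁻¹) fun _ _ _ => mul_inv_cancel₀ hγ.ne') h'
      (fun i => mul_pos (inv_pos.2 hγ) (hg i)) hf' (fun j => ?_) (j₀ := j₀) ?_⟩
    · exact (div_le_iff₀ (hf j)).1 (hj₀ j)
    · exact (div_mul_cancel₀ _ (hf j₀).ne').symm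
  have hγg := h.mul (β := fun _ => γ⁻¹) fun _ _ _ => mul_inv_cancel₀ hγ.ne'
  refine ⟨γ, hγ, fun j => congrFun hf'γ j, fun i => ?_⟩
  rw [h'.2, hf'γ]
  exact (hγg.2 i).symm

end Th5Sol

theorem qConnected_of_forall_th5Sol_eq_mul {N M : ℕ} {d e : Fin N → Fin M → ℝ} {f : Fin M → ℝ}
    {g : Fin N → ℝ} (hd0 : ∀ i j, 0 ≤ d i j) (h : Th5Sol d e f g) (hf : ∀ j, 0 < f j)
    (hg : ∀ i, 0 < g i)
    (huniq : ∀ f' g', (∀ j, 0 < f' j) → (∀ i, 0 < g' i) → Th5Sol d e f' g' →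
      ∃ γ : ℝ, ∀ j, f' j = γ * f j) :
    QConnected d := by
  classical
  intro J ⟨j, hj⟩ hJ
  obtain ⟨l, hl⟩ : ∃ l, l ∉ J := by simpa [eq_univ_iff_forall] using hJ
  by_contra hsep
  push Not at hsep
  set α : Fin M → ℝ := fun j => if j ∈ J then 2 else 1
  set β : Fin N → ℝ := fun i => if ∃ j ∈ J, 0 < d i j then 2⁻¹ else 1
  have hαβ : ∀ i j, d i j ≠ 0 → α j * β i = 1 := by
    intro i j hij
    have hij : 0 < d i j := (hd0 i j).lt_of_ne' hij
    by_cases hj : j ∈ J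
    · have : ∃ j' ∈ J, 0 < d i j' := ⟨j, hj, hij⟩
      simp [α, β, hj, this]
    · have : ¬∃ j' ∈ J, 0 < d i j' := fun ⟨j', hj', h'⟩ => (hsep j' hj' j hj i h').not_gt hij
      simp [α, β, hj, this]
  obtain ⟨γ, hγ⟩ := huniq _ _ (fun j => mul_pos (by positivity) (hf j))
    (fun i => mul_pos (by positivity) (hg i)) (h.mul hαβ)
  have h2 : 2 * f j = γ * f j := by simpa [α, hj] using hγ j
  have h1 : 1 * f l = γ * f l := by simpa [α, hl] using hγ l
  have := (mul_right_cancel₀ (hf j).ne' h2).trans (mul_right_cancel₀ (hf l).ne' h1).symm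
  norm_num at this

theorem exists_pos_mul_norm_le_of_homogeneous {E : Type*} [NormedAddCommGroup E]
    [NormedSpace ℝ E] [ProperSpace E] {ρ : E → ℝ} (hρ : Continuous ρ)
    (hsmul : ∀ a : ℝ, 0 ≤ a → ∀ x, ρ (a • x) = a * ρ x) (hpos : ∀ x, x ≠ 0 → 0 < ρ x) :
    ∃ ε > 0, ∀ x, ε * ‖x‖ ≤ ρ x := by
  have hρ0 : ρ 0 = 0 := by simpa using hsmul 0 le_rfl 0
  cases subsingleton_or_nontrivial E
  · exact ⟨1, one_pos, fun x => by simp [Subsingleton.elim x 0, hρ0]⟩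
  obtain ⟨v, hv, hmin⟩ := (isCompact_sphere (0 : E) 1).exists_isMinOn
    (NormedSpace.sphere_nonempty.2 zero_le_one) hρ.continuousOn
  have hv0 : v ≠ 0 := by rintro rfl; simp at hv
  refine ⟨ρ v, hpos v hv0, fun x => ?_⟩
  rcases eq_or_ne x 0 with rfl | hx
  · simp [hρ0]
  have hx' : 0 < ‖x‖ := norm_pos_iff.2 hx
  have hu : ‖x‖⁻¹ • x ∈ Metric.sphere (0 : E) 1 := by simp [norm_smul, hx'.ne']
  calc ρ v * ‖x‖ ≤ ρ (‖x‖⁻¹ • x) * ‖x‖ := mul_le_mul_of_nonneg_right (hmin hu) hx'.le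
    _ = ρ x := by rw [hsmul _ (inv_nonneg.2 hx'.le)]; field_simp

theorem Continuous.exists_forall_le_of_mul_norm_add_le {E : Type*} [NormedAddCommGroup E]
    [ProperSpace E] {Ψ : E → ℝ} (hΨ : Continuous Ψ) {ε C : ℝ} (hε : 0 < ε)
    (h : ∀ x, ε * ‖x‖ + C ≤ Ψ x) : ∃ x, ∀ y, Ψ x ≤ Ψ y :=
  hΨ.exists_forall_le <| Filter.tendsto_atTop_mono h <| Filter.tendsto_atTop_add_const_right _ C <|
    tendsto_norm_cocompact_atTop.const_mul_atTop hε

theorem sum_sum_mul_abs_sub_le {κ : Type*} [Fintype κ] {w x : κ → ℝ} (hw : ∀ m, 0 ≤ w m) {b : ℝ}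
    (hb : ∀ m, 0 < w m → b ≤ x m) :
    ∑ m, ∑ m', w m * w m' * |x m - x m'| ≤ 2 * (∑ m, w m) * ∑ m, w m * (x m - b) := by
  calc ∑ m, ∑ m', w m * w m' * |x m - x m'|
      ≤ ∑ m, ∑ m', w m * w m' * ((x m - b) + (x m' - b)) := by
        refine sum_le_sum fun m _ => sum_le_sum fun m' _ => ?_
        rcases (hw m).eq_or_lt with h | h
        · simp [← h]
        rcases (hw m').eq_or_lt with h' | h'
        · simp [← h']
        have := hb m h
        have := hb m' h'
        exact mul_le_mul_of_nonneg_left (abs_sub_le_iff.2 ⟨by linarith, by linarith⟩)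
          (mul_pos h h').le
    _ = ∑ m, ∑ m', (w m' * (w m * (x m - b)) + w m * (w m' * (x m' - b))) :=
        sum_congr rfl fun _ _ => sum_congr rfl fun _ _ => by ring
    _ = 2 * (∑ m, w m) * ∑ m, w m * (x m - b) := by
        simp only [sum_add_distrib, ← sum_mul, ← mul_sum]
        ring

section Spread

variable {ι κ : Type*} [Fintype ι] [Fintype κ]

noncomputable def spread (d : ι → κ → ℝ) (x : κ → ℝ) : ℝ :=
  ∑ i, (2 * ∑ m, d i m)⁻¹ * ∑ m, ∑ m', d i m * d i m' * |x m - x m'|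

theorem continuous_spread (d : ι → κ → ℝ) : Continuous (spread d) := by
  unfold spread
  fun_prop

theorem spread_smul (d : ι → κ → ℝ) {a : ℝ} (ha : 0 ≤ a) (x : κ → ℝ) :
    spread d (a • x) = a * spread d x := by
  simp only [spread, Pi.smul_apply, smul_eq_mul, ← mul_sub, abs_mul, abs_of_nonneg ha, mul_sum]
  refine sum_congr rfl fun i _ => sum_congr rfl fun m _ => sum_congr rfl fun m' _ => ?_
  ring

variable {d : ι → κ → ℝ} (hd0 : ∀ i m, 0 ≤ d i m)
include hd0

theorem spread_nonneg (x : κ → ℝ) : 0 ≤ spread d x :=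
  sum_nonneg fun i _ => mul_nonneg (inv_nonneg.2 (mul_nonneg zero_le_two
    (sum_nonneg fun m _ => hd0 i m))) (sum_nonneg fun m _ => sum_nonneg fun m' _ =>
      mul_nonneg (mul_nonneg (hd0 i m) (hd0 i m')) (abs_nonneg _))

theorem eq_of_spread_eq_zero {x : κ → ℝ} (h : spread d x = 0) {k : ι} {j l : κ}
    (hkj : 0 < d k j) (hkl : 0 < d k l) : x j = x l := by
  have hterm : ∀ i m m', 0 ≤ d i m * d i m' * |x m - x m'| := fun i m m' =>
    mul_nonneg (mul_nonneg (hd0 i m) (hd0 i m')) (abs_nonneg _)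
  have hk := (sum_eq_zero_iff_of_nonneg fun i _ => mul_nonneg (inv_nonneg.2 (mul_nonneg
    zero_le_two (sum_nonneg fun m _ => hd0 i m))) (sum_nonneg fun m _ => sum_nonneg fun m' _ =>
      hterm i m m')).1 h k (mem_univ k)
  have ht : (2 * ∑ m, d k m)⁻¹ ≠ 0 :=
    inv_ne_zero (mul_ne_zero two_ne_zero (sum_pos' (fun m _ => hd0 k m) ⟨j, mem_univ j, hkj⟩).ne')
  have hj := (sum_eq_zero_iff_of_nonneg fun m _ => sum_nonneg fun m' _ => hterm k m m').1
    ((mul_eq_zero.1 hk).resolve_left ht) j (mem_univ j)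
  have hjl := (sum_eq_zero_iff_of_nonneg fun m' _ => hterm k j m').1 hj l (mem_univ l)
  simpa [hkj.ne', hkl.ne', sub_eq_zero] using hjl

end Spread

section Potential

open Real

variable {ι κ : Type*} [Fintype κ]

noncomputable def rowExpSum (c : ι → κ → ℝ) (x : κ → ℝ) (i : ι) : ℝ :=
  ∑ m, c i m * exp (-x m)

variable {c : ι → κ → ℝ}

theorem rowExpSum_pos {i : ι} (hc0 : ∀ m, 0 ≤ c i m) (hc : ∃ m, 0 < c i m) (x : κ → ℝ) :
    0 < rowExpSum c x i :=
  let ⟨m, hm⟩ := hc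
  sum_pos' (fun m _ => mul_nonneg (hc0 m) (exp_pos _).le) ⟨m, mem_univ m, mul_pos hm (exp_pos _)⟩

theorem rowExpSum_add_const (x : κ → ℝ) (a : ℝ) (i : ι) :
    rowExpSum c (fun m => x m + a) i = exp (-a) * rowExpSum c x i := by
  simp only [rowExpSum, mul_sum, neg_add, exp_add]
  exact sum_congr rfl fun m _ => by ring

theorem le_log_rowExpSum {i : ι} (hc0 : ∀ m, 0 ≤ c i m) {m : κ} (hm : 0 < c i m) (x : κ → ℝ) :
    log (c i m) - x m ≤ log (rowExpSum c x i) :=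
  calc log (c i m) - x m = log (c i m * exp (-x m)) := by
        rw [log_mul hm.ne' (exp_pos _).ne', log_exp, sub_eq_add_neg]
    _ ≤ log (rowExpSum c x i) := log_le_log (mul_pos hm (exp_pos _)) (single_le_sum
        (f := fun m => c i m * exp (-x m)) (fun m _ => mul_nonneg (hc0 m) (exp_pos _).le)
        (mem_univ m))

variable [Fintype ι]

noncomputable def scalingPotential (d c : ι → κ → ℝ) (x : κ → ℝ) : ℝ :=
  ∑ i, ((∑ m, d i m) * log (rowExpSum c x i) + ∑ m, d i m * x m)

theorem exists_add_spread_le_scalingPotential {d : ι → κ → ℝ} (hd0 : ∀ i m, 0 ≤ d i m)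
    (hc0 : ∀ i m, 0 ≤ c i m) (hdc : ∀ i m, 0 < d i m → 0 < c i m)
    (hrow : ∀ i, ∃ m, 0 < d i m) :
    ∃ K, ∀ x, K + spread d x ≤ scalingPotential d c x := by
  refine ⟨∑ i, -((∑ m, d i m) * ∑ m, |log (c i m)|), fun x => ?_⟩
  rw [spread, ← sum_add_distrib]
  refine sum_le_sum fun i _ => ?_
  obtain ⟨m₀, hm₀, hmin⟩ := (univ.filter (0 < d i ·)).exists_min_image x
    (let ⟨m, hm⟩ := hrow i; ⟨m, by simpa using hm⟩)
  simp only [mem_filter, mem_univ, true_and] at hm₀ hmin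
  set t := ∑ m, d i m
  have ht : 0 < t := sum_pos' (fun m _ => hd0 i m) ⟨m₀, mem_univ _, hm₀⟩
  have hlogc : -∑ m, |log (c i m)| ≤ log (c i m₀) :=
    (neg_le_neg (single_le_sum (f := fun m => |log (c i m)|) (fun m _ => abs_nonneg _)
      (mem_univ m₀))).trans (neg_abs_le _)
  have hlogG := le_log_rowExpSum (hc0 i) (hdc i m₀ hm₀) x
  have hspread : (2 * t)⁻¹ * ∑ m, ∑ m', d i m * d i m' * |x m - x m'| ≤
      ∑ m, d i m * (x m - x m₀) := by
    rw [inv_mul_le_iff₀ (by positivity)]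
    exact sum_sum_mul_abs_sub_le (hd0 i) hmin
  have hmean : ∑ m, d i m * (x m - x m₀) = ∑ m, d i m * x m - t * x m₀ := by
    simp only [mul_sub, sum_sub_distrib, t, sum_mul]
  have h1 := mul_le_mul_of_nonneg_left hlogc ht.le
  have h2 := mul_le_mul_of_nonneg_left hlogG ht.le
  linarith

variable (d : ι → κ → ℝ) (hc0 : ∀ i m, 0 ≤ c i m) (hc : ∀ i, ∃ m, 0 < c i m)
include hc0 hc

theorem scalingPotential_add_const (x : κ → ℝ) (a : ℝ) :
    scalingPotential d c (fun m => x m + a) = scalingPotential d c x := by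
  refine sum_congr rfl fun i _ => ?_
  rw [rowExpSum_add_const, log_mul (exp_pos _).ne' (rowExpSum_pos (hc0 i) (hc i) x).ne', log_exp]
  simp only [mul_add, sum_add_distrib, ← sum_mul]
  ring

theorem continuous_scalingPotential : Continuous (scalingPotential d c) := by
  unfold scalingPotential rowExpSum
  refine continuous_finsetSum _ fun i _ => Continuous.add (continuous_const.mul ?_) (by fun_prop)
  exact Continuous.log (by fun_prop) fun x => (rowExpSum_pos (hc0 i) (hc i) x).ne'

theorem hasDerivAt_scalingPotential_line (x v : κ → ℝ) :
    HasDerivAt (fun u : ℝ => scalingPotential d c (x + u • v))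
      (∑ i, ((∑ m, d i m) * ((∑ m, c i m * (exp (-x m) * -v m)) / rowExpSum c x i) +
        ∑ m, d i m * v m)) 0 := by
  have hline : ∀ m, HasDerivAt (fun u : ℝ => (x + u • v) m) (v m) 0 := fun m => by
    simpa using ((hasDerivAt_id (0 : ℝ)).mul_const (v m)).const_add (x m)
  refine HasDerivAt.fun_sum fun i _ => HasDerivAt.add (HasDerivAt.const_mul _ ?_)
    (HasDerivAt.fun_sum fun m _ => (hline m).const_mul (d i m))
  have hexp : HasDerivAt (fun u : ℝ => rowExpSum c (x + u • v) i)
      (∑ m, c i m * (exp (-x m) * -v m)) 0 := by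
    refine HasDerivAt.fun_sum fun m _ => HasDerivAt.const_mul _ ?_
    simpa using (hline m).neg.exp
  simpa using hexp.log (by simpa using (rowExpSum_pos (hc0 i) (hc i) x).ne')

theorem sum_eq_of_forall_scalingPotential_le [DecidableEq κ] {x : κ → ℝ}
    (hx : ∀ y, scalingPotential d c x ≤ scalingPotential d c y) (j : κ) :
    ∑ i, d i j = exp (-x j) * ∑ i, (∑ m, d i m) * c i j / rowExpSum c x i := by
  have hmin : IsLocalMin (fun u : ℝ => scalingPotential d c (x + u • Pi.single j 1)) 0 :=
    Filter.Eventually.of_forall fun u => by simpa using hx _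
  have := hmin.hasDerivAt_eq_zero (hasDerivAt_scalingPotential_line d hc0 hc x (Pi.single j 1))
  simp only [Pi.single_apply, mul_neg, mul_ite, mul_one, mul_zero, sum_neg_distrib, sum_ite_eq',
    mem_univ, ↓reduceIte, sum_add_distrib] at this
  have hsum : ∑ i, (∑ m, d i m) * (-(c i j * exp (-x j)) / rowExpSum c x i) =
      -(exp (-x j) * ∑ i, (∑ m, d i m) * c i j / rowExpSum c x i) := by
    rw [mul_sum, ← sum_neg_distrib]
    exact sum_congr rfl fun i _ => by ring
  linarith

end Potential

namespace QConnected

open Real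

variable {N M : ℕ} {d : Fin N → Fin M → ℝ} (hd : QConnected d) (hd0 : ∀ i m, 0 ≤ d i m)
include hd hd0

theorem exists_pos_mul_norm_le_spread_add :
    ∃ ε > 0, ∀ x : Fin M → ℝ, ε * ‖x‖ ≤ spread d x + |∑ m, x m| := by
  refine exists_pos_mul_norm_le_of_homogeneous ((continuous_spread d).add (by fun_prop))
    (fun a ha x => ?_) (fun x hx => ?_)
  · simp only [spread_smul d ha, Pi.smul_apply, smul_eq_mul, ← mul_sum, abs_mul, abs_of_nonneg ha]
    ring
  by_contra hle
  have hspread : spread d x = 0 := by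
    linarith [spread_nonneg hd0 x, abs_nonneg (∑ m, x m)]
  have hsum : ∑ m, x m = 0 :=
    abs_eq_zero.1 (by linarith [spread_nonneg hd0 x, abs_nonneg (∑ m, x m)])
  have hconst := hd.eq_of_forall_row_eq fun k j l => eq_of_spread_eq_zero hd0 hspread
  refine hx (funext fun j => ?_)
  rw [Finset.sum_congr rfl fun m _ => hconst m j, sum_const, card_univ, Fintype.card_fin,
    nsmul_eq_mul] at hsum
  exact (mul_eq_zero.1 hsum).resolve_left (Nat.cast_ne_zero.2 j.pos.ne')

theorem exists_forall_scalingPotential_le {c : Fin N → Fin M → ℝ} (hc0 : ∀ i m, 0 ≤ c i m)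
    (hdc : ∀ i m, 0 < d i m → 0 < c i m) (hrow : ∀ i, ∃ m, 0 < d i m) :
    ∃ x, ∀ y, scalingPotential d c x ≤ scalingPotential d c y := by
  have hc : ∀ i, ∃ m, 0 < c i m := fun i => (hrow i).imp fun m => hdc i m
  obtain ⟨K, hK⟩ := exists_add_spread_le_scalingPotential hd0 hc0 hdc hrow
  obtain ⟨ε, hε, hρ⟩ := hd.exists_pos_mul_norm_le_spread_add hd0
  obtain ⟨x, hx⟩ := Continuous.exists_forall_le_of_mul_norm_add_le
    (Ψ := fun x => scalingPotential d c x + |∑ m, x m|)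
    ((continuous_scalingPotential d hc0 hc).add (by fun_prop)) hε (C := K)
    fun x => by linarith [hK x, hρ x]
  refine ⟨x, fun y => ?_⟩
  set a := (∑ m, y m) / M
  have hsum : ∑ m, (y m - a) = 0 := by
    rcases Nat.eq_zero_or_pos M with rfl | hM
    · simp
    · simp only [sum_sub_distrib, sum_const, card_univ, Fintype.card_fin, nsmul_eq_mul, a]
      field_simp
      ring
  have hshift : scalingPotential d c (fun m => y m - a) = scalingPotential d c y := by
    simpa using (scalingPotential_add_const d hc0 hc (fun m => y m - a) a).symm
  have := hx fun m => y m - a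
  rw [hsum, abs_zero, add_zero, hshift] at this
  linarith [abs_nonneg (∑ m, x m)]

theorem exists_th5Sol {e : Fin N → Fin M → ℝ} (he0 : ∀ i j, 0 ≤ e i j)
    (hde : ∀ i j, 0 < d i j → 0 < e i j) (hrow : ∀ i, ∃ j, 0 < d i j)
    (hcol : ∀ j, ∃ i, 0 < d i j) :
    ∃ f g, (∀ j, 0 < f j) ∧ (∀ i, 0 < g i) ∧ Th5Sol d e f g := by
  set c : Fin N → Fin M → ℝ := fun i j => d i j * e i j
  have hc0 : ∀ i j, 0 ≤ c i j := fun i j => mul_nonneg (hd0 i j) (he0 i j)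
  have hdc : ∀ i j, 0 < d i j → 0 < c i j := fun i j h => mul_pos h (hde i j h)
  have hc : ∀ i, ∃ j, 0 < c i j := fun i => (hrow i).imp fun j => hdc i j
  have ht : ∀ i, 0 < ∑ m, d i m := fun i =>
    let ⟨j, hj⟩ := hrow i; sum_pos' (fun m _ => hd0 i m) ⟨j, mem_univ j, hj⟩
  have hs : ∀ j, 0 < ∑ n, d n j := fun j =>
    let ⟨i, hi⟩ := hcol j; sum_pos' (fun n _ => hd0 n j) ⟨i, mem_univ i, hi⟩
  obtain ⟨x, hx⟩ := hd.exists_forall_scalingPotential_le hd0 hc0 hdc hrow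
  have hG : ∀ i, 0 < rowExpSum c x i := fun i => rowExpSum_pos (hc0 i) (hc i) x
  refine ⟨fun j => exp (x j), fun i => rowExpSum c x i / ∑ m, d i m, fun j => exp_pos _,
    fun i => div_pos (hG i) (ht i), fun j => ?_, fun i => ?_⟩
  · have hstat := sum_eq_of_forall_scalingPotential_le d hc0 hc hx j
    have hS : 0 < ∑ i, (∑ m, d i m) * c i j / rowExpSum c x i :=
      pos_of_mul_pos_right (hstat ▸ hs j) (exp_pos _).le
    have : ∑ n, (d n j / ∑ n', d n' j) * (e n j / (rowExpSum c x n / ∑ m, d n m)) =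
        (∑ i, (∑ m, d i m) * c i j / rowExpSum c x i) / ∑ n, d n j := by
      rw [sum_div]
      refine sum_congr rfl fun n _ => ?_
      simp only [c]
      field_simp [(hG n).ne', (ht n).ne']
    rw [this, hstat, exp_neg]
    field_simp
  · show rowExpSum c x i / _ = _
    rw [rowExpSum, sum_div]
    refine sum_congr rfl fun m _ => ?_
    rw [exp_neg, div_eq_mul_inv]
    ring

end QConnected

theorem stmt14_general {N M : ℕ}
    (q d e : Fin N → Fin M → ℝ)
    (hqrow : ∀ i, ∃ j, 0 < q i j)
    (hqcol : ∀ j, ∃ i, 0 < q i j)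
    (hd0 : ∀ i j, 0 ≤ d i j) (he0 : ∀ i j, 0 ≤ e i j)
    (hdsupp : ∀ i j, 0 < d i j ↔ 0 < q i j)
    (hesupp : ∀ i j, 0 < e i j ↔ 0 < q i j) :
    ((∃ (f : Fin M → ℝ) (g : Fin N → ℝ),
        (∀ j, 0 < f j) ∧ (∀ i, 0 < g i) ∧ Th5Sol d e f g) ∧
      (∀ (f f' : Fin M → ℝ) (g g' : Fin N → ℝ),
        (∀ j, 0 < f j) → (∀ i, 0 < g i) → Th5Sol d e f g →
        (∀ j, 0 < f' j) → (∀ i, 0 < g' i) → Th5Sol d e f' g' →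
        ∃ γ : ℝ, 0 < γ ∧ (∀ j, f' j = γ * f j) ∧ (∀ i, g' i = γ⁻¹ * g i)))
    ↔ QConnected q := by
  have hde : ∀ i j, 0 < d i j → 0 < e i j := fun i j h => (hesupp i j).2 ((hdsupp i j).1 h)
  rw [← QConnected.iff_of_pos_iff hdsupp]
  constructor
  · rintro ⟨⟨f, g, hf, hg, h⟩, huniq⟩
    refine qConnected_of_forall_th5Sol_eq_mul hd0 h hf hg fun f' g' hf' hg' h' => ?_
    obtain ⟨γ, -, hγ, -⟩ := huniq f f' g g' hf hg h hf' hg' h'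
    exact ⟨γ, hγ⟩
  · intro hd
    refine ⟨hd.exists_th5Sol hd0 he0 hde (fun i => (hqrow i).imp fun j => (hdsupp i j).2)
      (fun j => (hqcol j).imp fun i => (hdsupp i j).2), ?_⟩
    intro f f' g g' hf hg h hf' _ h'
    exact h.exists_eq_mul hd0 he0 hde hd h' hf hg hf'

theorem stmt14 {N M : ℕ} (hN : 0 < N) (hM : 0 < M)
    (q d e : Fin N → Fin M → ℝ)
    (hq0 : ∀ i j, 0 ≤ q i j)
    (hqrow : ∀ i, ∃ j, 0 < q i j)
    (hqcol : ∀ j, ∃ i, 0 < q i j)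
    (hd0 : ∀ i j, 0 ≤ d i j) (he0 : ∀ i j, 0 ≤ e i j)
    (hdsupp : ∀ i j, 0 < d i j ↔ 0 < q i j)
    (hesupp : ∀ i j, 0 < e i j ↔ 0 < q i j) :
    ((∃ (f : Fin M → ℝ) (g : Fin N → ℝ),
        (∀ j, 0 < f j) ∧ (∀ i, 0 < g i) ∧ Th5Sol d e f g) ∧
      (∀ (f f' : Fin M → ℝ) (g g' : Fin N → ℝ),
        (∀ j, 0 < f j) → (∀ i, 0 < g i) → Th5Sol d e f g →
        (∀ j, 0 < f' j) → (∀ i, 0 < g' i) → Th5Sol d e f' g' →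
        ∃ γ : ℝ, 0 < γ ∧ (∀ j, f' j = γ * f j) ∧ (∀ i, g' i = γ⁻¹ * g i)))
    ↔ QConnected q :=
  stmt14_general q d e hqrow hqcol hd0 he0 hdsupp hesupp
end

section
/- Let d be a nonnegative N×M array whose every row sum and every column sum is strictly positive, and let e be a nonnegative N×M array with e_{ij} > 0 ⟺ d_{ij} > 0. Define a_{ij} = d_{ij} e_{ij} / ( (Σ_{m=1}^M d_{im}) (Σ_{n=1}^N d_{nj}) ), c_i = Σ_{j=1}^M d_{ij} and d'_j = Σ_{i=1}^N d_{ij}. Then the triplet (A, c, d') satisfies the compatibility condition: for every I ⊆ {1,…,N} and J ⊆ {1,…,M} with a_{ij} = 0 for all i ∉ I and j ∉ J, one has Σ_{i ∉ I} c_i ≤ Σ_{j ∈ J} d'_j, and the inequality is strict if and only if the submatrix A_{IJ} = (a_{ij})_{i∈I, j∈J} is not identically zero. -/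
open Finset

theorem stmt15 {N M : ℕ} (hN : 0 < N) (hM : 0 < M)
    (d e : Fin N → Fin M → ℝ)
    (hd0 : ∀ i j, 0 ≤ d i j) (he0 : ∀ i j, 0 ≤ e i j)
    (hdrow : ∀ i, 0 < ∑ j, d i j)
    (hdcol : ∀ j, 0 < ∑ i, d i j)
    (hsupp : ∀ i j, 0 < e i j ↔ 0 < d i j)
    (a : Fin N → Fin M → ℝ)
    (ha : ∀ i j, a i j = d i j * e i j / ((∑ m, d i m) * (∑ n, d n j)))
    (c : Fin N → ℝ) (hc : ∀ i, c i = ∑ j, d i j)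
    (d' : Fin M → ℝ) (hd' : ∀ j, d' j = ∑ i, d i j) :
    ∀ (I : Finset (Fin N)) (J : Finset (Fin M)),
      (∀ i ∉ I, ∀ j ∉ J, a i j = 0) →
        ((∑ i ∈ Iᶜ, c i ≤ ∑ j ∈ J, d' j) ∧
          ((∑ i ∈ Iᶜ, c i < ∑ j ∈ J, d' j) ↔ ∃ i ∈ I, ∃ j ∈ J, a i j ≠ 0)) := by
  intro I J h
  have key : ∀ i j, a i j = 0 ↔ d i j = 0 := by
    intro i j
    have hpos : 0 < (∑ m, d i m) * (∑ n, d n j) := mul_pos (hdrow i) (hdcol j)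
    rw [ha, div_eq_zero_iff]
    constructor
    · rintro (h1 | h1)
      · rcases mul_eq_zero.mp h1 with h2 | h2
        · exact h2
        · by_contra hd
          have hdp : 0 < d i j := lt_of_le_of_ne (hd0 i j) (Ne.symm hd)
          have := (hsupp i j).mpr hdp
          linarith
      · exact absurd h1 hpos.ne'
    · intro h1
      left; rw [h1, zero_mul]
  have hdz : ∀ i ∉ I, ∀ j ∉ J, d i j = 0 := fun i hi j hj => (key i j).mp (h i hi j hj)
  have hL : ∑ i ∈ Iᶜ, c i = ∑ j ∈ J, ∑ i ∈ Iᶜ, d i j := by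
    rw [Finset.sum_comm]
    apply Finset.sum_congr rfl
    intro i hi
    rw [hc]
    symm
    apply Finset.sum_subset (Finset.subset_univ J)
    intro j _ hj
    exact hdz i (Finset.mem_compl.mp hi) j hj
  have hR : ∑ j ∈ J, d' j = ∑ j ∈ J, ∑ i ∈ Iᶜ, d i j + ∑ j ∈ J, ∑ i ∈ I, d i j := by
    rw [← Finset.sum_add_distrib]
    apply Finset.sum_congr rfl
    intro j _
    rw [hd']
    exact (Finset.sum_compl_add_sum I fun i => d i j).symm
  have hS0 : 0 ≤ ∑ j ∈ J, ∑ i ∈ I, d i j :=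
    Finset.sum_nonneg fun j _ => Finset.sum_nonneg fun i _ => hd0 i j
  constructor
  · rw [hL, hR]; linarith
  · rw [hL, hR]
    constructor
    · intro hlt
      by_contra hno
      push_neg at hno
      have hz : ∑ j ∈ J, ∑ i ∈ I, d i j = 0 :=
        Finset.sum_eq_zero fun j hj => Finset.sum_eq_zero fun i hi => (key i j).mp (hno i hi j hj)
      linarith
    · rintro ⟨i, hi, j, hj, hne⟩
      have hdne : d i j ≠ 0 := fun h0 => hne ((key i j).mpr h0)
      have hdp : 0 < d i j := lt_of_le_of_ne (hd0 i j) (Ne.symm hdne)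
      have hSpos : 0 < ∑ j ∈ J, ∑ i ∈ I, d i j := by
        apply Finset.sum_pos' (fun j' _ => Finset.sum_nonneg fun i' _ => hd0 i' j')
        exact ⟨j, hj, Finset.sum_pos' (fun i' _ => hd0 i' j) ⟨i, hi, hdp⟩⟩
      linarith
end

section
/- Let p be a strictly positive N×M matrix of prices and q a quantity matrix, and let w_{ij} = p_{ij} q_{ij} / Σ_{n=1}^N p_{nj} q_{nj} denote expenditure shares and w*_{ij} = w_{ij} / Σ_{m=1}^M w_{im}. Consider the Rao system: PPP_j = Π_{n=1}^N (p_{nj}/P_n)^{w_{nj}} for j = 1,…,M and P_i = Π_{m=1}^M (p_{im}/PPP_m)^{w*_{im}} for i = 1,…,N. Then a strictly positive solution (PPP, P), unique up to the rescaling (PPP, P) ↦ (γ·PPP, (1/γ)·P) for γ > 0, exists if and only if the quantity matrix q is connected. -/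
open Finset

/-- `(PPP, P)` solves the Rao system with expenditure-share weights `w` and
normalized expenditure-share weights `wstar`. -/
def RaoSol {N M : ℕ} (p : Fin N → Fin M → ℝ) (w wstar : Fin N → Fin M → ℝ)
    (PPP : Fin M → ℝ) (P : Fin N → ℝ) : Prop :=
  (∀ j, PPP j = ∏ n, (p n j / P n) ^ (w n j)) ∧
  (∀ i, P i = ∏ m, (p i m / PPP m) ^ (wstar i m))

/-- Maximum principle for an irreducible row-stochastic matrix: any fixed point
of the action is constant. -/
lemma maxPrinciple {M : ℕ} (A : Fin M → Fin M → ℝ)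
    (hA0 : ∀ j m, 0 ≤ A j m) (hA1 : ∀ j, ∑ m, A j m = 1)
    (hconn : ∀ J : Finset (Fin M), J.Nonempty → J ≠ Finset.univ →
      ∃ j ∈ J, ∃ m, m ∉ J ∧ 0 < A j m)
    (x : Fin M → ℝ) (hx : ∀ j, x j = ∑ m, A j m * x m) :
    ∀ j j', x j = x j' := by
  classical
  intro j j'
  have hne : (Finset.univ : Finset (Fin M)).Nonempty := ⟨j, mem_univ j⟩
  obtain ⟨j0, -, hj0⟩ := Finset.exists_max_image Finset.univ x hne
  set J : Finset (Fin M) := Finset.univ.filter (fun i => x i = x j0) with hJ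
  have hJne : J.Nonempty := ⟨j0, by simp [hJ]⟩
  have hJuniv : J = Finset.univ := by
    by_contra hne'
    obtain ⟨a, haJ, m, hmJ, hAam⟩ := hconn J hJne hne'
    have hxa : x a = x j0 := by simpa [hJ] using haJ
    have hxm : x m < x j0 := by
      have h1 : x m ≤ x j0 := hj0 m (mem_univ m)
      have h2 : x m ≠ x j0 := by
        intro h; exact hmJ (by simp [hJ, h])
      exact lt_of_le_of_ne h1 h2
    have : x a < x j0 := by
      calc x a = ∑ l, A a l * x l := hx a
        _ < ∑ l, A a l * x j0 := by
            refine Finset.sum_lt_sum (fun l _ => ?_) ⟨m, mem_univ m, ?_⟩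
            · exact mul_le_mul_of_nonneg_left (hj0 l (mem_univ l)) (hA0 a l)
            · exact mul_lt_mul_of_pos_left hxm hAam
        _ = (∑ l, A a l) * x j0 := by rw [Finset.sum_mul]
        _ = x j0 := by rw [hA1 a, one_mul]
    exact absurd hxa (ne_of_lt this)
  have hall : ∀ i, x i = x j0 := by
    intro i
    have : i ∈ J := hJuniv ▸ mem_univ i
    simpa [hJ] using this
  rw [hall j, hall j']

lemma prod_rpow_eq_exp {ι : Type*} [Fintype ι] (f : ι → ℝ) (hf : ∀ i, 0 < f i) (c : ι → ℝ) :
    ∏ i, f i ^ c i = Real.exp (∑ i, c i * Real.log (f i)) := by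
  rw [Real.exp_sum]
  refine Finset.prod_congr rfl (fun i _ => ?_)
  rw [Real.rpow_def_of_pos (hf i), mul_comm]

lemma eq_prod_rpow_iff {ι : Type*} [Fintype ι] (z : ℝ) (hz : 0 < z)
    (f : ι → ℝ) (hf : ∀ i, 0 < f i) (c : ι → ℝ) :
    z = ∏ i, f i ^ c i ↔ Real.log z = ∑ i, c i * Real.log (f i) := by
  rw [prod_rpow_eq_exp f hf c, ← Real.exp_log hz, Real.exp_eq_exp, Real.log_exp]

theorem stmt16 {N M : ℕ} (hN : 0 < N) (hM : 0 < M)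
    (p q : Fin N → Fin M → ℝ)
    (hp : ∀ i j, 0 < p i j)
    (hq0 : ∀ i j, 0 ≤ q i j)
    (hqrow : ∀ i, ∃ j, 0 < q i j)
    (hqcol : ∀ j, ∃ i, 0 < q i j)
    (w wstar : Fin N → Fin M → ℝ)
    (hw : ∀ i j, w i j = p i j * q i j / ∑ n, p n j * q n j)
    (hwstar : ∀ i j, wstar i j = w i j / ∑ m, w i m) :
    ((∃ (PPP : Fin M → ℝ) (P : Fin N → ℝ),
        (∀ j, 0 < PPP j) ∧ (∀ i, 0 < P i) ∧ RaoSol p w wstar PPP P) ∧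
      (∀ (PPP PPP' : Fin M → ℝ) (P P' : Fin N → ℝ),
        (∀ j, 0 < PPP j) → (∀ i, 0 < P i) → RaoSol p w wstar PPP P →
        (∀ j, 0 < PPP' j) → (∀ i, 0 < P' i) → RaoSol p w wstar PPP' P' →
        ∃ γ : ℝ, 0 < γ ∧ (∀ j, PPP' j = γ * PPP j) ∧ (∀ i, P' i = γ⁻¹ * P i)))
    ↔ QConnected q := by
  classical
  -- basic facts about the weights
  have hT : ∀ j, 0 < ∑ n, p n j * q n j := by
    intro j
    obtain ⟨i, hi⟩ := hqcol j
    exact Finset.sum_pos' (fun n _ => mul_nonneg (hp n j).le (hq0 n j))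
      ⟨i, mem_univ i, mul_pos (hp i j) hi⟩
  have hw0 : ∀ i j, 0 ≤ w i j := fun i j => by
    rw [hw]; exact div_nonneg (mul_nonneg (hp i j).le (hq0 i j)) (hT j).le
  have hwpos : ∀ i j, 0 < q i j → 0 < w i j := fun i j h => by
    rw [hw]; exact div_pos (mul_pos (hp i j) h) (hT j)
  have hwzero : ∀ i j, q i j = 0 → w i j = 0 := fun i j h => by
    rw [hw, h, mul_zero, zero_div]
  have hsumw : ∀ j, ∑ n, w n j = 1 := by
    intro j
    simp_rw [hw]
    rw [← Finset.sum_div, div_self (hT j).ne']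
  have hs : ∀ i, 0 < ∑ m, w i m := by
    intro i
    obtain ⟨j, hj⟩ := hqrow i
    exact Finset.sum_pos' (fun m _ => hw0 i m) ⟨j, mem_univ j, hwpos i j hj⟩
  have hws0 : ∀ i m, 0 ≤ wstar i m := fun i m => by
    rw [hwstar]; exact div_nonneg (hw0 i m) (hs i).le
  have hwspos : ∀ i m, 0 < q i m → 0 < wstar i m := fun i m h => by
    rw [hwstar]; exact div_pos (hwpos i m h) (hs i)
  have hwszero : ∀ i m, q i m = 0 → wstar i m = 0 := fun i m h => by
    rw [hwstar, hwzero i m h, zero_div]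
  have hsumws : ∀ i, ∑ m, wstar i m = 1 := by
    intro i
    simp_rw [hwstar]
    rw [← Finset.sum_div, div_self (hs i).ne']
  have hkey : ∀ i m, (∑ m', w i m') * wstar i m = w i m := by
    intro i m
    rw [hwstar, mul_comm, div_mul_cancel₀ _ (hs i).ne']
  -- logarithmic characterization of the Rao system
  have hRao_iff : ∀ (PPP : Fin M → ℝ) (P : Fin N → ℝ), (∀ j, 0 < PPP j) → (∀ i, 0 < P i) →
      (RaoSol p w wstar PPP P ↔
        ((∀ j, Real.log (PPP j) = ∑ n, w n j * Real.log (p n j / P n)) ∧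
         (∀ i, Real.log (P i) = ∑ m, wstar i m * Real.log (p i m / PPP m)))) := by
    intro PPP P hPPP hP
    unfold RaoSol
    exact and_congr
      (forall_congr' fun j => eq_prod_rpow_iff _ (hPPP j) _ (fun n => div_pos (hp n j) (hP n)) _)
      (forall_congr' fun i => eq_prod_rpow_iff _ (hP i) _ (fun m => div_pos (hp i m) (hPPP m)) _)
  constructor
  · -- uniqueness implies connectedness
    rintro ⟨⟨PPP, P, hPPP, hP, hsol⟩, huniq⟩
    intro J hJne hJuniv
    by_contra hcon
    push_neg at hcon
    -- S: commodities supported in J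
    set S : Fin N → Prop := fun i => ∃ j ∈ J, 0 < q i j with hS
    have hq_notS : ∀ i, ¬ S i → ∀ j ∈ J, q i j = 0 := by
      intro i hi j hj
      by_contra h
      exact hi ⟨j, hj, lt_of_le_of_ne (hq0 i j) (Ne.symm h)⟩
    have hq_S_out : ∀ i, S i → ∀ l, l ∉ J → q i l = 0 := by
      rintro i ⟨j, hjJ, hqij⟩ l hl
      exact le_antisymm (hcon j hjJ l hl i hqij) (hq0 i l)
    set PPP' : Fin M → ℝ := fun j => if j ∈ J then 2 * PPP j else PPP j with hPPP'def
    set P' : Fin N → ℝ := fun i => if S i then P i / 2 else P i with hP'def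
    have hPPP' : ∀ j, 0 < PPP' j := by
      intro j; rw [hPPP'def]; dsimp only
      split
      · exact mul_pos two_pos (hPPP j)
      · exact hPPP j
    have hP' : ∀ i, 0 < P' i := by
      intro i; rw [hP'def]; dsimp only
      split
      · exact div_pos (hP i) two_pos
      · exact hP i
    obtain ⟨h1, h2⟩ := (hRao_iff PPP P hPPP hP).mp hsol
    have hsol' : RaoSol p w wstar PPP' P' := by
      rw [hRao_iff PPP' P' hPPP' hP']
      constructor
      · intro j
        have hterm : ∀ n, Real.log (p n j / P' n) =
            Real.log (p n j / P n) + (if S n then Real.log 2 else 0) := by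
          intro n
          rw [hP'def]; dsimp only
          split
          · rw [Real.log_div (hp n j).ne' (div_pos (hP n) two_pos).ne',
              Real.log_div (hP n).ne' two_ne_zero,
              Real.log_div (hp n j).ne' (hP n).ne']
            ring
          · rw [add_zero]
        simp_rw [hterm, mul_add, Finset.sum_add_distrib, ← h1 j]
        have hc : (∑ n, w n j * (if S n then Real.log 2 else 0)) =
            if j ∈ J then Real.log 2 else 0 := by
          split
          · next hjJ =>
            have : ∀ n, w n j * (if S n then Real.log 2 else 0) = w n j * Real.log 2 := by
              intro n
              split
              · rfl
              · next hn => rw [hwzero n j (hq_notS n hn j hjJ), zero_mul, zero_mul]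
            simp_rw [this, ← Finset.sum_mul, hsumw j, one_mul]
          · next hjJ =>
            refine Finset.sum_eq_zero (fun n _ => ?_)
            split
            · next hn => rw [hwzero n j (hq_S_out n hn j hjJ), zero_mul]
            · rw [mul_zero]
        rw [hc, hPPP'def]; dsimp only
        split
        · next hjJ => rw [Real.log_mul two_ne_zero (hPPP j).ne']; ring
        · rw [add_zero]
      · intro i
        have hterm : ∀ m, Real.log (p i m / PPP' m) =
            Real.log (p i m / PPP m) - (if m ∈ J then Real.log 2 else 0) := by
          intro m
          rw [hPPP'def]; dsimp only
          split
          · rw [Real.log_div (hp i m).ne' (mul_pos two_pos (hPPP m)).ne',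
              Real.log_mul two_ne_zero (hPPP m).ne',
              Real.log_div (hp i m).ne' (hPPP m).ne']
            ring
          · rw [sub_zero]
        simp_rw [hterm, mul_sub, Finset.sum_sub_distrib, ← h2 i]
        have hd : (∑ m, wstar i m * (if m ∈ J then Real.log 2 else 0)) =
            if S i then Real.log 2 else 0 := by
          split
          · next hi =>
            have : ∀ m, wstar i m * (if m ∈ J then Real.log 2 else 0) =
                wstar i m * Real.log 2 := by
              intro m
              split
              · rfl
              · next hm => rw [hwszero i m (hq_S_out i hi m hm), zero_mul, zero_mul]
            simp_rw [this, ← Finset.sum_mul, hsumws i, one_mul]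
          · next hi =>
            refine Finset.sum_eq_zero (fun m _ => ?_)
            split
            · next hm => rw [hwszero i m (hq_notS i hi m hm), zero_mul]
            · rw [mul_zero]
        rw [hd, hP'def]; dsimp only
        split
        · next hi => rw [Real.log_div (hP i).ne' two_ne_zero]
        · rw [sub_zero]
    obtain ⟨γ, hγ, hγ1, -⟩ := huniq PPP PPP' P P' hPPP hP hsol hPPP' hP' hsol'
    obtain ⟨j1, hj1⟩ := hJne
    obtain ⟨j2, hj2⟩ : ∃ j, j ∉ J := by
      by_contra h
      push_neg at h
      exact hJuniv (Finset.eq_univ_iff_forall.mpr h)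
    have e1 : γ = 2 := by
      have := hγ1 j1
      rw [hPPP'def] at this; dsimp only at this
      rw [if_pos hj1] at this
      exact mul_right_cancel₀ (hPPP j1).ne' this.symm
    have e2 : γ = 1 := by
      have := hγ1 j2
      rw [hPPP'def] at this; dsimp only at this
      rw [if_neg hj2] at this
      have : γ * PPP j2 = 1 * PPP j2 := by rw [one_mul]; exact this.symm
      exact mul_right_cancel₀ (hPPP j2).ne' this
    rw [e1] at e2; norm_num at e2
  · -- connectedness implies existence and uniqueness
    intro hQC
    set A : Fin M → Fin M → ℝ := fun j m => ∑ n, w n j * wstar n m with hA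
    have hA0 : ∀ j m, 0 ≤ A j m := fun j m =>
      Finset.sum_nonneg fun n _ => mul_nonneg (hw0 n j) (hws0 n m)
    have hArow : ∀ j, ∑ m, A j m = 1 := by
      intro j
      rw [hA]; dsimp only
      rw [Finset.sum_comm]
      simp_rw [← Finset.mul_sum, hsumws, mul_one]
      exact hsumw j
    have hAcol : ∀ m, ∑ j, A j m = 1 := by
      intro m
      rw [hA]; dsimp only
      rw [Finset.sum_comm]
      simp_rw [← Finset.sum_mul, hkey]
      exact hsumw m
    have hAconn : ∀ J : Finset (Fin M), J.Nonempty → J ≠ Finset.univ →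
        ∃ j ∈ J, ∃ m, m ∉ J ∧ 0 < A j m := by
      intro J hne huniv
      obtain ⟨j, hjJ, l, hlJ, k, hkj, hkl⟩ := hQC J hne huniv
      refine ⟨j, hjJ, l, hlJ, ?_⟩
      exact Finset.sum_pos' (fun n _ => mul_nonneg (hw0 n j) (hws0 n l))
        ⟨k, mem_univ k, mul_pos (hwpos k j hkj) (hwspos k l hkl)⟩
    -- the fixed-point operator
    set L : (Fin M → ℝ) →ₗ[ℝ] (Fin M → ℝ) :=
      { toFun := fun x => fun j => x j - ∑ m, A j m * x m
        map_add' := by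
          intro x y
          funext j
          simp only [Pi.add_apply]
          simp_rw [mul_add, Finset.sum_add_distrib]
          ring
        map_smul' := by
          intro c x
          funext j
          simp only [Pi.smul_apply, smul_eq_mul, RingHom.id_apply]
          have : ∑ m, A j m * (c * x m) = c * ∑ m, A j m * x m := by
            rw [Finset.mul_sum]
            exact Finset.sum_congr rfl (fun m _ => by ring)
          rw [this]
          ring } with hL
    have hLapply : ∀ x j, L x j = x j - ∑ m, A j m * x m := fun x j => rfl
    have hone_ne : (fun _ : Fin M => (1:ℝ)) ≠ 0 := by
      intro h
      have := congrFun h ⟨0, hM⟩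
      norm_num at this
    have hker : LinearMap.ker L = Submodule.span ℝ {(fun _ : Fin M => (1:ℝ))} := by
      apply le_antisymm
      · intro x hx
        have hx0 := LinearMap.mem_ker.mp hx
        have hx' : ∀ j, x j = ∑ m, A j m * x m := by
          intro j
          have := congrFun hx0 j
          rw [hLapply] at this
          simp only [Pi.zero_apply] at this
          linarith [this]
        have hconst := maxPrinciple A hA0 hArow hAconn x hx'
        have hxeq : x = (x ⟨0, hM⟩) • (fun _ : Fin M => (1:ℝ)) := by
          funext j
          simp [hconst j ⟨0, hM⟩]
        rw [hxeq]
        exact Submodule.smul_mem _ _ (Submodule.mem_span_singleton_self _)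
      · rw [Submodule.span_le, Set.singleton_subset_iff]
        refine LinearMap.mem_ker.mpr (funext fun j => ?_)
        rw [hLapply]
        simp [hArow j]
    have hkerrank : Module.finrank ℝ (LinearMap.ker L) = 1 := by
      rw [hker, finrank_span_singleton hone_ne]
    set φ : (Fin M → ℝ) →ₗ[ℝ] ℝ :=
      { toFun := fun v => ∑ j, v j
        map_add' := by intro x y; simp [Finset.sum_add_distrib]
        map_smul' := by intro c x; simp [Finset.mul_sum] } with hφ
    have hφapply : ∀ v, φ v = ∑ j, v j := fun v => rfl
    have hφsurj : LinearMap.range φ = ⊤ := by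
      rw [LinearMap.range_eq_top]
      intro r
      refine ⟨Pi.single ⟨0, hM⟩ r, ?_⟩
      rw [hφapply]
      simp
    have hdim : Module.finrank ℝ (Fin M → ℝ) = M := by
      simp [Module.finrank_pi]
    have hrank1 : Module.finrank ℝ (LinearMap.range L) + 1 = M := by
      have := LinearMap.finrank_range_add_finrank_ker L
      rw [hkerrank, hdim] at this
      exact this
    have hrank2 : 1 + Module.finrank ℝ (LinearMap.ker φ) = M := by
      have := LinearMap.finrank_range_add_finrank_ker φ
      rw [hφsurj, hdim] at this
      simpa using this
    have hrangesub : LinearMap.range L ≤ LinearMap.ker φ := by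
      rintro v ⟨x, rfl⟩
      refine LinearMap.mem_ker.mpr ?_
      rw [hφapply]
      simp_rw [hLapply]
      rw [Finset.sum_sub_distrib, Finset.sum_comm]
      simp_rw [← Finset.sum_mul, hAcol, one_mul]
      exact sub_self _
    have hrange : LinearMap.range L = LinearMap.ker φ := by
      apply Submodule.eq_of_le_of_finrank_le hrangesub
      omega
    -- data for the existence part
    set a : Fin N → Fin M → ℝ := fun i j => Real.log (p i j) with ha
    set d : Fin N → ℝ := fun i => ∑ m, wstar i m * a i m with hd
    set e : Fin M → ℝ := fun j => ∑ n, w n j * (a n j - d n) with he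
    have hesum : e ∈ LinearMap.ker φ := by
      refine LinearMap.mem_ker.mpr ?_
      rw [hφapply, he]
      dsimp only
      simp_rw [mul_sub, Finset.sum_sub_distrib]
      rw [Finset.sum_comm]
      rw [show (∑ j, ∑ n, w n j * d n) = ∑ n, ∑ m, w n m * a n m by
        rw [Finset.sum_comm]
        refine Finset.sum_congr rfl (fun n _ => ?_)
        rw [← Finset.sum_mul, hd]
        dsimp only
        rw [Finset.mul_sum]
        refine Finset.sum_congr rfl (fun m _ => ?_)
        rw [← mul_assoc, hkey]]
      exact sub_self _
    obtain ⟨x, hx⟩ := hrange ▸ hesum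
    have hx' : ∀ j, x j - ∑ m, A j m * x m = e j := by
      intro j
      have := congrFun hx j
      rw [hLapply] at this
      exact this
    constructor
    · -- existence
      set y : Fin N → ℝ := fun i => d i - ∑ m, wstar i m * x m with hy
      refine ⟨fun j => Real.exp (x j), fun i => Real.exp (y i),
        fun j => Real.exp_pos _, fun i => Real.exp_pos _, ?_⟩
      rw [hRao_iff _ _ (fun j => Real.exp_pos _) (fun i => Real.exp_pos _)]
      have hlog1 : ∀ n (z : ℝ) j, Real.log (p n j / Real.exp z) = a n j - z := by
        intro n z j
        rw [Real.log_div (hp n j).ne' (Real.exp_ne_zero z), Real.log_exp, ha]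
      constructor
      · intro j
        rw [Real.log_exp]
        simp_rw [hlog1]
        have : ∀ n, w n j * (a n j - y n) =
            w n j * (a n j - d n) + w n j * (∑ m, wstar n m * x m) := by
          intro n; rw [hy]; ring
        simp_rw [this, Finset.sum_add_distrib]
        rw [show (∑ n, w n j * ∑ m, wstar n m * x m) = ∑ m, A j m * x m by
          simp_rw [Finset.mul_sum]
          rw [Finset.sum_comm]
          refine Finset.sum_congr rfl (fun m _ => ?_)
          rw [hA]
          dsimp only
          rw [Finset.sum_mul]
          exact Finset.sum_congr rfl (fun n _ => by ring)]
        have he2 : e j = ∑ n, w n j * (a n j - d n) := rfl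
        have := hx' j
        linarith [this, he2]
      · intro i
        rw [Real.log_exp]
        simp_rw [hlog1]
        rw [hy]
        dsimp only
        rw [hd]
        dsimp only
        simp_rw [mul_sub, Finset.sum_sub_distrib]
    · -- uniqueness
      intro PPP PPP' P P' hPPP hP hsol hPPP' hP' hsol'
      obtain ⟨h1, h2⟩ := (hRao_iff PPP P hPPP hP).mp hsol
      obtain ⟨h1', h2'⟩ := (hRao_iff PPP' P' hPPP' hP').mp hsol'
      set u : Fin M → ℝ := fun j => Real.log (PPP' j) - Real.log (PPP j) with hu
      set v : Fin N → ℝ := fun i => Real.log (P' i) - Real.log (P i) with hv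
      have hvf : ∀ i, v i = -∑ m, wstar i m * u m := by
        intro i
        rw [hv]
        dsimp only
        rw [h2 i, h2' i]
        rw [← Finset.sum_sub_distrib, ← Finset.sum_neg_distrib]
        refine Finset.sum_congr rfl (fun m _ => ?_)
        rw [Real.log_div (hp i m).ne' (hPPP' m).ne', Real.log_div (hp i m).ne' (hPPP m).ne',
          hu]
        ring
      have huf : ∀ j, u j = -∑ n, w n j * v n := by
        intro j
        rw [hu]
        dsimp only
        rw [h1 j, h1' j]
        rw [← Finset.sum_sub_distrib, ← Finset.sum_neg_distrib]
        refine Finset.sum_congr rfl (fun n _ => ?_)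
        rw [Real.log_div (hp n j).ne' (hP' n).ne', Real.log_div (hp n j).ne' (hP n).ne',
          hv]
        ring
      have hufix : ∀ j, u j = ∑ m, A j m * u m := by
        intro j
        rw [huf j]
        have hrw : ∀ n, w n j * v n = -(w n j * ∑ m, wstar n m * u m) := fun n => by
          rw [hvf n]; ring
        simp_rw [hrw, Finset.sum_neg_distrib, neg_neg]
        rw [show (∑ n, w n j * ∑ m, wstar n m * u m) = ∑ m, A j m * u m by
          simp_rw [Finset.mul_sum]
          rw [Finset.sum_comm]
          refine Finset.sum_congr rfl (fun m _ => ?_)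
          rw [hA]
          dsimp only
          rw [Finset.sum_mul]
          exact Finset.sum_congr rfl (fun n _ => by ring)]
      have hconst := maxPrinciple A hA0 hArow hAconn u hufix
      set t : ℝ := u ⟨0, hM⟩ with ht
      have hut : ∀ j, u j = t := fun j => hconst j ⟨0, hM⟩
      have hvt : ∀ i, v i = -t := by
        intro i
        rw [hvf i]
        simp_rw [hut]
        rw [← Finset.sum_mul, hsumws i, one_mul]
      refine ⟨Real.exp t, Real.exp_pos t, fun j => ?_, fun i => ?_⟩
      · have : Real.log (PPP' j) = t + Real.log (PPP j) := by
          have := hut j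
          rw [hu] at this
          dsimp only at this
          linarith [this]
        calc PPP' j = Real.exp (Real.log (PPP' j)) := (Real.exp_log (hPPP' j)).symm
          _ = Real.exp t * Real.exp (Real.log (PPP j)) := by rw [this, Real.exp_add]
          _ = Real.exp t * PPP j := by rw [Real.exp_log (hPPP j)]
      · have : Real.log (P' i) = -t + Real.log (P i) := by
          have := hvt i
          rw [hv] at this
          dsimp only at this
          linarith [this]
        calc P' i = Real.exp (Real.log (P' i)) := (Real.exp_log (hP' i)).symm
          _ = Real.exp (-t) * Real.exp (Real.log (P i)) := by rw [this, Real.exp_add]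
          _ = (Real.exp t)⁻¹ * P i := by rw [Real.exp_log (hP i), Real.exp_neg]
end
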